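/- arXiv:1309.0286 — 10 statements merged into one kernel-verified Lean document; each statement's English description precedes it below -/
import Mathlib

section
/- The monomials z^i y^j x^k with 0 ≤ i, j, k ≤ p−1 form a basis of A as a k-vector space; in particular, dim_k A = p^3. -/
noncomputable section

open scoped TensorProduct

/-- `f(t) = Σ_{i=1}^{p-1} (-1)^{i-1} (p-i)⁻¹ t^i`, where `(p-i)⁻¹` is the inverse in `k`
of the image of the integer `p - i`. -/
def fpol (p : ℕ) (k : Type) [Field k] {R : Type} [Ring R] [Algebra k R] (t : R) : R :=
  ∑ i ∈ Finset.Icc 1 (p - 1), ((-1 : k) ^ (i - 1) * (((p - i : ℕ) : k)⁻¹)) • t ^ i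

/-- The generators of the free algebra on three variables. -/
def Xf (k : Type) [Field k] : FreeAlgebra k (Fin 3) := FreeAlgebra.ι k 0
def Yf (k : Type) [Field k] : FreeAlgebra k (Fin 3) := FreeAlgebra.ι k 1
def Zf (k : Type) [Field k] : FreeAlgebra k (Fin 3) := FreeAlgebra.ι k 2

/-- The relations of the algebra `A`: each listed element is identified with `0`, so that
`RingQuot` of this relation is the quotient of the free algebra by the two-sided ideal
generated by the listed elements. -/
def relA (p : ℕ) (k : Type) [Field k] :
    FreeAlgebra k (Fin 3) → FreeAlgebra k (Fin 3) → Prop := fun a b =>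
  b = 0 ∧
    (a = Xf k * Yf k - Yf k * Xf k - Yf k ∨
     a = Xf k * Zf k - Zf k * Xf k ∨
     a = Yf k * Zf k - Zf k * Yf k - Yf k * fpol p k (Xf k) ∨
     a = Xf k ^ p - Xf k ∨
     a = Yf k ^ p ∨
     a = Zf k ^ p - Zf k)

/-- The algebra `A = k⟨x,y,z⟩/(xy−yx−y, xz−zx, yz−zy−y·f(x), x^p−x, y^p, z^p−z)`. -/
abbrev AlgA (p : ℕ) (k : Type) [Field k] := RingQuot (relA p k)

/-- The image of `x` in `A`. -/
def XA (p : ℕ) (k : Type) [Field k] : AlgA p k := RingQuot.mkAlgHom k (relA p k) (Xf k)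
/-- The image of `y` in `A`. -/
def YA (p : ℕ) (k : Type) [Field k] : AlgA p k := RingQuot.mkAlgHom k (relA p k) (Yf k)
/-- The image of `z` in `A`. -/
def ZA (p : ℕ) (k : Type) [Field k] : AlgA p k := RingQuot.mkAlgHom k (relA p k) (Zf k)

namespace MB

variable (p : ℕ) (k : Type) [Field k]

lemma mk_zero (a : FreeAlgebra k (Fin 3)) (h : relA p k a 0) :
    RingQuot.mkAlgHom k (relA p k) a = 0 := by
  have h2 := RingQuot.mkAlgHom_rel k h
  rwa [map_zero] at h2

lemma map_fpol {R S : Type} [Ring R] [Algebra k R] [Ring S] [Algebra k S]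
    (g : R →ₐ[k] S) (t : R) : g (fpol p k t) = fpol p k (g t) := by
  simp [fpol, map_sum, map_pow]

lemma R1 : XA p k * YA p k = YA p k * XA p k + YA p k := by
  have h := mk_zero p k _ ⟨rfl, Or.inl rfl⟩
  rw [map_sub, map_sub, map_mul, map_mul, sub_sub, sub_eq_zero] at h
  exact h

lemma R2 : XA p k * ZA p k = ZA p k * XA p k := by
  have h := mk_zero p k _ ⟨rfl, Or.inr (Or.inl rfl)⟩
  rw [map_sub, map_mul, map_mul, sub_eq_zero] at h
  exact h

lemma R3 : YA p k * ZA p k = ZA p k * YA p k + YA p k * fpol p k (XA p k) := by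
  have h := mk_zero p k _ ⟨rfl, Or.inr (Or.inr (Or.inl rfl))⟩
  rw [map_sub, map_sub, map_mul, map_mul, map_mul, map_fpol, sub_sub, sub_eq_zero] at h
  exact h

lemma R4 : XA p k ^ p = XA p k := by
  have h := mk_zero p k _ ⟨rfl, Or.inr (Or.inr (Or.inr (Or.inl rfl)))⟩
  rw [map_sub, map_pow, sub_eq_zero] at h
  exact h

lemma R5 : YA p k ^ p = 0 := by
  have h := mk_zero p k _ ⟨rfl, Or.inr (Or.inr (Or.inr (Or.inr (Or.inl rfl))))⟩
  rw [map_pow] at h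
  exact h

lemma R6 : ZA p k ^ p = ZA p k := by
  have h := mk_zero p k _ ⟨rfl, Or.inr (Or.inr (Or.inr (Or.inr (Or.inr rfl))))⟩
  rw [map_sub, map_pow, sub_eq_zero] at h
  exact h

end MB

namespace MB

variable (p : ℕ) (k : Type) [Field k]

lemma E1 (b : ℕ) : XA p k * YA p k ^ b = YA p k ^ b * (XA p k + (b : k) • 1) := by
  induction b with
  | zero => simp
  | succ b ih =>
    have key : (XA p k + (b : k) • 1) * YA p k = YA p k * (XA p k + ((b:ℕ)+1 : k) • 1) := by
      rw [add_mul, mul_add, smul_mul_assoc, one_mul, mul_smul_comm, mul_one, R1, add_smul,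
        one_smul]
      abel
    rw [pow_succ, ← mul_assoc, ih, mul_assoc, key, ← mul_assoc, ← pow_succ]
    push_cast
    ring_nf

lemma E2 (i b : ℕ) : XA p k ^ i * YA p k ^ b = YA p k ^ b * (XA p k + (b : k) • 1) ^ i := by
  induction i with
  | zero => simp
  | succ i ih =>
    rw [pow_succ', mul_assoc, ih, ← mul_assoc, E1, mul_assoc, ← pow_succ']

lemma E2f (b : ℕ) :
    fpol p k (XA p k) * YA p k ^ b = YA p k ^ b * fpol p k (XA p k + (b : k) • 1) := by
  unfold fpol
  rw [Finset.sum_mul, Finset.mul_sum]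
  refine Finset.sum_congr rfl fun i _ => ?_
  rw [smul_mul_assoc, E2, mul_smul_comm]

/-- span of powers of `x` -/
def Pspan : Submodule k (AlgA p k) := Submodule.span k (Set.range fun j : ℕ => XA p k ^ j)

lemma mulmem {u : AlgA p k} {g : ℕ → AlgA p k} {w : AlgA p k}
    (hw : w ∈ Submodule.span k (Set.range g)) :
    u * w ∈ Submodule.span k (Set.range fun j => u * g j) := by
  induction hw using Submodule.span_induction with
  | mem x hx => obtain ⟨j, rfl⟩ := hx; exact Submodule.subset_span ⟨j, rfl⟩
  | zero => simp
  | add x y _ _ hx hy => rw [mul_add]; exact add_mem hx hy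
  | smul c x _ hx => rw [mul_smul_comm]; exact Submodule.smul_mem _ _ hx

lemma mulmemr {v : AlgA p k} {g : ℕ → AlgA p k} {w : AlgA p k}
    (hw : w ∈ Submodule.span k (Set.range g)) :
    w * v ∈ Submodule.span k (Set.range fun j => g j * v) := by
  induction hw using Submodule.span_induction with
  | mem x hx => obtain ⟨j, rfl⟩ := hx; exact Submodule.subset_span ⟨j, rfl⟩
  | zero => simp
  | add x y _ _ hx hy => rw [add_mul]; exact add_mem hx hy
  | smul c x _ hx => rw [smul_mul_assoc]; exact Submodule.smul_mem _ _ hx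

lemma Pspan_mul_left (β : k) {w : AlgA p k} (hw : w ∈ Pspan p k) :
    (XA p k + β • 1) * w ∈ Pspan p k := by
  induction hw using Submodule.span_induction with
  | mem w hw =>
    obtain ⟨j, rfl⟩ := hw
    rw [add_mul, smul_mul_assoc, one_mul]
    exact add_mem (Submodule.subset_span ⟨j+1, pow_succ' _ _⟩)
      (Submodule.smul_mem _ _ (Submodule.subset_span ⟨j, rfl⟩))
  | zero => simp
  | add x y _ _ hx hy => rw [mul_add]; exact add_mem hx hy
  | smul c x _ hx => rw [mul_smul_comm]; exact Submodule.smul_mem _ _ hx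

lemma E3 (β : k) (n : ℕ) : (XA p k + β • 1) ^ n ∈ Pspan p k := by
  induction n with
  | zero => exact Submodule.subset_span ⟨0, by simp⟩
  | succ n ih => rw [pow_succ']; exact Pspan_mul_left p k β ih

lemma E4 (β : k) : fpol p k (XA p k + β • 1) ∈ Pspan p k := by
  unfold fpol
  exact Submodule.sum_mem _ fun i _ => Submodule.smul_mem _ _ (E3 p k β i)

/-- span of `y^b x^j` -/
def QSpan (b : ℕ) : Submodule k (AlgA p k) :=
  Submodule.span k (Set.range fun j : ℕ => YA p k ^ b * XA p k ^ j)

lemma E5 (b : ℕ) : YA p k ^ b * ZA p k - ZA p k * YA p k ^ b ∈ QSpan p k b := by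
  induction b with
  | zero => simp
  | succ b ih =>
    have h1 : YA p k * ZA p k * YA p k ^ b
        = ZA p k * YA p k ^ (b+1) + YA p k ^ (b+1) * fpol p k (XA p k + (b : k) • 1) := by
      rw [R3, add_mul, mul_assoc (YA p k) (fpol p k (XA p k)) (YA p k ^ b), E2f,
        ← mul_assoc, ← pow_succ', mul_assoc, ← pow_succ']
    have key : YA p k ^ (b+1) * ZA p k - ZA p k * YA p k ^ (b+1)
        = YA p k ^ (b+1) * fpol p k (XA p k + (b : k) • 1)
          + YA p k * (YA p k ^ b * ZA p k - ZA p k * YA p k ^ b) := by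
      rw [mul_sub, ← mul_assoc, ← pow_succ', ← mul_assoc, h1]
      abel
    rw [key]
    refine add_mem ?_ ?_
    · have h2 := mulmem p k (u := YA p k ^ (b+1)) (E4 p k (b : k))
      exact h2
    · have ih' : YA p k ^ b * ZA p k - ZA p k * YA p k ^ b
          ∈ Submodule.span k (Set.range fun j : ℕ => YA p k ^ b * XA p k ^ j) := ih
      have h2 := mulmem p k (u := YA p k) ih'
      have h3 : (fun j : ℕ => YA p k * (YA p k ^ b * XA p k ^ j))
          = fun j : ℕ => YA p k ^ (b+1) * XA p k ^ j := by
        funext j; rw [← mul_assoc, ← pow_succ']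
      rw [h3] at h2
      exact h2

/-- generators of the spanning submodule -/
def Sgen : Set (AlgA p k) := {w | ∃ a b c : ℕ, w = ZA p k ^ a * YA p k ^ b * XA p k ^ c}

def SS : Submodule k (AlgA p k) := Submodule.span k (Sgen p k)

lemma gen_mem (a b c : ℕ) : ZA p k ^ a * YA p k ^ b * XA p k ^ c ∈ SS p k :=
  Submodule.subset_span ⟨a, b, c, rfl⟩

lemma Hmul (a b : ℕ) {w : AlgA p k} (hw : w ∈ Pspan p k) :
    ZA p k ^ a * YA p k ^ b * w ∈ SS p k := by
  have hw' : w ∈ Submodule.span k (Set.range fun j : ℕ => XA p k ^ j) := hw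
  have h2 := mulmem p k (u := ZA p k ^ a * YA p k ^ b) hw'
  refine Submodule.span_le.mpr ?_ h2
  rintro _ ⟨j, rfl⟩
  exact Submodule.subset_span ⟨a, b, j, rfl⟩

lemma Cx {s : AlgA p k} (hs : s ∈ SS p k) : s * XA p k ∈ SS p k := by
  induction hs using Submodule.span_induction with
  | mem w hw =>
    obtain ⟨a, b, c, rfl⟩ := hw
    rw [mul_assoc, ← pow_succ]
    exact gen_mem p k a b (c+1)
  | zero => simp
  | add x y _ _ hx hy => rw [add_mul]; exact add_mem hx hy
  | smul c x _ hx => rw [smul_mul_assoc]; exact Submodule.smul_mem _ _ hx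

lemma Cy {s : AlgA p k} (hs : s ∈ SS p k) : s * YA p k ∈ SS p k := by
  induction hs using Submodule.span_induction with
  | mem w hw =>
    obtain ⟨a, b, c, rfl⟩ := hw
    have h1 := E2 p k c 1
    simp only [pow_one] at h1
    rw [mul_assoc, h1, ← mul_assoc, mul_assoc (ZA p k ^ a), ← pow_succ]
    exact Hmul p k a (b+1) (E3 p k ((1:ℕ) : k) c)
  | zero => simp
  | add x y _ _ hx hy => rw [add_mul]; exact add_mem hx hy
  | smul c x _ hx => rw [smul_mul_assoc]; exact Submodule.smul_mem _ _ hx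

lemma Cz {s : AlgA p k} (hs : s ∈ SS p k) : s * ZA p k ∈ SS p k := by
  induction hs using Submodule.span_induction with
  | mem w hw =>
    obtain ⟨a, b, c, rfl⟩ := hw
    have hxz : XA p k ^ c * ZA p k = ZA p k * XA p k ^ c := (Commute.pow_left (R2 p k) c).eq
    have e1 : ZA p k ^ a * YA p k ^ b * XA p k ^ c * ZA p k
        = ZA p k ^ a * (YA p k ^ b * ZA p k) * XA p k ^ c := by
      rw [mul_assoc, hxz, ← mul_assoc, mul_assoc (ZA p k ^ a)]
    have e2 : ZA p k ^ a * (YA p k ^ b * ZA p k) * XA p k ^ c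
        = (ZA p k ^ a * ZA p k) * YA p k ^ b * XA p k ^ c
          + ZA p k ^ a * (YA p k ^ b * ZA p k - ZA p k * YA p k ^ b) * XA p k ^ c := by
      rw [mul_sub, sub_mul, mul_assoc (ZA p k ^ a) (ZA p k) (YA p k ^ b)]
      abel
    rw [e1, e2, ← pow_succ]
    refine add_mem (gen_mem p k (a+1) b c) ?_
    have hΔ : YA p k ^ b * ZA p k - ZA p k * YA p k ^ b
        ∈ Submodule.span k (Set.range fun j : ℕ => YA p k ^ b * XA p k ^ j) := E5 p k b
    have h2 := mulmem p k (u := ZA p k ^ a) hΔ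
    have h3 := mulmemr p k (v := XA p k ^ c) h2
    refine Submodule.span_le.mpr ?_ h3
    rintro _ ⟨j, rfl⟩
    have e3 : ZA p k ^ a * (YA p k ^ b * XA p k ^ j) * XA p k ^ c
        = ZA p k ^ a * YA p k ^ b * XA p k ^ (j + c) := by
      rw [pow_add]; noncomm_ring
    show ZA p k ^ a * (YA p k ^ b * XA p k ^ j) * XA p k ^ c ∈ (SS p k : Set (AlgA p k))
    rw [e3]
    exact Submodule.subset_span ⟨a, b, j + c, rfl⟩
  | zero => simp
  | add x y _ _ hx hy => rw [add_mul]; exact add_mem hx hy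
  | smul c x _ hx => rw [smul_mul_assoc]; exact Submodule.smul_mem _ _ hx

lemma adjoin_top : Algebra.adjoin k ({XA p k, YA p k, ZA p k} : Set (AlgA p k)) = ⊤ := by
  have hsurj := RingQuot.mkAlgHom_surjective k (relA p k)
  have h1 : (Algebra.adjoin k (Set.range (FreeAlgebra.ι k : Fin 3 → FreeAlgebra k (Fin 3)))).map
      (RingQuot.mkAlgHom k (relA p k)) = ⊤ := by
    rw [FreeAlgebra.adjoin_range_ι, Algebra.map_top]
    exact (AlgHom.range_eq_top _).mpr hsurj
  rw [AlgHom.map_adjoin] at h1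
  rw [eq_top_iff, ← h1]
  apply Algebra.adjoin_mono
  rintro _ ⟨_, ⟨i, rfl⟩, rfl⟩
  fin_cases i
  · exact Set.mem_insert_iff.mpr (Or.inl rfl)
  · exact Set.mem_insert_iff.mpr (Or.inr (Set.mem_insert_iff.mpr (Or.inl rfl)))
  · exact Set.mem_insert_iff.mpr (Or.inr (Set.mem_insert_iff.mpr (Or.inr rfl)))

lemma SS_top : SS p k = ⊤ := by
  rw [eq_top_iff]
  rintro w -
  have hw : w ∈ Algebra.adjoin k ({XA p k, YA p k, ZA p k} : Set (AlgA p k)) := by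
    rw [adjoin_top]; trivial
  have key : ∀ s ∈ SS p k, s * w ∈ SS p k := by
    induction hw using Algebra.adjoin_induction with
    | mem g hg =>
      rcases hg with rfl | rfl | rfl
      · exact fun s hs => Cx p k hs
      · exact fun s hs => Cy p k hs
      · exact fun s hs => Cz p k hs
    | algebraMap r =>
      intro s hs
      rw [Algebra.algebraMap_eq_smul_one, mul_smul_comm, mul_one]
      exact Submodule.smul_mem _ _ hs
    | add x y _ _ hx hy => intro s hs; rw [mul_add]; exact add_mem (hx s hs) (hy s hs)
    | mul x y _ _ hx hy => intro s hs; rw [← mul_assoc]; exact hy _ (hx s hs)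
  have h1 : (1 : AlgA p k) ∈ SS p k := by
    have := gen_mem p k 0 0 0
    simpa using this
  simpa using key 1 h1

lemma pow_red (hp : 2 ≤ p) {x : AlgA p k} (hx : x ^ p = x) :
    ∀ c : ℕ, ∃ c' : Fin p, x ^ c = x ^ (c' : ℕ) := by
  intro c
  induction c using Nat.strong_induction_on with
  | _ c ih =>
    by_cases h : c < p
    · exact ⟨⟨c, h⟩, rfl⟩
    · push_neg at h
      have step : x ^ c = x ^ (c - p + 1) := by
        conv_lhs => rw [show c = (c - p) + p by omega]
        rw [pow_add, hx, ← pow_succ]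
      obtain ⟨c', hc'⟩ := ih (c - p + 1) (by omega)
      exact ⟨c', by rw [step, hc']⟩

lemma span_top (hp : 2 ≤ p) :
    ⊤ ≤ Submodule.span k (Set.range (fun q : Fin p × Fin p × Fin p =>
      ZA p k ^ (q.1 : ℕ) * YA p k ^ (q.2.1 : ℕ) * XA p k ^ (q.2.2 : ℕ))) := by
  rw [← SS_top p k, SS]
  refine Submodule.span_le.mpr ?_
  rintro _ ⟨a, b, c, rfl⟩
  by_cases hb : b < p
  · obtain ⟨a', ha'⟩ := pow_red p k hp (R6 p k) a
    obtain ⟨c', hc'⟩ := pow_red p k hp (R4 p k) c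
    rw [ha', hc']
    exact Submodule.subset_span ⟨(a', ⟨b, hb⟩, c'), rfl⟩
  · push_neg at hb
    have : YA p k ^ b = 0 := by
      rw [show b = (b - p) + p by omega, pow_add, R5 p k, mul_zero]
    rw [this, mul_zero, zero_mul]
    exact Submodule.zero_mem _

end MB

namespace MB

set_option linter.unusedSectionVars false

variable (p : ℕ) (k : Type) [Field k] [CharP k p] [Fact p.Prime] [NeZero p]

/-- cast from `ZMod p` to `k` -/
def ph : ZMod p →+* k := ZMod.castHom (dvd_refl p) k

abbrev VV := (ZMod p × ZMod p × Fin p) → k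

/-- diagonal operator -/
def diag (g : ZMod p × ZMod p × Fin p → k) : Module.End k (VV p k) where
  toFun v := fun q => g q * v q
  map_add' u v := by funext q; simp [mul_add]
  map_smul' c v := by funext q; simp only [Pi.smul_apply, smul_eq_mul, RingHom.id_apply]; ring

@[simp] lemma diag_apply (g : ZMod p × ZMod p × Fin p → k) (v : VV p k) (q) :
    diag p k g v q = g q * v q := rfl

lemma diag_mul (g h : ZMod p × ZMod p × Fin p → k) :
    diag p k g * diag p k h = diag p k (fun q => g q * h q) := by
  apply LinearMap.ext; intro v; funext q
  simp only [Module.End.mul_apply, diag_apply]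
  ring

lemma diag_one : diag p k (fun _ => 1) = 1 := by
  apply LinearMap.ext; intro v; funext q
  simp

lemma diag_pow (g : ZMod p × ZMod p × Fin p → k) (n : ℕ) :
    diag p k g ^ n = diag p k (fun q => g q ^ n) := by
  induction n with
  | zero => simp [diag_one]
  | succ n ih => rw [pow_succ, ih, diag_mul]; simp [pow_succ]

/-- partial sums of the `f`-values -/
def sval (j : ZMod p) (n : ℕ) : ZMod p := ∑ u ∈ Finset.range n, fpol p (ZMod p) (j + (u : ℕ))

def xfun : ZMod p × ZMod p × Fin p → k := fun q => ph p k (q.1 + ((q.2.2 : ℕ) : ZMod p))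

def dfun : ZMod p × ZMod p × Fin p → k := fun q => ph p k (q.2.1 - sval p q.1 (q.2.2 : ℕ))

def Xop : Module.End k (VV p k) := diag p k (xfun p k)
def Zop : Module.End k (VV p k) := diag p k (dfun p k)

def Yop : Module.End k (VV p k) where
  toFun v := fun q => if (q.2.2 : ℕ) = 0 then 0
    else v (q.1, q.2.1, ⟨(q.2.2 : ℕ) - 1, Nat.lt_of_le_of_lt (Nat.sub_le _ _) q.2.2.isLt⟩)
  map_add' u v := by funext q; dsimp only [Pi.add_apply]; split_ifs <;> simp
  map_smul' c v := by
    funext q; dsimp only [Pi.smul_apply, RingHom.id_apply]; split_ifs <;> simp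

lemma Yop_apply (v : VV p k) (q) : Yop p k v q = if (q.2.2 : ℕ) = 0 then 0
    else v (q.1, q.2.1, ⟨(q.2.2 : ℕ) - 1, Nat.lt_of_le_of_lt (Nat.sub_le _ _) q.2.2.isLt⟩) := rfl

lemma Yop_pow (n : ℕ) (v : VV p k) (q) : (Yop p k ^ n) v q =
    if h : n ≤ (q.2.2 : ℕ) then
      v (q.1, q.2.1, ⟨(q.2.2 : ℕ) - n, Nat.lt_of_le_of_lt (Nat.sub_le _ _) q.2.2.isLt⟩)
    else 0 := by
  induction n generalizing v q with
  | zero => simp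
  | succ n ih =>
    rw [pow_succ', Module.End.mul_apply, Yop_apply]
    by_cases h0 : (q.2.2 : ℕ) = 0
    · rw [if_pos h0]
      have hn : ¬(n + 1 ≤ (q.2.2 : ℕ)) := by omega
      rw [dif_neg hn]
    · rw [if_neg h0, ih]
      by_cases h1 : n ≤ (q.2.2 : ℕ) - 1
      · have hn : n + 1 ≤ (q.2.2 : ℕ) := by omega
        rw [dif_pos h1, dif_pos hn]
        have hval : ((q.2.2 : ℕ) - 1 - n) = (q.2.2 : ℕ) - (n + 1) := by omega
        simp only [hval]
      · have hn : ¬(n + 1 ≤ (q.2.2 : ℕ)) := by omega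
        rw [dif_neg h1, dif_neg hn]

lemma ph_fpol (ξ : ZMod p) : fpol p k (ph p k ξ) = ph p k (fpol p (ZMod p) ξ) := by
  unfold fpol
  rw [map_sum]
  refine Finset.sum_congr rfl fun i _ => ?_
  rw [smul_eq_mul, smul_eq_mul, map_mul, map_mul, map_pow, map_pow, map_neg, map_one,
    map_inv₀, map_natCast]

lemma fpol_diag (g : ZMod p × ZMod p × Fin p → k) :
    fpol p k (diag p k g) = diag p k (fun q => fpol p k (g q)) := by
  unfold fpol
  apply LinearMap.ext; intro v; funext q
  rw [LinearMap.coe_sum, Finset.sum_apply, Finset.sum_apply]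
  simp only [LinearMap.smul_apply, diag_pow, diag_apply, Pi.smul_apply, smul_eq_mul]
  rw [Finset.sum_mul]
  refine Finset.sum_congr rfl fun i _ => ?_
  ring

/-- operator relation 1 -/
lemma OR1 : Xop p k * Yop p k = Yop p k * Xop p k + Yop p k := by
  apply LinearMap.ext; intro v; funext q
  obtain ⟨j, t, m⟩ := q
  simp only [Module.End.mul_apply, LinearMap.add_apply, Pi.add_apply, Xop, diag_apply, Yop_apply]
  by_cases h0 : (m : ℕ) = 0
  · simp [h0]
  · simp only [if_neg h0]
    have hcast : ((m : ℕ) : ZMod p) = (((m : ℕ) - 1 : ℕ) : ZMod p) + 1 := by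
      conv_lhs => rw [show (m : ℕ) = ((m : ℕ) - 1) + 1 by omega]
      push_cast
      ring
    simp only [xfun, diag_apply]
    rw [hcast]
    simp only [map_add, map_one]
    ring

/-- operator relation 2 -/
lemma OR2 : Xop p k * Zop p k = Zop p k * Xop p k := by
  unfold Xop Zop
  rw [diag_mul, diag_mul]
  congr 1
  funext q
  ring

/-- operator relation 3 -/
lemma OR3 : Yop p k * Zop p k = Zop p k * Yop p k + Yop p k * fpol p k (Xop p k) := by
  apply LinearMap.ext; intro v; funext q
  obtain ⟨j, t, m⟩ := q
  rw [Xop, fpol_diag]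
  simp only [Module.End.mul_apply, LinearMap.add_apply, Pi.add_apply, Zop, diag_apply, Yop_apply]
  by_cases h0 : (m : ℕ) = 0
  · simp [h0]
  · simp only [if_neg h0]
    simp only [diag_apply, dfun, xfun]
    have hs : sval p j (m : ℕ) = sval p j ((m:ℕ) - 1)
        + fpol p (ZMod p) (j + ((((m:ℕ) - 1 : ℕ)) : ZMod p)) := by
      conv_lhs => rw [show ((m:ℕ)) = ((m:ℕ)-1)+1 by omega]
      rw [sval, sval, Finset.sum_range_succ]
    have key : ph p k (t - sval p j ((m:ℕ) - 1)) =
        ph p k (t - sval p j (m:ℕ)) + fpol p k (ph p k (j + (((m:ℕ) - 1 : ℕ) : ZMod p))) := by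
      rw [ph_fpol, ← map_add]
      congr 1
      rw [hs]
      ring
    rw [key]
    ring

/-- operator relation 4 -/
lemma OR4 : Xop p k ^ p = Xop p k := by
  unfold Xop
  rw [diag_pow]
  congr 1
  funext q
  rw [xfun, ← map_pow, ZMod.pow_card]

/-- operator relation 5 -/
lemma OR5 : Yop p k ^ p = 0 := by
  apply LinearMap.ext; intro v; funext q
  rw [Yop_pow, dif_neg (Nat.not_le.mpr q.2.2.isLt)]
  rfl

/-- operator relation 6 -/
lemma OR6 : Zop p k ^ p = Zop p k := by
  unfold Zop
  rw [diag_pow]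
  congr 1
  funext q
  rw [dfun, ← map_pow, ZMod.pow_card]

/-- the representation on the free algebra -/
def rho0 : FreeAlgebra k (Fin 3) →ₐ[k] Module.End k (VV p k) :=
  FreeAlgebra.lift k ![Xop p k, Yop p k, Zop p k]

lemma rho0X : rho0 p k (Xf k) = Xop p k := by
  rw [Xf, rho0, FreeAlgebra.lift_ι_apply]; rfl

lemma rho0Y : rho0 p k (Yf k) = Yop p k := by
  rw [Yf, rho0, FreeAlgebra.lift_ι_apply]; rfl

lemma rho0Z : rho0 p k (Zf k) = Zop p k := by
  rw [Zf, rho0, FreeAlgebra.lift_ι_apply]; rfl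

lemma rho0_compat : ∀ ⦃a b : FreeAlgebra k (Fin 3)⦄, relA p k a b → rho0 p k a = rho0 p k b := by
  rintro a b ⟨rfl, (rfl | rfl | rfl | rfl | rfl | rfl)⟩ <;> rw [map_zero]
  · rw [map_sub, map_sub, map_mul, map_mul, rho0X, rho0Y, OR1]; abel
  · rw [map_sub, map_mul, map_mul, rho0X, rho0Z, OR2]; abel
  · rw [map_sub, map_sub, map_mul, map_mul, map_mul, map_fpol, rho0X, rho0Y, rho0Z, OR3]; abel
  · rw [map_sub, map_pow, rho0X, OR4]; abel
  · rw [map_pow, rho0Y, OR5]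
  · rw [map_sub, map_pow, rho0Z, OR6]; abel

/-- the representation of `A` -/
def rho : AlgA p k →ₐ[k] Module.End k (VV p k) :=
  RingQuot.liftAlgHom k ⟨rho0 p k, rho0_compat p k⟩

lemma rhoX : rho p k (XA p k) = Xop p k := by
  rw [XA, rho, RingQuot.liftAlgHom_mkAlgHom_apply, rho0X]

lemma rhoY : rho p k (YA p k) = Yop p k := by
  rw [YA, rho, RingQuot.liftAlgHom_mkAlgHom_apply, rho0Y]

lemma rhoZ : rho p k (ZA p k) = Zop p k := by
  rw [ZA, rho, RingQuot.liftAlgHom_mkAlgHom_apply, rho0Z]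

end MB

namespace MB

set_option linter.unusedSectionVars false

variable (p : ℕ) (k : Type) [Field k] [CharP k p] [Fact p.Prime] [NeZero p]

lemma vanish (μ : Fin p → k) (h : ∀ ζ : ZMod p, ∑ a : Fin p, μ a * ph p k ζ ^ (a : ℕ) = 0) :
    ∀ a, μ a = 0 := by
  classical
  set P : Polynomial k := ∑ a : Fin p, Polynomial.C (μ a) * Polynomial.X ^ (a : ℕ) with hP
  have heval : ∀ ζ : ZMod p, P.eval (ph p k ζ) = 0 := by
    intro ζ
    rw [hP, Polynomial.eval_finset_sum]
    simpa using h ζ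
  have hdeg : P.natDegree < p := by
    have hple : P.natDegree ≤ p - 1 := by
      apply Polynomial.natDegree_sum_le_of_forall_le
      intro a _
      refine le_trans (Polynomial.natDegree_C_mul_le _ _) ?_
      rw [Polynomial.natDegree_X_pow]
      exact Nat.le_pred_of_lt a.isLt
    have hppos : 0 < p := Nat.pos_of_ne_zero (NeZero.ne p)
    omega
  have hcard : P.natDegree < Fintype.card (ZMod p) := by rw [ZMod.card]; exact hdeg
  have hP0 : P = 0 :=
    Polynomial.eq_zero_of_natDegree_lt_card_of_eval_eq_zero P (ph p k).injective heval hcard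
  intro a
  have hc := congrArg (fun q => Polynomial.coeff q (a : ℕ)) hP0
  simp only [hP, Polynomial.finset_sum_coeff, Polynomial.coeff_C_mul, Polynomial.coeff_X_pow,
    Polynomial.coeff_zero, mul_ite, mul_one, mul_zero] at hc
  simp only [Fin.val_inj] at hc
  rwa [Finset.sum_ite_eq Finset.univ a (fun b => μ b), if_pos (Finset.mem_univ a)] at hc

lemma Xpow_single (c : ℕ) (j t : ZMod p) :
    (Xop p k ^ c) (Pi.single (j, t, (0 : Fin p)) (1:k) : VV p k)
      = ph p k j ^ c • (Pi.single (j, t, (0:Fin p)) (1:k) : VV p k) := by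
  rw [Xop, diag_pow]
  funext q
  rw [diag_apply, Pi.smul_apply, smul_eq_mul]
  by_cases hq : q = (j, t, (0:Fin p))
  · subst hq
    simp [xfun]
  · rw [Pi.single_eq_of_ne hq, mul_zero, mul_zero]

lemma Ypow_single (b : Fin p) (j t : ZMod p) :
    (Yop p k ^ (b:ℕ)) (Pi.single (j, t, (0 : Fin p)) (1:k) : VV p k)
      = (Pi.single (j, t, b) (1:k) : VV p k) := by
  funext q
  obtain ⟨j', t', m⟩ := q
  rw [Yop_pow]
  by_cases h : (b:ℕ) ≤ (m:ℕ)
  · rw [dif_pos h, Pi.single_apply, Pi.single_apply]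
    refine if_congr ?_ rfl rfl
    simp only [Prod.mk.injEq, Fin.ext_iff, Fin.val_zero]
    constructor
    · rintro ⟨hj, ht, hm⟩; exact ⟨hj, ht, by omega⟩
    · rintro ⟨hj, ht, hm⟩; exact ⟨hj, ht, by omega⟩
  · have hne : ((j', t', m) : ZMod p × ZMod p × Fin p) ≠ (j, t, b) := by
      intro hc
      rw [Prod.mk.injEq, Prod.mk.injEq, Fin.ext_iff] at hc
      obtain ⟨-, -, hm⟩ := hc
      omega
    rw [dif_neg h, Pi.single_eq_of_ne hne]

lemma T_single (a b c : Fin p) (j t : ZMod p) (m : Fin p) :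
    ((Zop p k ^ (a:ℕ) * Yop p k ^ (b:ℕ) * Xop p k ^ (c:ℕ))
      (Pi.single (j, t, (0:Fin p)) (1:k) : VV p k)) (j, t, m)
    = if b = m then dfun p k (j, t, m) ^ (a:ℕ) * ph p k j ^ (c:ℕ) else 0 := by
  rw [Module.End.mul_apply, Module.End.mul_apply, Xpow_single, map_smul, Ypow_single,
    Zop, diag_pow, map_smul]
  rw [Pi.smul_apply, smul_eq_mul, diag_apply]
  by_cases hbm : b = m
  · subst hbm
    rw [if_pos rfl, Pi.single_eq_same, mul_one]
    ring
  · rw [if_neg hbm]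
    have hne : ((j, t, m) : ZMod p × ZMod p × Fin p) ≠ (j, t, b) := by
      intro hcontra
      rw [Prod.mk.injEq, Prod.mk.injEq] at hcontra
      exact hbm (hcontra.2.2.symm)
    rw [Pi.single_eq_of_ne hne, mul_zero, mul_zero]

lemma indep : LinearIndependent k (fun q : Fin p × Fin p × Fin p =>
    ZA p k ^ (q.1 : ℕ) * YA p k ^ (q.2.1 : ℕ) * XA p k ^ (q.2.2 : ℕ)) := by
  classical
  apply LinearIndependent.of_comp (rho p k).toLinearMap
  have hcomp : ((rho p k).toLinearMap ∘ fun q : Fin p × Fin p × Fin p =>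
      ZA p k ^ (q.1 : ℕ) * YA p k ^ (q.2.1 : ℕ) * XA p k ^ (q.2.2 : ℕ))
      = fun q : Fin p × Fin p × Fin p =>
        Zop p k ^ (q.1 : ℕ) * Yop p k ^ (q.2.1 : ℕ) * Xop p k ^ (q.2.2 : ℕ) := by
    funext q
    simp [map_mul, map_pow, rhoX, rhoY, rhoZ]
  rw [hcomp, Fintype.linearIndependent_iff]
  intro g hg q0
  obtain ⟨a0, b0, c0⟩ := q0
  have heval : ∀ (j t : ZMod p) (m : Fin p),
      ∑ a : Fin p, ∑ c : Fin p,
        g (a, m, c) * (dfun p k (j, t, m) ^ (a:ℕ) * ph p k j ^ (c:ℕ)) = 0 := by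
    intro j t m
    have h1 := congrFun (LinearMap.congr_fun hg
      (Pi.single (j, t, (0:Fin p)) (1:k) : VV p k)) ((j, t, m) : ZMod p × ZMod p × Fin p)
    simp only [LinearMap.coe_sum, Finset.sum_apply, LinearMap.smul_apply, Pi.smul_apply,
      smul_eq_mul, LinearMap.zero_apply, Pi.zero_apply, T_single, mul_ite, mul_zero] at h1
    rw [Fintype.sum_prod_type] at h1
    have step : ∀ a : Fin p, (∑ bc : Fin p × Fin p,
        if bc.1 = m then g (a, bc.1, bc.2) * (dfun p k (j,t,m) ^ (a:ℕ) * ph p k j ^ (bc.2:ℕ))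
        else 0)
        = ∑ c : Fin p, g (a, m, c) * (dfun p k (j,t,m) ^ (a:ℕ) * ph p k j ^ (c:ℕ)) := by
      intro a
      rw [Fintype.sum_prod_type]
      rw [Finset.sum_comm]
      refine Finset.sum_congr rfl fun c _ => ?_
      rw [Finset.sum_ite_eq' Finset.univ m (fun b => g (a, b, c) *
        (dfun p k (j,t,m) ^ (a:ℕ) * ph p k j ^ (c:ℕ))), if_pos (Finset.mem_univ m)]
    simp only [step] at h1
    exact h1
  have heval2 : ∀ (ζ j : ZMod p) (m : Fin p),
      ∑ a : Fin p, (∑ c : Fin p, g (a, m, c) * ph p k j ^ (c:ℕ)) * ph p k ζ ^ (a:ℕ) = 0 := by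
    intro ζ j m
    have h2 := heval j (ζ + sval p j (m:ℕ)) m
    have hd : dfun p k (j, ζ + sval p j (m:ℕ), m) = ph p k ζ := by
      rw [dfun]
      congr 1
      ring
    rw [hd] at h2
    rw [← h2]
    refine Finset.sum_congr rfl fun a _ => ?_
    rw [Finset.sum_mul]
    refine Finset.sum_congr rfl fun c _ => ?_
    ring
  have h3 : ∀ (j : ZMod p) (a : Fin p), ∑ c : Fin p, g (a, b0, c) * ph p k j ^ (c:ℕ) = 0 :=
    fun j a => vanish p k _ (fun ζ => heval2 ζ j b0) a
  exact vanish p k (fun c => g (a0, b0, c)) (fun j => h3 j a0) c0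

end MB


/-- The monomials `z^i y^j x^l` with `0 ≤ i, j, l ≤ p − 1` form a basis of `A` as a
`k`-vector space; in particular `dim_k A = p^3`. -/
theorem monomials_basis_of_A (p : ℕ) (hp : p.Prime) (k : Type) [Field k] [IsAlgClosed k]
    [CharP k p] :
    (∃ b : Module.Basis (Fin p × Fin p × Fin p) k (AlgA p k),
      ∀ i j l : Fin p, b (i, j, l) = ZA p k ^ (i : ℕ) * YA p k ^ (j : ℕ) * XA p k ^ (l : ℕ)) ∧
    Module.finrank k (AlgA p k) = p ^ 3 := by
  haveI : Fact p.Prime := ⟨hp⟩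
  haveI : NeZero p := ⟨hp.ne_zero⟩
  have hi := MB.indep p k
  have hs := MB.span_top p k hp.two_le
  let b : Module.Basis (Fin p × Fin p × Fin p) k (AlgA p k) := Module.Basis.mk hi hs
  refine ⟨⟨b, fun i j l => ?_⟩, ?_⟩
  · simp only [b, Module.Basis.mk_apply]
  · rw [Module.finrank_eq_card_basis b, Fintype.card_prod, Fintype.card_prod, Fintype.card_fin]
    ring
end
end

section
/- The center of the algebra A is trivial: every element of A commuting with all elements of A is a scalar multiple of the identity, i.e. Z(A) = k·1. -/
noncomputable section

open scoped TensorProduct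

set_option linter.unusedSectionVars false
set_option maxHeartbeats 1000000
namespace CenterAux


/-- algebra maps commute with `fpol`. -/
theorem map_fpol {p : ℕ} {k : Type} [Field k] {R S : Type} [Ring R] [Algebra k R]
    [Ring S] [Algebra k S] (g : R →ₐ[k] S) (t : R) :
    g (fpol p k t) = fpol p k (g t) := by
  unfold fpol
  rw [map_sum]
  exact Finset.sum_congr rfl fun i _ => by rw [map_smul, map_pow]

variable (p : ℕ) [Fact p.Prime] (k : Type) [Field k] [CharP k p]

/-- The cast ring hom `ZMod p →+* k`. -/
def ck : ZMod p →+* k := ZMod.castHom dvd_rfl k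

/-- `fpol` computed inside `ZMod p`. -/
def fZ (t : ZMod p) : ZMod p := fpol p (ZMod p) t

theorem ck_fZ (t : ZMod p) : ck p k (fZ p t) = fpol p k (ck p k t) := by
  unfold fZ fpol
  rw [map_sum]
  refine Finset.sum_congr rfl fun i _ => ?_
  rw [smul_eq_mul, smul_eq_mul, map_mul, map_mul, map_pow, map_pow, map_neg, map_one,
    map_inv₀, map_natCast]

/-- The module on which `A` will act. -/
abbrev MM := Fin p × ZMod p × ZMod p → k

/-- Diagonal operator. -/
def dOp (g : Fin p × ZMod p × ZMod p → k) : MM p k →ₗ[k] MM p k where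
  toFun m := fun q => g q * m q
  map_add' m₁ m₂ := by funext q; simp [mul_add]
  map_smul' c m := by funext q; simp only [Pi.smul_apply, smul_eq_mul, RingHom.id_apply]; ring

@[simp] theorem dOp_apply (g : Fin p × ZMod p × ZMod p → k) (m : MM p k) (q) :
    dOp p k g m q = g q * m q := rfl

/-- The lowering operator `Y`. -/
def Yop : MM p k →ₗ[k] MM p k where
  toFun m := fun q => if h : (q.1 : ℕ) = 0 then 0
    else m (⟨(q.1 : ℕ) - 1, by have := q.1.isLt; omega⟩, q.2.1, q.2.2)
  map_add' m₁ m₂ := by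
    funext q; by_cases h : q.1 = 0 <;> simp [h]
  map_smul' c m := by
    funext q; by_cases h : q.1 = 0 <;> simp [h]

theorem Yop_apply (m : MM p k) (q : Fin p × ZMod p × ZMod p) :
    Yop p k m q = if h : (q.1 : ℕ) = 0 then 0
      else m (⟨(q.1 : ℕ) - 1, by have := q.1.isLt; omega⟩, q.2.1, q.2.2) := rfl

def xg (q : Fin p × ZMod p × ZMod p) : k := ck p k (q.2.1 + (q.1 : ℕ))

def zg (q : Fin p × ZMod p × ZMod p) : k :=
  ck p k (q.2.2 - ∑ m ∈ Finset.range (q.1 : ℕ), fZ p (q.2.1 + m))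

def Xop : MM p k →ₗ[k] MM p k := dOp p k (xg p k)
def Zop : MM p k →ₗ[k] MM p k := dOp p k (zg p k)

theorem dOp_pow (g : Fin p × ZMod p × ZMod p → k) (n : ℕ) :
    (dOp p k g) ^ n = dOp p k (fun q => g q ^ n) := by
  induction n with
  | zero => refine LinearMap.ext fun m => funext fun q => ?_; simp
  | succ n ih =>
    refine LinearMap.ext fun m => funext fun q => ?_
    rw [pow_succ, Module.End.mul_apply, ih]
    simp [pow_succ]; ring


theorem fpol_Xop_apply (m : MM p k) (q) :
    (fpol p k (Xop p k)) m q = fpol p k (xg p k q) * m q := by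
  unfold fpol
  rw [LinearMap.coe_sum, Finset.sum_apply, Finset.sum_apply, Finset.sum_mul]
  refine Finset.sum_congr rfl fun i _ => ?_
  rw [LinearMap.smul_apply, Xop, dOp_pow]
  simp only [dOp_apply, Pi.smul_apply, smul_eq_mul]
  ring

theorem relXY : Xop p k * Yop p k - Yop p k * Xop p k - Yop p k = 0 := by
  refine LinearMap.ext fun m => funext fun q => ?_
  obtain ⟨j, α, β⟩ := q
  simp only [LinearMap.sub_apply, Module.End.mul_apply, Pi.sub_apply, LinearMap.zero_apply,
    Pi.zero_apply, Yop_apply, Xop, dOp_apply]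
  by_cases h : (j : ℕ) = 0
  · simp [h]
  · simp only [h, dif_neg, not_false_iff]
    have hx : xg p k (j, α, β) - xg p k (⟨(j:ℕ)-1, by have := j.isLt; omega⟩, α, β) = 1 := by
      unfold xg
      simp only [← map_sub]
      have : (α + ((j:ℕ) : ZMod p)) - (α + (((j:ℕ)-1 : ℕ) : ZMod p)) = 1 := by
        have hj1 : (1:ℕ) ≤ (j:ℕ) := Nat.one_le_iff_ne_zero.mpr h
        push_cast [Nat.cast_sub hj1]
        ring
      rw [this, map_one]
    linear_combination (m (⟨(j:ℕ)-1, by have := j.isLt; omega⟩, α, β)) * hx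

theorem relXZ : Xop p k * Zop p k - Zop p k * Xop p k = 0 := by
  refine LinearMap.ext fun m => funext fun q => ?_
  simp only [LinearMap.sub_apply, Module.End.mul_apply, Pi.sub_apply, LinearMap.zero_apply,
    Pi.zero_apply, Xop, Zop, dOp_apply]
  ring

theorem relYZ : Yop p k * Zop p k - Zop p k * Yop p k - Yop p k * fpol p k (Xop p k) = 0 := by
  refine LinearMap.ext fun m => funext fun q => ?_
  obtain ⟨j, α, β⟩ := q
  simp only [LinearMap.sub_apply, Module.End.mul_apply, Pi.sub_apply, LinearMap.zero_apply,
    Pi.zero_apply, Yop_apply, Zop, dOp_apply]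
  by_cases h : (j : ℕ) = 0
  · simp [h]
  · simp only [h, dif_neg, not_false_iff, fpol_Xop_apply]
    set j' : Fin p := ⟨(j:ℕ)-1, by have := j.isLt; omega⟩ with hj'
    have hz : zg p k (j', α, β) - zg p k (j, α, β) = fpol p k (xg p k (j', α, β)) := by
      unfold zg
      rw [← map_sub]
      have hsum : (β - ∑ m ∈ Finset.range ((j':Fin p) : ℕ), fZ p (α + m)) -
          (β - ∑ m ∈ Finset.range (j : ℕ), fZ p (α + m)) = fZ p (α + ((j' : ℕ) : ZMod p)) := by
        have hj : (j : ℕ) = (j' : ℕ) + 1 := by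
          simp only [hj']
          have := j.isLt; omega
        rw [hj, Finset.sum_range_succ]
        ring
      rw [hsum, ck_fZ]
      rfl
    linear_combination (m (j', α, β)) * hz

theorem relXp : Xop p k ^ p = Xop p k := by
  rw [Xop, dOp_pow]
  congr 1
  funext q
  unfold xg
  rw [← map_pow, ZMod.pow_card]

theorem relZp : Zop p k ^ p = Zop p k := by
  rw [Zop, dOp_pow]
  congr 1
  funext q
  unfold zg
  rw [← map_pow, ZMod.pow_card]

theorem Yop_pow_apply (n : ℕ) : ∀ (m : MM p k) (q : Fin p × ZMod p × ZMod p),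
    ((Yop p k) ^ n) m q = if h : n ≤ (q.1 : ℕ) then
      m (⟨(q.1 : ℕ) - n, by have := q.1.isLt; omega⟩, q.2.1, q.2.2) else 0 := by
  induction n with
  | zero =>
    intro m q
    rw [pow_zero, Module.End.one_apply, dif_pos (Nat.zero_le _)]
    have h1 : (⟨(q.1 : ℕ) - 0, by have := q.1.isLt; omega⟩ : Fin p) = q.1 := by
      ext; simp
    rw [h1]
  | succ n ih =>
    intro m q
    obtain ⟨j, α, β⟩ := q
    rw [pow_succ', Module.End.mul_apply, Yop_apply]
    by_cases h : (j : ℕ) = 0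
    · rw [dif_pos h, eq_comm, dif_neg (by dsimp only; omega)]
    · rw [dif_neg h, ih]
      by_cases h2 : n + 1 ≤ (j : ℕ)
      · have h3 : n ≤ (((⟨(j:ℕ)-1, by have := j.isLt; omega⟩ : Fin p), α, β).1 : ℕ) := by
          dsimp only; omega
        rw [dif_pos h3, dif_pos h2]
        congr 2
        ext
        dsimp only
        omega
      · rw [dif_neg (by dsimp only; omega), dif_neg h2]

theorem relYp : Yop p k ^ p = 0 := by
  refine LinearMap.ext fun m => funext fun q => ?_
  rw [Yop_pow_apply]
  rw [dif_neg (by have := q.1.isLt; omega)]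
  rfl


section Phi

/-- The representation on the free algebra level. -/
def phiFree : FreeAlgebra k (Fin 3) →ₐ[k] Module.End k (MM p k) :=
  FreeAlgebra.lift k ![Xop p k, Yop p k, Zop p k]

@[simp] theorem phiFree_X : phiFree p k (Xf k) = Xop p k := by
  simp [phiFree, Xf]
@[simp] theorem phiFree_Y : phiFree p k (Yf k) = Yop p k := by
  simp [phiFree, Yf]
@[simp] theorem phiFree_Z : phiFree p k (Zf k) = Zop p k := by
  simp [phiFree, Zf]

theorem phiFree_rel : ∀ ⦃x y : FreeAlgebra k (Fin 3)⦄, relA p k x y →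
    phiFree p k x = phiFree p k y := by
  rintro x y ⟨rfl, hx⟩
  rw [map_zero]
  rcases hx with h | h | h | h | h | h <;> subst h <;>
    simp only [map_sub, map_mul, map_pow, phiFree_X, phiFree_Y, phiFree_Z, map_fpol]
  · exact relXY p k
  · exact relXZ p k
  · exact relYZ p k
  · rw [relXp p k]; exact sub_self _
  · exact relYp p k
  · rw [relZp p k]; exact sub_self _

/-- The representation `A → End(M)`. -/
def phi : AlgA p k →ₐ[k] Module.End k (MM p k) :=
  RingQuot.liftAlgHom k ⟨phiFree p k, phiFree_rel p k⟩

@[simp] theorem phi_X : phi p k (XA p k) = Xop p k := by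
  rw [XA, phi, RingQuot.liftAlgHom_mkAlgHom_apply, phiFree_X]
@[simp] theorem phi_Y : phi p k (YA p k) = Yop p k := by
  rw [YA, phi, RingQuot.liftAlgHom_mkAlgHom_apply, phiFree_Y]
@[simp] theorem phi_Z : phi p k (ZA p k) = Zop p k := by
  rw [ZA, phi, RingQuot.liftAlgHom_mkAlgHom_apply, phiFree_Z]

end Phi


section Vec

/-- The monomials `Y^j X^i Z^l`. -/
def gmon (v : Fin p × Fin p × Fin p) : AlgA p k :=
  YA p k ^ (v.1 : ℕ) * XA p k ^ (v.2.1 : ℕ) * ZA p k ^ (v.2.2 : ℕ)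

/-- A vector concentrated at level `s`. -/
def vec (s : ℕ) (h : ZMod p → ZMod p → k) : MM p k :=
  fun q => if (q.1 : ℕ) = s then h q.2.1 q.2.2 else 0

theorem Yop_vec (s : ℕ) (h : ZMod p → ZMod p → k) :
    Yop p k (vec p k s h) = vec p k (s + 1) h := by
  funext q
  rw [Yop_apply]
  by_cases h0 : (q.1 : ℕ) = 0
  · rw [dif_pos h0]
    simp only [vec]
    rw [if_neg (by omega)]
  · rw [dif_neg h0]
    simp only [vec]
    by_cases hq : (q.1 : ℕ) = s + 1
    · rw [if_pos (by omega), if_pos hq]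
    · rw [if_neg (by omega), if_neg hq]

theorem Yop_pow_vec (j s : ℕ) (h : ZMod p → ZMod p → k) :
    ((Yop p k) ^ j) (vec p k s h) = vec p k (s + j) h := by
  induction j generalizing s with
  | zero => rw [pow_zero]; rfl
  | succ j ih =>
    rw [pow_succ, Module.End.mul_apply, Yop_vec, ih (s+1),
      show s + 1 + j = s + (j + 1) from by omega]

theorem Xop_pow_vec (i s : ℕ) (h : ZMod p → ZMod p → k) :
    ((Xop p k) ^ i) (vec p k s h) =
      vec p k s (fun α β => ck p k (α + (s : ℕ)) ^ i * h α β) := by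
  rw [Xop, dOp_pow]
  funext q
  simp only [dOp_apply, vec]
  by_cases hq : (q.1 : ℕ) = s
  · rw [if_pos hq, if_pos hq]
    unfold xg
    rw [hq]
  · rw [if_neg hq, if_neg hq, mul_zero]

theorem Zop_pow_vec (l s : ℕ) (h : ZMod p → ZMod p → k) :
    ((Zop p k) ^ l) (vec p k s h) =
      vec p k s (fun α β =>
        ck p k (β - ∑ m ∈ Finset.range s, fZ p (α + m)) ^ l * h α β) := by
  rw [Zop, dOp_pow]
  funext q
  simp only [dOp_apply, vec]
  by_cases hq : (q.1 : ℕ) = s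
  · rw [if_pos hq, if_pos hq]
    unfold zg
    rw [hq]
  · rw [if_neg hq, if_neg hq, mul_zero]

/-- the polynomial function associated to a coefficient family -/
def Pc (c : Fin p × Fin p × Fin p → k) (j₀ : Fin p) (α β : ZMod p) : k :=
  ∑ w : Fin p × Fin p, c (j₀, w) * ck p k α ^ (w.1 : ℕ) * ck p k β ^ (w.2 : ℕ)

theorem apply_vec (c : Fin p × Fin p × Fin p → k) (s : ℕ) (h : ZMod p → ZMod p → k)
    (j₀ : Fin p) (α β : ZMod p) :
    (phi p k (∑ v, c v • gmon p k v)) (vec p k s h) (j₀, α, β)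
    = if hs : s ≤ (j₀ : ℕ) then
        Pc p k c ⟨(j₀ : ℕ) - s, by have := j₀.isLt; omega⟩ (α + (s : ℕ))
          (β - ∑ m ∈ Finset.range s, fZ p (α + m)) * h α β
      else 0 := by
  classical
  rw [map_sum, LinearMap.sum_apply, Finset.sum_apply]
  have hterm : ∀ v : Fin p × Fin p × Fin p,
      (phi p k (c v • gmon p k v)) (vec p k s h) (j₀, α, β)
      = if (j₀ : ℕ) = s + (v.1 : ℕ) then
          c v * (ck p k (α + (s : ℕ)) ^ ((v.2.1 : Fin p) : ℕ) *
            (ck p k (β - ∑ m ∈ Finset.range s, fZ p (α + m)) ^ ((v.2.2 : Fin p) : ℕ) *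
              h α β)) else 0 := by
    intro v
    rw [map_smul, gmon, map_mul, map_mul, map_pow, map_pow, map_pow, phi_X, phi_Y, phi_Z,
      LinearMap.smul_apply, Module.End.mul_apply, Module.End.mul_apply, Zop_pow_vec,
      Xop_pow_vec, Yop_pow_vec]
    simp only [Pi.smul_apply, smul_eq_mul, vec]
    by_cases hq : (j₀ : ℕ) = s + (v.1 : ℕ)
    · rw [if_pos hq, if_pos hq]
    · rw [if_neg hq, if_neg hq, mul_zero]
  rw [Finset.sum_congr rfl (fun v _ => hterm v), Fintype.sum_prod_type]
  by_cases hs : s ≤ (j₀ : ℕ)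
  · rw [dif_pos hs]
    rw [Finset.sum_eq_single (⟨(j₀ : ℕ) - s, by have := j₀.isLt; omega⟩ : Fin p)]
    · rw [Finset.sum_congr rfl (fun w _ => if_pos (show (j₀ : ℕ) = s + ((j₀ : ℕ) - s) by omega))]
      rw [Pc, Finset.sum_mul]
      exact Finset.sum_congr rfl fun w _ => by ring
    · intro j _ hj
      refine Finset.sum_eq_zero fun w _ => if_neg ?_
      intro hcon
      have hcon' : (j₀ : ℕ) = s + (j : ℕ) := hcon
      refine hj ?_
      ext
      show (j : ℕ) = (j₀ : ℕ) - s
      omega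
    · intro hmem
      exact absurd (Finset.mem_univ _) hmem
  · rw [dif_neg hs]
    refine Finset.sum_eq_zero fun j _ => Finset.sum_eq_zero fun w _ => if_neg ?_
    show ¬((j₀ : ℕ) = s + (j : ℕ))
    omega

end Vec


section Span

/-- `f(X)` inside `A`. -/
def fA : AlgA p k := fpol p k (XA p k)

theorem Arel_xy : XA p k * YA p k = YA p k * XA p k + YA p k := by
  have h := RingQuot.mkAlgHom_rel k
    (show relA p k (Xf k * Yf k - Yf k * Xf k - Yf k) 0 from ⟨rfl, Or.inl rfl⟩)
  rw [map_zero, map_sub, map_sub, map_mul, map_mul] at h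
  have h' : XA p k * YA p k - (YA p k * XA p k + YA p k) = 0 := by
    rw [← sub_sub]; exact h
  rw [← sub_eq_zero]; exact h'

theorem Arel_xz : XA p k * ZA p k = ZA p k * XA p k := by
  have h := RingQuot.mkAlgHom_rel k
    (show relA p k (Xf k * Zf k - Zf k * Xf k) 0 from ⟨rfl, Or.inr (Or.inl rfl)⟩)
  rw [map_zero, map_sub, map_mul, map_mul] at h
  rw [← sub_eq_zero]; exact h

theorem Arel_yz : YA p k * ZA p k = ZA p k * YA p k + YA p k * fA p k := by
  have h := RingQuot.mkAlgHom_rel k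
    (show relA p k (Yf k * Zf k - Zf k * Yf k - Yf k * fpol p k (Xf k)) 0 from
      ⟨rfl, Or.inr (Or.inr (Or.inl rfl))⟩)
  rw [map_zero, map_sub, map_sub, map_mul, map_mul, map_mul,
    map_fpol (RingQuot.mkAlgHom k (relA p k))] at h
  have h' : YA p k * ZA p k - (ZA p k * YA p k + YA p k * fA p k) = 0 := by
    rw [← sub_sub]; exact h
  rw [← sub_eq_zero]; exact h'

theorem Arel_xp : XA p k ^ p = XA p k := by
  have h := RingQuot.mkAlgHom_rel k
    (show relA p k (Xf k ^ p - Xf k) 0 from ⟨rfl, Or.inr (Or.inr (Or.inr (Or.inl rfl)))⟩)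
  rw [map_zero, map_sub, map_pow] at h
  rw [← sub_eq_zero]; exact h

theorem Arel_yp : YA p k ^ p = 0 := by
  have h := RingQuot.mkAlgHom_rel k
    (show relA p k (Yf k ^ p) 0 from ⟨rfl, Or.inr (Or.inr (Or.inr (Or.inr (Or.inl rfl))))⟩)
  rw [map_zero, map_pow] at h
  exact h

theorem Arel_zp : ZA p k ^ p = ZA p k := by
  have h := RingQuot.mkAlgHom_rel k
    (show relA p k (Zf k ^ p - Zf k) 0 from ⟨rfl, Or.inr (Or.inr (Or.inr (Or.inr (Or.inr rfl))))⟩)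
  rw [map_zero, map_sub, map_pow] at h
  rw [← sub_eq_zero]; exact h

theorem Arel_zy : ZA p k * YA p k = YA p k * (ZA p k - fA p k) := by
  rw [mul_sub, Arel_yz, add_sub_cancel_right]

theorem Arel_xy' : XA p k * YA p k = YA p k * (XA p k + 1) := by
  rw [mul_add, mul_one, Arel_xy]

theorem shift_pow {R : Type} [Ring R] {x y u : R} (h : x * y = y * u) :
    ∀ i, x ^ i * y = y * u ^ i
  | 0 => by simp
  | (i+1) => by
    rw [pow_succ', mul_assoc, shift_pow h i, ← mul_assoc, h, mul_assoc, ← pow_succ']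

/-- Monomials in `X, Z`. -/
def gmon2 (v : Fin p × Fin p) : AlgA p k := XA p k ^ (v.1 : ℕ) * ZA p k ^ (v.2 : ℕ)

def TT : Submodule k (AlgA p k) := Submodule.span k (Set.range (gmon2 p k))
def SS : Submodule k (AlgA p k) := Submodule.span k (Set.range (gmon p k))

theorem Xpow_reduce (a : ℕ) (h : a ≤ p) : ∃ a' : ℕ, a' < p ∧ XA p k ^ a = XA p k ^ a' := by
  rcases eq_or_lt_of_le h with h1 | h1
  · exact ⟨1, (Fact.out : p.Prime).one_lt, by rw [h1, Arel_xp, pow_one]⟩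
  · exact ⟨a, h1, rfl⟩

theorem Zpow_reduce (a : ℕ) (h : a ≤ p) : ∃ a' : ℕ, a' < p ∧ ZA p k ^ a = ZA p k ^ a' := by
  rcases eq_or_lt_of_le h with h1 | h1
  · exact ⟨1, (Fact.out : p.Prime).one_lt, by rw [h1, Arel_zp, pow_one]⟩
  · exact ⟨a, h1, rfl⟩

theorem mem_T (a b : ℕ) (ha : a ≤ p) (hb : b ≤ p) : XA p k ^ a * ZA p k ^ b ∈ TT p k := by
  obtain ⟨a', ha', hxa⟩ := Xpow_reduce p k a ha
  obtain ⟨b', hb', hzb⟩ := Zpow_reduce p k b hb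
  rw [hxa, hzb]
  exact Submodule.subset_span ⟨(⟨a', ha'⟩, ⟨b', hb'⟩), rfl⟩

theorem T_mulX {t : AlgA p k} (ht : t ∈ TT p k) : t * XA p k ∈ TT p k := by
  induction ht using Submodule.span_induction with
  | mem x hx =>
    obtain ⟨⟨a, b⟩, rfl⟩ := hx
    have hc : ZA p k ^ (b : ℕ) * XA p k = XA p k * ZA p k ^ (b : ℕ) :=
      ((Commute.pow_right (Arel_xz p k) (b : ℕ)).symm).eq
    have hg : gmon2 p k (a, b) = XA p k ^ (a : ℕ) * ZA p k ^ (b : ℕ) := rfl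
    rw [hg, mul_assoc, hc, ← mul_assoc, ← pow_succ]
    exact mem_T p k _ _ (by have := (⟨a, by omega⟩ : Fin p); omega) (le_of_lt b.isLt)
  | zero => rw [zero_mul]; exact Submodule.zero_mem _
  | add x y hx hy ihx ihy => rw [add_mul]; exact Submodule.add_mem _ ihx ihy
  | smul a x hx ih => rw [smul_mul_assoc]; exact Submodule.smul_mem _ _ ih

theorem T_mulZ {t : AlgA p k} (ht : t ∈ TT p k) : t * ZA p k ∈ TT p k := by
  induction ht using Submodule.span_induction with
  | mem x hx =>
    obtain ⟨⟨a, b⟩, rfl⟩ := hx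
    have hg : gmon2 p k (a, b) = XA p k ^ (a : ℕ) * ZA p k ^ (b : ℕ) := rfl
    rw [hg, mul_assoc, ← pow_succ]
    exact mem_T p k _ _ (le_of_lt a.isLt) (by omega)
  | zero => rw [zero_mul]; exact Submodule.zero_mem _
  | add x y hx hy ihx ihy => rw [add_mul]; exact Submodule.add_mem _ ihx ihy
  | smul a x hx ih => rw [smul_mul_assoc]; exact Submodule.smul_mem _ _ ih

theorem T_mulXpow {t : AlgA p k} (ht : t ∈ TT p k) : ∀ i : ℕ, t * XA p k ^ i ∈ TT p k
  | 0 => by rw [pow_zero, mul_one]; exact ht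
  | (i+1) => by
    rw [pow_succ, ← mul_assoc]
    exact T_mulX p k (T_mulXpow ht i)

theorem T_mulfA {t : AlgA p k} (ht : t ∈ TT p k) : t * fA p k ∈ TT p k := by
  rw [fA, fpol, Finset.mul_sum]
  refine Submodule.sum_mem _ fun i _ => ?_
  rw [mul_smul_comm]
  exact Submodule.smul_mem _ _ (T_mulXpow p k ht _)

theorem T_one : (1 : AlgA p k) ∈ TT p k := by
  have : (1 : AlgA p k) = gmon2 p k (⟨0, (Fact.out : p.Prime).pos⟩, ⟨0, (Fact.out : p.Prime).pos⟩) := by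
    rw [gmon2]; simp
  rw [this]
  exact Submodule.subset_span ⟨_, rfl⟩

theorem T_poly (i l : ℕ) : (XA p k + 1) ^ i * (ZA p k - fA p k) ^ l ∈ TT p k := by
  have hXi : ∀ i : ℕ, (XA p k + 1) ^ i ∈ TT p k := by
    intro i
    induction i with
    | zero => rw [pow_zero]; exact T_one p k
    | succ i ih =>
      rw [pow_succ, mul_add, mul_one]
      exact Submodule.add_mem _ (T_mulX p k ih) ih
  induction l with
  | zero => rw [pow_zero, mul_one]; exact hXi i
  | succ l ih =>
    rw [pow_succ, ← mul_assoc, mul_sub]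
    exact Submodule.sub_mem _ (T_mulZ p k ih) (T_mulfA p k ih)

theorem S_one : (1 : AlgA p k) ∈ SS p k := by
  have : (1 : AlgA p k) = gmon p k (⟨0, (Fact.out : p.Prime).pos⟩, ⟨0, (Fact.out : p.Prime).pos⟩,
      ⟨0, (Fact.out : p.Prime).pos⟩) := by
    rw [gmon]; simp
  rw [this]
  exact Submodule.subset_span ⟨_, rfl⟩

theorem S_Ymul_T {u : AlgA p k} (hu : u ∈ TT p k) (n : ℕ) (hn : n < p) :
    YA p k ^ n * u ∈ SS p k := by
  induction hu using Submodule.span_induction with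
  | mem x hx =>
    obtain ⟨⟨a, b⟩, rfl⟩ := hx
    have hg : gmon2 p k (a, b) = XA p k ^ (a : ℕ) * ZA p k ^ (b : ℕ) := rfl
    rw [hg, ← mul_assoc]
    exact Submodule.subset_span ⟨(⟨n, hn⟩, a, b), rfl⟩
  | zero => rw [mul_zero]; exact Submodule.zero_mem _
  | add x y hx hy ihx ihy => rw [mul_add]; exact Submodule.add_mem _ ihx ihy
  | smul a x hx ih => rw [mul_smul_comm]; exact Submodule.smul_mem _ _ ih

theorem S_mulX {s : AlgA p k} (hs : s ∈ SS p k) : s * XA p k ∈ SS p k := by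
  induction hs using Submodule.span_induction with
  | mem x hx =>
    obtain ⟨⟨j, a, b⟩, rfl⟩ := hx
    have hc : ZA p k ^ (b : ℕ) * XA p k = XA p k * ZA p k ^ (b : ℕ) :=
      ((Commute.pow_right (Arel_xz p k) (b : ℕ)).symm).eq
    have hg : gmon p k (j, a, b) = YA p k ^ (j : ℕ) * XA p k ^ (a : ℕ) * ZA p k ^ (b : ℕ) := rfl
    rw [hg, mul_assoc, hc, ← mul_assoc, mul_assoc (YA p k ^ (j:ℕ)), ← pow_succ]
    obtain ⟨a', ha', hxa⟩ := Xpow_reduce p k ((a : ℕ) + 1) (by omega)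
    rw [hxa]
    have : YA p k ^ (j : ℕ) * XA p k ^ a' * ZA p k ^ (b : ℕ)
        = YA p k ^ (j : ℕ) * (XA p k ^ a' * ZA p k ^ (b : ℕ)) := by rw [mul_assoc]
    rw [this]
    exact S_Ymul_T p k (mem_T p k a' _ (le_of_lt ha') (le_of_lt b.isLt)) _ j.isLt
  | zero => rw [zero_mul]; exact Submodule.zero_mem _
  | add x y hx hy ihx ihy => rw [add_mul]; exact Submodule.add_mem _ ihx ihy
  | smul a x hx ih => rw [smul_mul_assoc]; exact Submodule.smul_mem _ _ ih

theorem S_mulZ {s : AlgA p k} (hs : s ∈ SS p k) : s * ZA p k ∈ SS p k := by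
  induction hs using Submodule.span_induction with
  | mem x hx =>
    obtain ⟨⟨j, a, b⟩, rfl⟩ := hx
    have hg : gmon p k (j, a, b) = YA p k ^ (j : ℕ) * XA p k ^ (a : ℕ) * ZA p k ^ (b : ℕ) := rfl
    rw [hg, mul_assoc, ← pow_succ]
    obtain ⟨b', hb', hzb⟩ := Zpow_reduce p k ((b : ℕ) + 1) (by omega)
    rw [hzb, mul_assoc]
    exact S_Ymul_T p k (mem_T p k _ _ (le_of_lt a.isLt) (le_of_lt hb')) _ j.isLt
  | zero => rw [zero_mul]; exact Submodule.zero_mem _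
  | add x y hx hy ihx ihy => rw [add_mul]; exact Submodule.add_mem _ ihx ihy
  | smul a x hx ih => rw [smul_mul_assoc]; exact Submodule.smul_mem _ _ ih

theorem S_mulY {s : AlgA p k} (hs : s ∈ SS p k) : s * YA p k ∈ SS p k := by
  induction hs using Submodule.span_induction with
  | mem x hx =>
    obtain ⟨⟨j, a, b⟩, rfl⟩ := hx
    have hZb : ZA p k ^ (b : ℕ) * YA p k = YA p k * (ZA p k - fA p k) ^ (b : ℕ) :=
      shift_pow (Arel_zy p k) _
    have hXa : XA p k ^ (a : ℕ) * YA p k = YA p k * (XA p k + 1) ^ (a : ℕ) :=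
      shift_pow (Arel_xy' p k) _
    have key : gmon p k (j, a, b) * YA p k
        = YA p k ^ ((j : ℕ) + 1) * ((XA p k + 1) ^ (a : ℕ) * (ZA p k - fA p k) ^ (b : ℕ)) := by
      have hg : gmon p k (j, a, b) = YA p k ^ (j : ℕ) * XA p k ^ (a : ℕ) * ZA p k ^ (b : ℕ) := rfl
      rw [hg, mul_assoc, mul_assoc, hZb, ← mul_assoc (XA p k ^ (a : ℕ)), hXa,
        mul_assoc (YA p k), ← mul_assoc, ← pow_succ]
    rw [key]
    rcases eq_or_lt_of_le (show (j : ℕ) + 1 ≤ p from j.isLt) with h1 | h1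
    · rw [h1, Arel_yp, zero_mul]; exact Submodule.zero_mem _
    · exact S_Ymul_T p k (T_poly p k _ _) _ h1
  | zero => rw [zero_mul]; exact Submodule.zero_mem _
  | add x y hx hy ihx ihy => rw [add_mul]; exact Submodule.add_mem _ ihx ihy
  | smul a x hx ih => rw [smul_mul_assoc]; exact Submodule.smul_mem _ _ ih

theorem S_top (aa : AlgA p k) : aa ∈ SS p k := by
  have key : ∀ w : FreeAlgebra k (Fin 3), ∀ s ∈ SS p k,
      s * (RingQuot.mkAlgHom k (relA p k) w) ∈ SS p k := by
    intro w
    induction w using FreeAlgebra.induction with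
    | grade0 c =>
      intro s hs
      rw [AlgHom.commutes, Algebra.algebraMap_eq_smul_one, mul_smul_comm, mul_one]
      exact Submodule.smul_mem _ _ hs
    | grade1 i =>
      fin_cases i
      · exact fun s hs => S_mulX p k hs
      · exact fun s hs => S_mulY p k hs
      · exact fun s hs => S_mulZ p k hs
    | mul u v ihu ihv =>
      intro s hs
      rw [map_mul, ← mul_assoc]
      exact ihv _ (ihu s hs)
    | add u v ihu ihv =>
      intro s hs
      rw [map_add, mul_add]
      exact Submodule.add_mem _ (ihu s hs) (ihv s hs)
  obtain ⟨w, rfl⟩ := RingQuot.mkAlgHom_surjective k (relA p k) aa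
  simpa using key w 1 (S_one p k)

theorem exists_rep (aa : AlgA p k) :
    ∃ c : Fin p × Fin p × Fin p → k, ∑ v, c v • gmon p k v = aa := by
  have h : aa ∈ Submodule.span k (Set.range (gmon p k)) := S_top p k aa
  exact (Submodule.mem_span_range_iff_exists_fun (R := k)).mp h

end Span


section Analysis

theorem ck_inj : Function.Injective (ck p k) := (ck p k).injective

theorem poly1 (e : Fin p → k) (h : ∀ γ : ZMod p, ∑ i : Fin p, e i * ck p k γ ^ (i : ℕ) = 0) :
    ∀ i, e i = 0 := by
  classical
  set q : Polynomial k := ∑ i : Fin p, Polynomial.C (e i) * Polynomial.X ^ (i : ℕ) with hq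
  have heval : ∀ γ : ZMod p, q.eval (ck p k γ) = 0 := by
    intro γ
    rw [hq, Polynomial.eval_finset_sum]
    simpa only [Polynomial.eval_mul, Polynomial.eval_C, Polynomial.eval_pow,
      Polynomial.eval_X] using h γ
  have hdeg : q.natDegree < p := by
    have h1 : q.natDegree ≤ p - 1 := by
      refine Polynomial.natDegree_sum_le_of_forall_le _ _ fun i _ => ?_
      refine le_trans (Polynomial.natDegree_C_mul_le _ _) ?_
      rw [Polynomial.natDegree_X_pow]
      have := i.isLt; omega
    have := (Fact.out : p.Prime).pos
    omega
  have hq0 : q = 0 := by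
    refine Polynomial.eq_zero_of_natDegree_lt_card_of_eval_eq_zero q (ck_inj p k) heval ?_
    rwa [ZMod.card]
  intro i
  have hco : q.coeff (i : ℕ) = e i := by
    rw [hq, Polynomial.finset_sum_coeff]
    rw [Finset.sum_eq_single i]
    · rw [Polynomial.coeff_C_mul, Polynomial.coeff_X_pow, if_pos rfl, mul_one]
    · intro i' _ hne
      rw [Polynomial.coeff_C_mul, Polynomial.coeff_X_pow,
        if_neg (fun hcon => hne (Fin.ext hcon.symm)), mul_zero]
    · intro hmem
      exact absurd (Finset.mem_univ _) hmem
  rw [hq0, Polynomial.coeff_zero] at hco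
  exact hco.symm

theorem poly2 (d : Fin p × Fin p → k)
    (h : ∀ α β : ZMod p, ∑ w : Fin p × Fin p,
      d w * ck p k α ^ (w.1 : ℕ) * ck p k β ^ (w.2 : ℕ) = 0) :
    ∀ w, d w = 0 := by
  have hstep : ∀ (α : ZMod p) (l : Fin p), ∑ i : Fin p, d (i, l) * ck p k α ^ (i : ℕ) = 0 := by
    intro α l
    refine poly1 p k (fun l => ∑ i : Fin p, d (i, l) * ck p k α ^ (i : ℕ)) ?_ l
    intro β
    have hr := h α β
    rw [Fintype.sum_prod_type] at hr
    rw [← hr, Finset.sum_comm]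
    refine Finset.sum_congr rfl fun l' _ => ?_
    rw [Finset.sum_mul]
  rintro ⟨i, l⟩
  exact poly1 p k (fun i => d (i, l)) (fun α => hstep α l) i

theorem sum_pow_card_sub_one : ∑ t : ZMod p, t ^ (p - 1) = -1 := by
  have h2 : 2 ≤ p := (Fact.out : p.Prime).two_le
  rw [← Finset.add_sum_erase _ _ (Finset.mem_univ (0 : ZMod p))]
  rw [zero_pow (by omega), zero_add]
  rw [Finset.sum_congr rfl (fun t ht => ZMod.pow_card_sub_one_eq_one (Finset.mem_erase.mp ht).1)]
  rw [Finset.sum_const, Finset.card_erase_of_mem (Finset.mem_univ _), Finset.card_univ,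
    ZMod.card, nsmul_eq_mul, mul_one]
  rw [Nat.cast_sub (by omega), ZMod.natCast_self, Nat.cast_one, zero_sub]

theorem sum_fZ : ∑ t : ZMod p, fZ p t = (-1 : ZMod p) ^ (p - 1) := by
  have h2 : 2 ≤ p := (Fact.out : p.Prime).two_le
  unfold fZ fpol
  rw [Finset.sum_comm]
  rw [Finset.sum_eq_single (p - 1)]
  · rw [← Finset.smul_sum, sum_pow_card_sub_one, Nat.sub_sub_self (by omega), Nat.cast_one,
      inv_one, mul_one, smul_eq_mul, ← pow_succ, show p - 1 - 1 + 1 = p - 1 from by omega]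
  · intro i hi hne
    rw [← Finset.smul_sum, FiniteField.sum_pow_lt_card_sub_one (ZMod p) i
      (by rw [ZMod.card]; rw [Finset.mem_Icc] at hi; omega), smul_zero]
  · intro hmem
    exact absurd (Finset.mem_Icc.mpr ⟨by omega, le_refl _⟩) hmem

theorem sum_fZ_ne_zero : ∑ t : ZMod p, fZ p t ≠ 0 := by
  rw [sum_fZ]
  exact pow_ne_zero _ (neg_ne_zero.mpr one_ne_zero)

theorem sum_shift (α : ZMod p) (g : ZMod p → ZMod p) :
    ∑ m ∈ Finset.range p, g (α + (m : ℕ)) = ∑ t : ZMod p, g t := by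
  rw [← Fin.sum_univ_eq_sum_range (fun m => g (α + (m : ℕ))) p]
  refine Fintype.sum_bijective (fun m : Fin p => α + ((m : ℕ) : ZMod p)) ?_ _ _ (fun m => rfl)
  rw [Fintype.bijective_iff_injective_and_card]
  constructor
  · intro m1 m2 hm
    have hm' : ((m1 : ℕ) : ZMod p) = ((m2 : ℕ) : ZMod p) := by
      have := add_left_cancel hm
      exact this
    have hv := congrArg ZMod.val hm'
    rw [ZMod.val_cast_of_lt m1.isLt, ZMod.val_cast_of_lt m2.isLt] at hv
    exact Fin.ext hv
  · rw [ZMod.card, Fintype.card_fin]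

end Analysis


section Qconst

theorem Q_iter (Q : ZMod p → ZMod p → k) (hQ : ∀ α β, Q (α + 1) (β - fZ p α) = Q α β) :
    ∀ (n : ℕ) (α β : ZMod p),
      Q (α + (n : ℕ)) (β - ∑ m ∈ Finset.range n, fZ p (α + (m : ℕ))) = Q α β := by
  intro n
  induction n with
  | zero => intro α β; simp
  | succ n ih =>
    intro α β
    have h1 : (α + ((n + 1 : ℕ) : ZMod p)) = (α + (n : ℕ)) + 1 := by push_cast; ring
    have h2 : β - ∑ m ∈ Finset.range (n + 1), fZ p (α + (m : ℕ))
        = (β - ∑ m ∈ Finset.range n, fZ p (α + (m : ℕ))) - fZ p (α + (n : ℕ)) := by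
      rw [Finset.sum_range_succ, sub_sub]
    rw [h1, h2, hQ, ih]

theorem Q_const (Q : ZMod p → ZMod p → k) (hQ : ∀ α β, Q (α + 1) (β - fZ p α) = Q α β) :
    ∀ α β : ZMod p, Q α β = Q 0 0 := by
  have hsne := sum_fZ_ne_zero p
  have hstepβ : ∀ α β, Q α (β - ∑ t : ZMod p, fZ p t) = Q α β := by
    intro α β
    have h := Q_iter p k Q hQ p α β
    rw [ZMod.natCast_self, add_zero, sum_shift] at h
    exact h
  have hβn : ∀ (n : ℕ) (α β), Q α (β - n • (∑ t : ZMod p, fZ p t)) = Q α β := by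
    intro n
    induction n with
    | zero => intro α β; simp
    | succ n ih =>
      intro α β
      rw [succ_nsmul, ← sub_sub, hstepβ, ih]
  have hβ : ∀ α β β', Q α β = Q α β' := by
    intro α β β'
    have hn := hβn (((β - β') * (∑ t : ZMod p, fZ p t)⁻¹).val) α β
    have hval : ((((β - β') * (∑ t : ZMod p, fZ p t)⁻¹).val : ℕ) •
        (∑ t : ZMod p, fZ p t) : ZMod p) = β - β' := by
      rw [nsmul_eq_mul, ZMod.natCast_rightInverse _, mul_assoc,
        inv_mul_cancel₀ hsne, mul_one]
    rw [hval, sub_sub_cancel] at hn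
    exact hn.symm
  have hα1 : ∀ α β, Q (α + 1) β = Q α β := fun α β =>
    (hβ (α + 1) β (β - fZ p α)).trans (hQ α β)
  have hαn : ∀ (n : ℕ) (α β), Q (α + (n : ℕ)) β = Q α β := by
    intro n
    induction n with
    | zero => intro α β; simp
    | succ n ih =>
      intro α β
      have h1 : (α + ((n + 1 : ℕ) : ZMod p)) = (α + (n : ℕ)) + 1 := by push_cast; ring
      rw [h1, hα1, ih]
  intro α β
  have h0 := hαn α.val 0 β
  rw [zero_add, ZMod.natCast_rightInverse _] at h0
  exact h0.trans (hβ 0 β 0)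

end Qconst

section Eval

theorem Xop_apply (m : MM p k) (q) : Xop p k m q = xg p k q * m q := rfl

theorem xg_mk (j₀ : Fin p) (α β : ZMod p) :
    xg p k (j₀, α, β) = ck p k (α + ((j₀ : ℕ) : ZMod p)) := rfl

theorem Xop_vec0 (h : ZMod p → ZMod p → k) :
    Xop p k (vec p k 0 h) = vec p k 0 (fun α β => ck p k α * h α β) := by
  have h1 := Xop_pow_vec p k 1 0 h
  rw [pow_one] at h1
  rw [h1]
  have h2 : (fun (α β : ZMod p) => ck p k (α + ((0 : ℕ) : ZMod p)) ^ 1 * h α β)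
      = fun α β => ck p k α * h α β := by
    funext α β; rw [pow_one, Nat.cast_zero, add_zero]
  rw [h2]

theorem eval_level0 (c : Fin p × Fin p × Fin p → k) (h : ZMod p → ZMod p → k)
    (j₀ : Fin p) (α β : ZMod p) :
    (phi p k (∑ v, c v • gmon p k v)) (vec p k 0 h) (j₀, α, β)
    = Pc p k c j₀ α β * h α β := by
  rw [apply_vec, dif_pos (Nat.zero_le _)]
  have h1 : (⟨(j₀ : ℕ) - 0, by have := j₀.isLt; omega⟩ : Fin p) = j₀ :=
    Fin.ext (Nat.sub_zero _)
  simp only [h1, Nat.cast_zero, add_zero, Finset.range_zero, Finset.sum_empty, sub_zero]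

theorem eval_level1 (c : Fin p × Fin p × Fin p → k) (h : ZMod p → ZMod p → k)
    (hp1 : 1 < p) (α β : ZMod p) :
    (phi p k (∑ v, c v • gmon p k v)) (vec p k 1 h) ((⟨1, hp1⟩ : Fin p), α, β)
    = Pc p k c ⟨0, by omega⟩ (α + 1) (β - fZ p α) * h α β := by
  rw [apply_vec, dif_pos (show (1 : ℕ) ≤ 1 from le_refl 1)]
  have h1 : (⟨((⟨1, hp1⟩ : Fin p) : ℕ) - 1, by omega⟩ : Fin p) = ⟨0, by omega⟩ :=
    Fin.ext rfl
  simp only [h1, Nat.cast_one, Finset.sum_range_one, Nat.cast_zero, add_zero]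

end Eval

end CenterAux

/-- The center of the algebra `A` is trivial: every element of `A` commuting with all
elements of `A` is a scalar multiple of the identity, i.e. `Z(A) = k·1`. -/
theorem center_of_A_trivial (p : ℕ) (hp : p.Prime) (k : Type) [Field k] [IsAlgClosed k]
    [CharP k p] (a : AlgA p k) (ha : ∀ b : AlgA p k, a * b = b * a) :
    ∃ c : k, a = algebraMap k (AlgA p k) c := by
  haveI : Fact p.Prime := ⟨hp⟩
  obtain ⟨c, hc⟩ := CenterAux.exists_rep p k a
  -- the unit vector
  set w : CenterAux.MM p k := CenterAux.vec p k 0 (fun _ _ => (1 : k)) with hw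
  -- Equation E1 : commuting with X
  have hkey1 : ∀ (j₀ : Fin p) (α β : ZMod p),
      ((j₀ : ℕ) : k) * CenterAux.Pc p k c j₀ α β = 0 := by
    intro j₀ α β
    have h2 := congrArg (CenterAux.phi p k) (ha (XA p k))
    rw [map_mul, map_mul, CenterAux.phi_X, ← hc] at h2
    have h3 := LinearMap.ext_iff.mp h2 w
    rw [Module.End.mul_apply, Module.End.mul_apply, hw, CenterAux.Xop_vec0] at h3
    have h4 := congrFun h3 (j₀, α, β)
    rw [CenterAux.eval_level0, CenterAux.Xop_apply, CenterAux.eval_level0,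
      CenterAux.xg_mk, map_add, map_natCast] at h4
    linear_combination - h4
  have claim1 : ∀ (j₀ : Fin p), (j₀ : ℕ) ≠ 0 → ∀ v : Fin p × Fin p, c (j₀, v) = 0 := by
    intro j₀ hj
    have hPzero : ∀ α β, CenterAux.Pc p k c j₀ α β = 0 := by
      intro α β
      have hne : ((j₀ : ℕ) : k) ≠ 0 := by
        intro h0
        have hdvd := (CharP.cast_eq_zero_iff k p _).mp h0
        have h5 := Nat.le_of_dvd (Nat.pos_of_ne_zero hj) hdvd
        have := j₀.isLt; omega
      exact (mul_eq_zero.mp (hkey1 j₀ α β)).resolve_left hne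
    exact CenterAux.poly2 p k (fun v => c (j₀, v)) hPzero
  -- Equation E3 : commuting with Y
  have hE3 : ∀ α β : ZMod p, CenterAux.Pc p k c ⟨0, hp.pos⟩ (α + 1) (β - CenterAux.fZ p α)
      = CenterAux.Pc p k c ⟨0, hp.pos⟩ α β := by
    intro α β
    have h2 := congrArg (CenterAux.phi p k) (ha (YA p k))
    rw [map_mul, map_mul, CenterAux.phi_Y, ← hc] at h2
    have h3 := LinearMap.ext_iff.mp h2 w
    rw [Module.End.mul_apply, Module.End.mul_apply, hw, CenterAux.Yop_vec] at h3
    have h4 := congrFun h3 ((⟨1, hp.one_lt⟩ : Fin p), α, β)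
    rw [CenterAux.eval_level1, CenterAux.Yop_apply] at h4
    rw [dif_neg (show ¬(((⟨1, hp.one_lt⟩ : Fin p) : ℕ) = 0) from Nat.one_ne_zero)] at h4
    rw [CenterAux.eval_level0] at h4
    have h5 : (⟨((⟨1, hp.one_lt⟩ : Fin p) : ℕ) - 1, by omega⟩ : Fin p) = ⟨0, hp.pos⟩ :=
      Fin.ext rfl
    rw [h5] at h4
    have h6 : (⟨0, by omega⟩ : Fin p) = ⟨0, hp.pos⟩ := rfl
    rw [h6] at h4
    rw [mul_one, mul_one] at h4
    exact h4
  -- Q is constant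
  have hQc := CenterAux.Q_const p k (fun α β => CenterAux.Pc p k c ⟨0, hp.pos⟩ α β) hE3
  have h00 : (⟨0, hp.pos⟩ : Fin p) = 0 := by ext; simp
  rw [h00] at hQc
  set c₀ : k := CenterAux.Pc p k c 0 0 0 with hc₀
  -- coefficients at level 0
  have claim0 : ∀ v : Fin p × Fin p, c ((0 : Fin p), v)
      = if v = (0, 0) then c₀ else 0 := by
    have hd := CenterAux.poly2 p k
      (fun v => c ((0 : Fin p), v) - (if v = ((0 : Fin p), (0 : Fin p)) then c₀ else 0)) ?_
    · intro v
      have := hd v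
      rwa [sub_eq_zero] at this
    · intro α β
      have hsplit : ∑ v : Fin p × Fin p,
          (c ((0 : Fin p), v) - (if v = ((0 : Fin p), (0 : Fin p)) then c₀ else 0)) *
            CenterAux.ck p k α ^ (v.1 : ℕ) * CenterAux.ck p k β ^ (v.2 : ℕ)
          = (∑ v : Fin p × Fin p, c ((0 : Fin p), v) *
              CenterAux.ck p k α ^ (v.1 : ℕ) * CenterAux.ck p k β ^ (v.2 : ℕ))
            - ∑ v : Fin p × Fin p, (if v = ((0 : Fin p), (0 : Fin p)) then c₀ else 0) *
              CenterAux.ck p k α ^ (v.1 : ℕ) * CenterAux.ck p k β ^ (v.2 : ℕ) := by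
        rw [← Finset.sum_sub_distrib]
        exact Finset.sum_congr rfl fun v _ => by ring
      rw [hsplit]
      have hs2 : ∑ v : Fin p × Fin p, (if v = ((0 : Fin p), (0 : Fin p)) then c₀ else 0) *
          CenterAux.ck p k α ^ (v.1 : ℕ) * CenterAux.ck p k β ^ (v.2 : ℕ) = c₀ := by
        rw [Finset.sum_eq_single ((0 : Fin p), (0 : Fin p))]
        · rw [if_pos rfl]
          simp
        · intro v _ hv
          rw [if_neg hv, zero_mul, zero_mul]
        · intro hmem
          exact absurd (Finset.mem_univ _) hmem
      rw [hs2]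
      have hQ1 := hQc α β
      rw [show (∑ v : Fin p × Fin p, c ((0 : Fin p), v) *
          CenterAux.ck p k α ^ (v.1 : ℕ) * CenterAux.ck p k β ^ (v.2 : ℕ))
          = CenterAux.Pc p k c 0 α β from rfl, hQ1, hc₀]
      exact sub_self _
  -- assemble
  refine ⟨c₀, ?_⟩
  rw [← hc]
  have hcv : ∀ v : Fin p × Fin p × Fin p, c v • CenterAux.gmon p k v
      = if v = (0, 0, 0) then c₀ • CenterAux.gmon p k v else 0 := by
    rintro ⟨j, v⟩
    by_cases hj : j = (0 : Fin p)
    · subst hj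
      rw [claim0 v]
      by_cases hv : v = ((0 : Fin p), (0 : Fin p))
      · subst hv
        rw [if_pos rfl, if_pos rfl]
      · rw [if_neg hv, zero_smul, if_neg (by
          simp only [Prod.ext_iff]
          rintro ⟨-, h1, h2⟩
          exact hv (by rw [Prod.ext_iff]; exact ⟨h1, h2⟩))]
    · have hjv : (j : ℕ) ≠ 0 := by
        intro h0
        exact hj (Fin.ext (by simp [h0]))
      rw [claim1 j hjv v, zero_smul, if_neg (by simp [Prod.ext_iff, hj])]
  rw [Finset.sum_congr rfl (fun v _ => hcv v),
    Finset.sum_ite_eq' Finset.univ ((0, 0, 0) : Fin p × Fin p × Fin p)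
      (fun v => c₀ • CenterAux.gmon p k v), if_pos (Finset.mem_univ _)]
  have hg1 : CenterAux.gmon p k (0, 0, 0) = 1 := by
    have : CenterAux.gmon p k (0, 0, 0)
        = YA p k ^ ((0 : Fin p) : ℕ) * XA p k ^ ((0 : Fin p) : ℕ) * ZA p k ^ ((0 : Fin p) : ℕ) :=
      rfl
    rw [this]
    simp
  rw [hg1, Algebra.algebraMap_eq_smul_one]
end
end

section
/- In the algebra A, for every integer n ≥ 1 the following commutator identities hold: (i) x y^n − y^n x = n·y^n; (ii) y x^n − x^n y = −y·((x+1)^n − x^n); (iii) y z^n − z^n y = Σ_{i=1}^{n} binom(n,i) z^{n−i} y f(x)^i. -/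
noncomputable section

open scoped TensorProduct

section Aux

variable {R : Type*} [Ring R]

lemma aux_xy (x y : R) (h : x * y = y * x + y) :
    ∀ n : ℕ, x * y ^ n = y ^ n * x + n • y ^ n := by
  intro n
  induction n with
  | zero => simp
  | succ n ih =>
    have step : x * y ^ (n + 1) = (x * y ^ n) * y := by rw [pow_succ, ← mul_assoc]
    rw [step, ih, add_mul, mul_assoc, h, succ_nsmul]
    noncomm_ring

lemma aux_yx (x y : R) (h : x * y = y * x + y) :
    ∀ n : ℕ, y * x ^ n = (x - 1) ^ n * y := by
  intro n
  have hyx : y * x = (x - 1) * y := by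
    rw [sub_mul, one_mul, eq_sub_iff_add_eq, ← h]
  induction n with
  | zero => simp
  | succ n ih =>
    rw [pow_succ, ← mul_assoc, ih, mul_assoc, hyx, ← mul_assoc, ← pow_succ]

lemma aux_yx1 (x y : R) (h : x * y = y * x + y) :
    ∀ n : ℕ, y * (x + 1) ^ n = x ^ n * y := by
  intro n
  have hyx : y * (x + 1) = x * y := by rw [mul_add, mul_one, h]
  induction n with
  | zero => simp
  | succ n ih =>
    rw [pow_succ, ← mul_assoc, ih, mul_assoc, hyx, ← mul_assoc, ← pow_succ]

lemma aux_yz (y z F : R) (h : y * z = z * y + y * F) (hc : Commute z F) :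
    ∀ n : ℕ, y * z ^ n = ∑ i ∈ Finset.range (n + 1),
      n.choose i • (z ^ (n - i) * y * F ^ i) := by
  intro n
  induction n with
  | zero => simp
  | succ n ih =>
    have step : y * z ^ (n + 1) = (y * z ^ n) * z := by rw [pow_succ, ← mul_assoc]
    rw [step, ih, Finset.sum_mul]
    have key : ∀ i ∈ Finset.range (n + 1),
        n.choose i • (z ^ (n - i) * y * F ^ i) * z
          = n.choose i • (z ^ (n + 1 - i) * y * F ^ i)
            + n.choose i • (z ^ (n - i) * y * F ^ (i + 1)) := by
      intro i hi
      have hi' : i ≤ n := Nat.lt_succ_iff.mp (Finset.mem_range.mp hi)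
      have hFz : F ^ i * z = z * F ^ i := ((hc.pow_right i).symm).eq
      have hsub : n + 1 - i = (n - i) + 1 := by omega
      rw [smul_mul_assoc, mul_assoc, hFz, ← mul_assoc, mul_assoc (z ^ (n - i)) y z, h,
        hsub]
      noncomm_ring
      rw [← pow_succ', ← pow_succ, smul_add]
    rw [Finset.sum_congr rfl key, Finset.sum_add_distrib]
    have h1 : ∑ i ∈ Finset.range (n + 1), n.choose i • (z ^ (n + 1 - i) * y * F ^ i)
        = ∑ i ∈ Finset.range (n + 2), n.choose i • (z ^ (n + 1 - i) * y * F ^ i) := by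
      rw [eq_comm, Finset.sum_range_succ, Nat.choose_succ_self, zero_smul, add_zero]
    have h2 : ∑ i ∈ Finset.range (n + 1), n.choose i • (z ^ (n - i) * y * F ^ (i + 1))
        = ∑ i ∈ Finset.range (n + 2), (if i = 0 then 0 else n.choose (i - 1)) •
            (z ^ (n + 1 - i) * y * F ^ i) := by
      rw [Finset.sum_range_succ' (fun i => (if i = 0 then 0 else n.choose (i - 1)) •
            (z ^ (n + 1 - i) * y * F ^ i)) (n + 1)]
      simp
    rw [h1, h2, ← Finset.sum_add_distrib]
    refine Finset.sum_congr rfl fun i hi => ?_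
    rw [← add_smul]
    congr 1
    rcases i with _ | j
    · simp
    · simp [Nat.choose_succ_succ, Nat.add_comm]

end Aux

section Rels

variable (p : ℕ) (k : Type) [Field k]

lemma map_fpol : RingQuot.mkAlgHom k (relA p k) (fpol p k (Xf k)) = fpol p k (XA p k) := by
  unfold fpol
  rw [map_sum]
  simp [XA, map_smul, map_pow]

lemma relXY : XA p k * YA p k = YA p k * XA p k + YA p k := by
  have h := RingQuot.mkAlgHom_rel k
    (show relA p k (Xf k * Yf k - Yf k * Xf k - Yf k) 0 from ⟨rfl, Or.inl rfl⟩)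
  simp only [map_sub, map_mul, map_zero] at h
  have h2 := sub_eq_zero.mp h
  rw [sub_eq_iff_eq_add] at h2
  simpa [XA, YA, add_comm] using h2

lemma relXZ : XA p k * ZA p k = ZA p k * XA p k := by
  have h := RingQuot.mkAlgHom_rel k
    (show relA p k (Xf k * Zf k - Zf k * Xf k) 0 from ⟨rfl, Or.inr (Or.inl rfl)⟩)
  simp only [map_sub, map_mul, map_zero] at h
  have h2 := sub_eq_zero.mp h
  simpa [XA, ZA] using h2

lemma relYZ : YA p k * ZA p k = ZA p k * YA p k + YA p k * fpol p k (XA p k) := by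
  have h := RingQuot.mkAlgHom_rel k
    (show relA p k (Yf k * Zf k - Zf k * Yf k - Yf k * fpol p k (Xf k)) 0 from
      ⟨rfl, Or.inr (Or.inr (Or.inl rfl))⟩)
  simp only [map_sub, map_mul, map_zero] at h
  have h2 := sub_eq_zero.mp h
  rw [sub_eq_iff_eq_add, map_fpol] at h2
  simpa [XA, YA, ZA, add_comm] using h2

lemma commZF : Commute (ZA p k) (fpol p k (XA p k)) := by
  have hzx : Commute (ZA p k) (XA p k) := (relXZ p k).symm
  unfold fpol
  exact Commute.sum_right _ _ _ (fun i _ => ((hzx.pow_right i).smul_right _))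

end Rels

/-- In the algebra `A`, for every integer `n ≥ 1`:
(i) `x y^n − y^n x = n·y^n`;
(ii) `y x^n − x^n y = −y·((x+1)^n − x^n)`;
(iii) `y z^n − z^n y = Σ_{i=1}^{n} binom(n,i) z^{n−i} y f(x)^i`. -/
theorem commutator_identities_in_A (p : ℕ) (hp : p.Prime) (k : Type) [Field k] [IsAlgClosed k]
    [CharP k p] (n : ℕ) (hn : 1 ≤ n) :
    XA p k * YA p k ^ n - YA p k ^ n * XA p k = n • YA p k ^ n ∧
    YA p k * XA p k ^ n - XA p k ^ n * YA p k =
      -(YA p k * ((XA p k + 1) ^ n - XA p k ^ n)) ∧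
    YA p k * ZA p k ^ n - ZA p k ^ n * YA p k =
      ∑ i ∈ Finset.Icc 1 n,
        n.choose i • (ZA p k ^ (n - i) * YA p k * fpol p k (XA p k) ^ i) := by
  set x := XA p k
  set y := YA p k
  set z := ZA p k
  set F := fpol p k (XA p k) with hF
  have hxy : x * y = y * x + y := relXY p k
  have hyz : y * z = z * y + y * F := relYZ p k
  have hczf : Commute z F := commZF p k
  refine ⟨?_, ?_, ?_⟩
  · rw [aux_xy x y hxy n]; abel
  · rw [aux_yx x y hxy n, mul_sub, aux_yx1 x y hxy n, aux_yx x y hxy n, neg_sub]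
  · rw [aux_yz y z F hyz hczf n]
    rw [Finset.sum_range_succ' (fun i => n.choose i • (z ^ (n - i) * y * F ^ i)) n]
    simp only [Nat.choose_zero_right, Nat.sub_zero, pow_zero, mul_one, one_smul]
    have hIcc : ∑ i ∈ Finset.Icc 1 n, n.choose i • (z ^ (n - i) * y * F ^ i)
        = ∑ i ∈ Finset.range n, n.choose (i + 1) • (z ^ (n - (i + 1)) * y * F ^ (i + 1)) := by
      rw [← Finset.Ico_add_one_right_eq_Icc, Finset.sum_Ico_eq_sum_range]
      simp [Nat.add_comm]
    rw [hIcc]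
    abel
end
end

section
/- Suppose p > 2. The algebra A is not isomorphic as a k-algebra to the algebra k⟨x,y,z⟩/(xy−yx−z, xz−zx−x, yz−zy+y, x^p, y^p, z^p−z) (the algebra of type (C15)). -/
noncomputable section

open scoped TensorProduct

/-- The relations of the algebra of type (C15):
`[x,y]−z, [x,z]−x, [y,z]+y, x^p, y^p, z^p−z`. -/
def relC15 (p : ℕ) (k : Type) [Field k] :
    FreeAlgebra k (Fin 3) → FreeAlgebra k (Fin 3) → Prop := fun a b =>
  b = 0 ∧
    (a = Xf k * Yf k - Yf k * Xf k - Zf k ∨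
     a = Xf k * Zf k - Zf k * Xf k - Xf k ∨
     a = Yf k * Zf k - Zf k * Yf k + Yf k ∨
     a = Xf k ^ p ∨
     a = Yf k ^ p ∨
     a = Zf k ^ p - Zf k)

/-- The algebra of type (C15). -/
abbrev AlgC15 (p : ℕ) (k : Type) [Field k] := RingQuot (relC15 p k)


section Aux

variable (p : ℕ) (k : Type) [Field k]

/-- The algebra map from the free algebra to `k` sending `x ↦ a`, `y ↦ 0`, `z ↦ 0`. -/
def charF (a : k) : FreeAlgebra k (Fin 3) →ₐ[k] k :=
  FreeAlgebra.lift k ![a, 0, 0]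

lemma charF_X (a : k) : charF k a (Xf k) = a := by
  simp [charF, Xf, FreeAlgebra.lift_ι_apply]

lemma charF_Y (a : k) : charF k a (Yf k) = 0 := by
  simp [charF, Yf, FreeAlgebra.lift_ι_apply]

lemma charF_Z (a : k) : charF k a (Zf k) = 0 := by
  simp [charF, Zf, FreeAlgebra.lift_ι_apply]

lemma charF_rel (a : k) (hp : p ≠ 0) (ha : a ^ p = a) :
    ∀ x y, relA p k x y → charF k a x = charF k a y := by
  rintro x y ⟨rfl, h⟩
  rcases h with rfl | rfl | rfl | rfl | rfl | rfl <;>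
    simp [map_sub, map_mul, map_pow, charF_X, charF_Y, charF_Z, ha, zero_pow hp]

/-- A character of `A` determined by `x ↦ a`. -/
def charA (a : k) (hp : p ≠ 0) (ha : a ^ p = a) : AlgA p k →ₐ[k] k :=
  RingQuot.liftAlgHom k ⟨charF k a, charF_rel p k a hp ha⟩

lemma charA_X (a : k) (hp : p ≠ 0) (ha : a ^ p = a) :
    charA p k a hp ha (XA p k) = a := by
  rw [XA, charA, RingQuot.liftAlgHom_mkAlgHom_apply]
  exact charF_X k a

lemma C15_rel_zero {w : FreeAlgebra k (Fin 3)} (h : relC15 p k w 0) :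
    RingQuot.mkAlgHom k (relC15 p k) w = 0 := by
  have := RingQuot.mkAlgHom_rel k h
  simpa using this

lemma C15_char_vanish (ψ : AlgC15 p k →ₐ[k] k) :
    ψ (RingQuot.mkAlgHom k (relC15 p k) (Xf k)) = 0 ∧
    ψ (RingQuot.mkAlgHom k (relC15 p k) (Yf k)) = 0 ∧
    ψ (RingQuot.mkAlgHom k (relC15 p k) (Zf k)) = 0 := by
  set x := ψ (RingQuot.mkAlgHom k (relC15 p k) (Xf k)) with hx
  set y := ψ (RingQuot.mkAlgHom k (relC15 p k) (Yf k)) with hy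
  set z := ψ (RingQuot.mkAlgHom k (relC15 p k) (Zf k)) with hz
  have h1 : x * y - y * x - z = 0 := by
    have := C15_rel_zero p k (w := Xf k * Yf k - Yf k * Xf k - Zf k) ⟨rfl, Or.inl rfl⟩
    have := congrArg ψ this
    simpa [map_sub, map_mul, ← hx, ← hy, ← hz] using this
  have hz0 : z = 0 := by linear_combination -h1
  have h2 : x * z - z * x - x = 0 := by
    have := C15_rel_zero p k (w := Xf k * Zf k - Zf k * Xf k - Xf k)
      ⟨rfl, Or.inr (Or.inl rfl)⟩
    have := congrArg ψ this
    simpa [map_sub, map_mul, ← hx, ← hy, ← hz] using this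
  have hx0 : x = 0 := by linear_combination -h2
  have h3 : y * z - z * y + y = 0 := by
    have := C15_rel_zero p k (w := Yf k * Zf k - Zf k * Yf k + Yf k)
      ⟨rfl, Or.inr (Or.inr (Or.inl rfl))⟩
    have := congrArg ψ this
    simpa [map_sub, map_add, map_mul, ← hx, ← hy, ← hz] using this
  have hy0 : y = 0 := by linear_combination h3
  exact ⟨hx0, hy0, hz0⟩

lemma C15_char_unique (ψ₁ ψ₂ : AlgC15 p k →ₐ[k] k) : ψ₁ = ψ₂ := by
  apply RingQuot.ringQuot_ext'
  apply FreeAlgebra.hom_ext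
  funext i
  obtain ⟨h1x, h1y, h1z⟩ := C15_char_vanish p k ψ₁
  obtain ⟨h2x, h2y, h2z⟩ := C15_char_vanish p k ψ₂
  fin_cases i <;>
    simp only [Function.comp_apply, AlgHom.coe_comp] <;>
    [skip; skip; skip]
  · exact h1x.trans h2x.symm
  · exact h1y.trans h2y.symm
  · exact h1z.trans h2z.symm

end Aux

/-- For `p > 2`, the algebra `A` is not isomorphic as a `k`-algebra to the algebra
`k⟨x,y,z⟩/(xy−yx−z, xz−zx−x, yz−zy+y, x^p, y^p, z^p−z)` of type (C15). -/
theorem A_not_iso_C15 (p : ℕ) (hp : p.Prime) (hp2 : 2 < p) (k : Type) [Field k]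
    [IsAlgClosed k] [CharP k p] :
    IsEmpty (AlgA p k ≃ₐ[k] AlgC15 p k) := by
  have hp0 : p ≠ 0 := hp.pos.ne'
  have h1 : (1 : k) ^ p = 1 := one_pow p
  have h0 : (0 : k) ^ p = 0 := zero_pow hp0
  constructor
  intro e
  have key := C15_char_unique p k
    ((charA p k 0 hp0 h0).comp e.symm.toAlgHom)
    ((charA p k 1 hp0 h1).comp e.symm.toAlgHom)
  have := congrArg (fun ψ => ψ (e (XA p k))) key
  simp only [AlgHom.coe_comp, Function.comp_apply, AlgEquiv.toAlgHom_eq_coe,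
    AlgHom.coe_coe, AlgEquiv.coe_algHom, AlgEquiv.symm_apply_apply, charA_X] at this
  exact zero_ne_one this
end
end

section
/- For every λ ∈ k with λ ≠ 0 and λ^{p−1} = δ where δ = 1 or δ = −1, the algebra A is not isomorphic as a k-algebra to C(λ,δ) := k⟨x,y,z⟩/(xy−yx, xz−zx−λx, yz−zy−λ^{−1}y, x^p, y^p, z^p−δz) (the algebra of type (C16)). -/
noncomputable section

open scoped TensorProduct

/-- The relations of the algebra of type (C16) with parameter `lam`:
`[x,y], [x,z]−λx, [y,z]−λ⁻¹y, x^p, y^p, z^p−δz` where `δ = λ^{p−1}`. -/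
def relC16 (p : ℕ) (k : Type) [Field k] (lam : k) :
    FreeAlgebra k (Fin 3) → FreeAlgebra k (Fin 3) → Prop := fun a b =>
  b = 0 ∧
    (a = Xf k * Yf k - Yf k * Xf k ∨
     a = Xf k * Zf k - Zf k * Xf k - lam • Xf k ∨
     a = Yf k * Zf k - Zf k * Yf k - lam⁻¹ • Yf k ∨
     a = Xf k ^ p ∨
     a = Yf k ^ p ∨
     a = Zf k ^ p - (lam ^ (p - 1)) • Zf k)

/-- The algebra `C(λ,δ)` of type (C16), with `δ = λ^{p−1}`. -/
abbrev AlgC16 (p : ℕ) (k : Type) [Field k] (lam : k) := RingQuot (relC16 p k lam)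

/-- For every `λ ∈ k` with `λ ≠ 0` and `λ^{p−1} = δ` where `δ = 1` or `δ = −1`, the algebra
`A` is not isomorphic as a `k`-algebra to
`C(λ,δ) = k⟨x,y,z⟩/(xy−yx, xz−zx−λx, yz−zy−λ⁻¹y, x^p, y^p, z^p−δz)` of type (C16). -/
theorem A_not_iso_C16 (p : ℕ) (hp : p.Prime) (k : Type) [Field k] [IsAlgClosed k]
    [CharP k p] (lam : k) (hlam : lam ≠ 0)
    (hdelta : lam ^ (p - 1) = 1 ∨ lam ^ (p - 1) = -1) :
    IsEmpty (AlgA p k ≃ₐ[k] AlgC16 p k lam) := by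
  classical
  haveI : Fact p.Prime := ⟨hp⟩
  have hp0 : p ≠ 0 := hp.ne_zero
  have hp1 : p ≠ 1 := hp.ne_one
  constructor
  intro φ
  -- the natural map ZMod p → k
  set ι : ZMod p →+* k := ZMod.castHom dvd_rfl k with hι
  have hιinj : Function.Injective ι := (ZMod.castHom dvd_rfl k).injective
  -- characters of A
  have hchar : ∀ a c : ZMod p, ∃ χ : AlgA p k →ₐ[k] k,
      χ (XA p k) = ι a ∧ χ (ZA p k) = ι c := by
    intro a c
    set g : Fin 3 → k := ![ι a, 0, ι c] with hg
    set L : FreeAlgebra k (Fin 3) →ₐ[k] k := FreeAlgebra.lift k g with hL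
    have hx : L (Xf k) = ι a := by simp [hL, Xf, hg]
    have hy : L (Yf k) = 0 := by simp [hL, Yf, hg]
    have hz : L (Zf k) = ι c := by simp [hL, Zf, hg]
    have hap : (ι a) ^ p = ι a := by rw [← map_pow, ZMod.pow_card]
    have hcp : (ι c) ^ p = ι c := by rw [← map_pow, ZMod.pow_card]
    have hrel : ∀ ⦃u v⦄, relA p k u v → L u = L v := by
      rintro u v ⟨rfl, h⟩
      rcases h with rfl | rfl | rfl | rfl | rfl | rfl <;>
        simp [map_sub, map_mul, map_pow, hx, hy, hz, hap, hcp, hp0, mul_comm]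
    refine ⟨RingQuot.liftAlgHom k ⟨L, hrel⟩, ?_, ?_⟩
    · rw [XA, RingQuot.liftAlgHom_mkAlgHom_apply]; exact hx
    · rw [ZA, RingQuot.liftAlgHom_mkAlgHom_apply]; exact hz
  choose χ hχX hχZ using hchar
  -- generators of C16
  set XC : AlgC16 p k lam := RingQuot.mkAlgHom k (relC16 p k lam) (Xf k) with hXC
  set YC : AlgC16 p k lam := RingQuot.mkAlgHom k (relC16 p k lam) (Yf k) with hYC
  set ZC : AlgC16 p k lam := RingQuot.mkAlgHom k (relC16 p k lam) (Zf k) with hZC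
  have hXp : XC ^ p = 0 := by
    have := RingQuot.mkAlgHom_rel k
      (show relC16 p k lam (Xf k ^ p) 0 from ⟨rfl, by tauto⟩)
    simpa [map_pow] using this
  have hYp : YC ^ p = 0 := by
    have := RingQuot.mkAlgHom_rel k
      (show relC16 p k lam (Yf k ^ p) 0 from ⟨rfl, by tauto⟩)
    simpa [map_pow] using this
  have hZp : ZC ^ p = (lam ^ (p - 1)) • ZC := by
    have := RingQuot.mkAlgHom_rel k
      (show relC16 p k lam (Zf k ^ p - (lam ^ (p - 1)) • Zf k) 0 from ⟨rfl, by tauto⟩)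
    rw [map_sub, map_pow, map_smul, map_zero, sub_eq_zero] at this
    exact this
  -- characters of C16 are determined by their value on ZC
  have hdet : ∀ ψ₁ ψ₂ : AlgC16 p k lam →ₐ[k] k, ψ₁ ZC = ψ₂ ZC → ψ₁ = ψ₂ := by
    intro ψ₁ ψ₂ h
    have hX : ∀ ψ : AlgC16 p k lam →ₐ[k] k, ψ XC = 0 := by
      intro ψ
      have : (ψ XC) ^ p = 0 := by rw [← map_pow, hXp, map_zero]
      exact pow_eq_zero_iff hp0 |>.mp this
    have hY : ∀ ψ : AlgC16 p k lam →ₐ[k] k, ψ YC = 0 := by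
      intro ψ
      have : (ψ YC) ^ p = 0 := by rw [← map_pow, hYp, map_zero]
      exact pow_eq_zero_iff hp0 |>.mp this
    apply RingQuot.ringQuot_ext'
    apply FreeAlgebra.hom_ext
    funext i
    fin_cases i <;> simp only [Function.comp_apply, AlgHom.comp_apply]
    · show ψ₁ XC = ψ₂ XC
      rw [hX, hX]
    · show ψ₁ YC = ψ₂ YC
      rw [hY, hY]
    · exact h
  -- the injection
  set F : ZMod p × ZMod p → k := fun v => ((χ v.1 v.2).comp φ.symm.toAlgHom) ZC with hF
  have hFinj : Function.Injective F := by
    intro v w h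
    have hψ : (χ v.1 v.2).comp φ.symm.toAlgHom = (χ w.1 w.2).comp φ.symm.toAlgHom :=
      hdet _ _ h
    have key : ∀ t : AlgA p k, χ v.1 v.2 t = χ w.1 w.2 t := by
      intro t
      have h3 := AlgHom.congr_fun hψ (φ t)
      simpa using h3
    have h1 : ι v.1 = ι w.1 := by rw [← hχX v.1 v.2, ← hχX w.1 w.2, key]
    have h2 : ι v.2 = ι w.2 := by rw [← hχZ v.1 v.2, ← hχZ w.1 w.2, key]
    exact Prod.ext (hιinj h1) (hιinj h2)
  have hFroot : ∀ v, (F v) ^ p = lam ^ (p - 1) * F v := by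
    intro v
    rw [hF]
    simp only [← map_pow, hZp, map_smul, smul_eq_mul]
  -- the polynomial X^p - δ X
  set q : Polynomial k := Polynomial.X ^ p - Polynomial.C (lam ^ (p - 1)) * Polynomial.X
    with hq
  have hq0 : q ≠ 0 := by
    intro h
    have h2 : q.coeff p = 0 := by rw [h, Polynomial.coeff_zero]
    rw [hq, Polynomial.coeff_sub, Polynomial.coeff_X_pow, Polynomial.coeff_C_mul,
      Polynomial.coeff_X_of_ne_one hp1] at h2
    simp at h2
  have hmem : ∀ v, F v ∈ q.roots.toFinset := by
    intro v
    rw [Multiset.mem_toFinset, Polynomial.mem_roots hq0]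
    simp only [Polynomial.IsRoot, hq, Polynomial.eval_sub, Polynomial.eval_pow,
      Polynomial.eval_mul, Polynomial.eval_C, Polynomial.eval_X]
    rw [hFroot v, sub_self]
  have hcard : (Finset.univ : Finset (ZMod p × ZMod p)).card ≤ q.roots.toFinset.card := by
    apply Finset.card_le_card_of_injOn F (fun v _ => hmem v) hFinj.injOn
  have hdeg : q.natDegree ≤ p := by
    apply le_trans (Polynomial.natDegree_sub_le _ _)
    simp only [Polynomial.natDegree_X_pow, max_le_iff, le_refl, true_and]
    exact le_trans (Polynomial.natDegree_mul_le) (by simp [hp.one_lt.le])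
  have hle : p * p ≤ p := by
    calc p * p = (Finset.univ : Finset (ZMod p × ZMod p)).card := by
          simp [ZMod.card]
      _ ≤ q.roots.toFinset.card := hcard
      _ ≤ Multiset.card q.roots := q.roots.toFinset_card_le
      _ ≤ q.natDegree := q.card_roots'
      _ ≤ p := hdeg
  have := hp.two_le
  nlinarith
end
end

section
/- In the algebra K ⊗_k K, the element x⊗1 + 1⊗x commutes with ω(y), i.e. (x⊗1 + 1⊗x)·ω(y) − ω(y)·(x⊗1 + 1⊗x) = 0. -/
noncomputable section

open scoped TensorProduct

/-- `ω(t) = Σ_{i=1}^{p-1} c_i (t^i ⊗ t^{p-i})` where `c_i` is the image in `k` of the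
integer `(p-1)!/(i!(p-i)!)`. -/
def omg (p : ℕ) (k : Type) [Field k] {R : Type} [Ring R] [Algebra k R] (t : R) :
    TensorProduct k R R :=
  ∑ i ∈ Finset.Icc 1 (p - 1),
    ((((p - 1).factorial / (i.factorial * (p - i).factorial) : ℕ) : k)) •
      ((t ^ i) ⊗ₜ[k] (t ^ (p - i)))

/-- The generators of the free algebra on two variables. -/
def Xg (k : Type) [Field k] : FreeAlgebra k (Fin 2) := FreeAlgebra.ι k 0
def Yg (k : Type) [Field k] : FreeAlgebra k (Fin 2) := FreeAlgebra.ι k 1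

/-- The relations of the algebra `K = k⟨x,y⟩/(xy−yx−y, x^p−x, y^p)`. -/
def relK (p : ℕ) (k : Type) [Field k] :
    FreeAlgebra k (Fin 2) → FreeAlgebra k (Fin 2) → Prop := fun a b =>
  b = 0 ∧
    (a = Xg k * Yg k - Yg k * Xg k - Yg k ∨
     a = Xg k ^ p - Xg k ∨
     a = Yg k ^ p)

/-- The algebra `K = k⟨x,y⟩/(xy−yx−y, x^p−x, y^p)`. -/
abbrev AlgK (p : ℕ) (k : Type) [Field k] := RingQuot (relK p k)

/-- The image of `x` in `K`. -/
def XK (p : ℕ) (k : Type) [Field k] : AlgK p k := RingQuot.mkAlgHom k (relK p k) (Xg k)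
/-- The image of `y` in `K`. -/
def YK (p : ℕ) (k : Type) [Field k] : AlgK p k := RingQuot.mkAlgHom k (relK p k) (Yg k)


lemma xy_rel (p : ℕ) (k : Type) [Field k] :
    XK p k * YK p k - YK p k * XK p k = YK p k := by
  have h : RingQuot.mkAlgHom k (relK p k) (Xg k * Yg k - Yg k * Xg k - Yg k) =
      RingQuot.mkAlgHom k (relK p k) 0 :=
    RingQuot.mkAlgHom_rel k ⟨rfl, Or.inl rfl⟩
  simp only [map_sub, map_mul, map_zero] at h
  simp only [XK, YK]
  exact sub_eq_zero.mp h

lemma x_pow_comm (p : ℕ) (k : Type) [Field k] (i : ℕ) :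
    XK p k * YK p k ^ i = YK p k ^ i * XK p k + (i : k) • YK p k ^ i := by
  set X := XK p k
  set Y := YK p k
  have hxy : X * Y = Y * X + Y := by
    have h := xy_rel p k
    rw [sub_eq_iff_eq_add'] at h
    rw [h, add_comm]
  induction i with
  | zero => simp
  | succ n ih =>
    calc X * Y ^ (n + 1) = (X * Y) * Y ^ n := by rw [pow_succ', mul_assoc]
      _ = Y * (X * Y ^ n) + Y ^ (n + 1) := by
          rw [hxy, add_mul, mul_assoc, pow_succ']
      _ = Y * (Y ^ n * X + (n : k) • Y ^ n) + Y ^ (n + 1) := by rw [ih]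
      _ = Y ^ (n + 1) * X + ((n : k) • Y ^ (n + 1) + Y ^ (n + 1)) := by
          rw [mul_add, ← mul_assoc, ← pow_succ', mul_smul_comm, ← pow_succ', add_assoc]
      _ = Y ^ (n + 1) * X + ((n : ℕ) + 1 : k) • Y ^ (n + 1) := by
          rw [add_smul, one_smul]
      _ = Y ^ (n + 1) * X + ((n + 1 : ℕ) : k) • Y ^ (n + 1) := by push_cast; ring_nf

/-- In the algebra `K ⊗_k K`, the element `x⊗1 + 1⊗x` commutes with `ω(y)`. -/
theorem x_tensor_commutes_with_omega_y (p : ℕ) (hp : p.Prime) (k : Type) [Field k]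
    [IsAlgClosed k] [CharP k p] :
    (XK p k ⊗ₜ[k] (1 : AlgK p k) + (1 : AlgK p k) ⊗ₜ[k] XK p k) * omg p k (YK p k) -
      omg p k (YK p k) * (XK p k ⊗ₜ[k] (1 : AlgK p k) + (1 : AlgK p k) ⊗ₜ[k] XK p k) = 0 := by
  rw [omg, Finset.mul_sum, Finset.sum_mul, ← Finset.sum_sub_distrib (G := TensorProduct k (AlgK p k) (AlgK p k))]
  apply Finset.sum_eq_zero
  intro i hi
  rw [Finset.mem_Icc] at hi
  have hip : ((i : k) + ((p - i : ℕ) : k)) = 0 := by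
    have h2 := hp.two_le
    have hadd : i + (p - i) = p := by omega
    rw [← Nat.cast_add, hadd, CharP.cast_eq_zero]
  rw [mul_smul_comm, smul_mul_assoc, ← smul_sub (M := k) (A := TensorProduct k (AlgK p k) (AlgK p k))]
  have key : (XK p k ⊗ₜ[k] (1 : AlgK p k) + (1 : AlgK p k) ⊗ₜ[k] XK p k)
        * ((YK p k ^ i) ⊗ₜ[k] (YK p k ^ (p - i)))
      - ((YK p k ^ i) ⊗ₜ[k] (YK p k ^ (p - i)))
        * (XK p k ⊗ₜ[k] (1 : AlgK p k) + (1 : AlgK p k) ⊗ₜ[k] XK p k) = 0 := by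
    rw [add_mul, mul_add, Algebra.TensorProduct.tmul_mul_tmul,
      Algebra.TensorProduct.tmul_mul_tmul, Algebra.TensorProduct.tmul_mul_tmul,
      Algebra.TensorProduct.tmul_mul_tmul, one_mul, mul_one, one_mul, mul_one,
      x_pow_comm p k i, x_pow_comm p k (p - i)]
    simp only [TensorProduct.add_tmul, TensorProduct.tmul_add, ← TensorProduct.smul_tmul',
      TensorProduct.tmul_smul]
    rw [add_add_add_comm, add_sub_cancel_left (_ : TensorProduct k (AlgK p k) (AlgK p k)) _,
      ← add_smul (_ : k) _ (_ : TensorProduct k (AlgK p k) (AlgK p k)), hip, zero_smul k]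
    all_goals exact hip
  rw [key, smul_zero]
end
end

section
/- In the algebra K ⊗_k K, the following identity holds: (y⊗1 + 1⊗y)·ω(x) − ω(x)·(y⊗1 + 1⊗y) = (y⊗1 + 1⊗y)·f(x⊗1 + 1⊗x) − (y·f(x))⊗1 − 1⊗(y·f(x)), where f(t) = Σ_{i=1}^{p−1} (−1)^{i−1} (p−i)^{−1} t^i. -/
noncomputable section

open scoped TensorProduct

section Helper

set_option linter.unusedSectionVars false

variable {p : ℕ} {k : Type} [Field k] [CharP k p]

lemma castk_ne_zero (hp : p.Prime) {i : ℕ} (h1 : 1 ≤ i) (h2 : i ≤ p - 1) : ((i : ℕ) : k) ≠ 0 := by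
  have := hp.one_lt
  rw [Ne, CharP.cast_eq_zero_iff k p]
  exact Nat.not_dvd_of_pos_of_lt h1 (by omega)

lemma neg_one_pow_p_sub_one (hp : p.Prime) : ((-1 : k)) ^ (p - 1) = 1 := by
  haveI := Fact.mk hp
  have h1 := hp.one_lt
  have h : ((-1 : k)) ^ (p - 1) * (-1) = -1 := by
    rw [← pow_succ, show p - 1 + 1 = p by omega]
    exact neg_one_pow_char k p
  exact mul_right_cancel₀ (by norm_num : (-1 : k) ≠ 0) (h.trans (one_mul (-1:k)).symm)

lemma choose_castk (hp : p.Prime) : ∀ j, j ≤ p - 1 → (((p-1).choose j : ℕ) : k) = (-1) ^ j := by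
  intro j
  induction j with
  | zero => simp
  | succ j ih =>
    intro hj
    have h1 := hp.one_lt
    have hj' : j ≤ p - 1 := by omega
    have hne : ((j : k) + 1) ≠ 0 := by
      have := castk_ne_zero (k := k) hp (i := j+1) (by omega) hj
      push_cast at this; exact this
    have e1 : (((p-1).choose (j+1) : ℕ) : k) * ((j:k)+1)
        = (((p-1).choose j : ℕ) : k) * (((p - 1 - j : ℕ)) : k) := by
      have := Nat.choose_succ_right_eq (p-1) j
      exact_mod_cast congrArg (Nat.cast : ℕ → k) this
    have e2 : (((p - 1 - j : ℕ)) : k) = -((j:k)+1) := by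
      rw [show p - 1 - j = p - (j+1) by omega, Nat.cast_sub (by omega), CharP.cast_eq_zero k p]
      push_cast; ring
    apply mul_right_cancel₀ hne
    rw [e1, e2, ih hj']
    ring

lemma dlem' (hp : p.Prime) (m : ℕ) (hm : 1 ≤ m) :
    ∀ j, j + m ≤ p - 1 →
    (-1:k) ^ (p - m - 1) * ((j + m : ℕ) : k) * (((p-m).choose j : ℕ) : k)
      = (-1:k) ^ (j + m - 1) * ((p - m : ℕ) : k) * (((j+m).choose j : ℕ) : k) := by
  have h1 := hp.one_lt
  intro j
  induction j with
  | zero =>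
    intro hj
    have e2 : (((p - m : ℕ)) : k) = -((m:ℕ):k) := by
      rw [Nat.cast_sub (by omega), CharP.cast_eq_zero k p]; ring
    have hsign : (-1:k) ^ (p - m - 1) * (-1:k) ^ m = 1 := by
      rw [← pow_add, show p - m - 1 + m = p - 1 by omega]
      exact neg_one_pow_p_sub_one hp
    have hsq : ((-1:k) ^ m) * ((-1:k) ^ m) = 1 := by
      rw [← pow_add, ← two_mul, pow_mul]; norm_num
    have hs2 : (-1:k) ^ (p - m - 1) = (-1:k) ^ m := by
      calc (-1:k) ^ (p-m-1) = (-1:k) ^ (p-m-1) * ((-1:k)^m * (-1:k)^m) := by rw [hsq, mul_one]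
        _ = ((-1:k) ^ (p-m-1) * (-1:k)^m) * (-1:k)^m := by ring
        _ = (-1:k)^m := by rw [hsign, one_mul]
    have hm1 : (-1:k) ^ (m - 1) * (-1:k) = (-1:k)^m := by
      rw [← pow_succ, show m - 1 + 1 = m by omega]
    simp only [Nat.zero_add, Nat.choose_zero_right, Nat.cast_one, mul_one, e2, hs2]
    rw [← hm1]; ring
  | succ j ih =>
    intro hj
    have ihj := ih (by omega)
    have hne : ((j : k) + 1) ≠ 0 := by
      have := castk_ne_zero (k := k) hp (i := j+1) (by omega) (by omega)
      push_cast at this; exact this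
    -- N1 : C(p-m, j+1) * (j+1) = C(p-m, j) * (p-m-j)
    have e1 : (((p-m).choose (j+1) : ℕ) : k) * ((j:k)+1)
        = (((p-m).choose j : ℕ) : k) * (((p - m - j : ℕ)) : k) := by
      exact_mod_cast congrArg (Nat.cast : ℕ → k) (Nat.choose_succ_right_eq (p-m) j)
    have e2 : (((p - m - j : ℕ)) : k) = -(((m + j : ℕ)):k) := by
      rw [show p - m - j = p - (m+j) by omega, Nat.cast_sub (by omega), CharP.cast_eq_zero k p]
      ring
    -- N2 : (j+m+1) * C(j+m, j) = C(j+m+1, j+1) * (j+1)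
    have e3 : (((j+m : ℕ):k) + 1) * (((j+m).choose j : ℕ) : k)
        = (((j+m+1).choose (j+1) : ℕ) : k) * ((j:k)+1) := by
      have h0 := Nat.add_one_mul_choose_eq (j+m) j
      have h0' := congrArg (Nat.cast : ℕ → k) h0
      push_cast at h0' ⊢
      linear_combination h0'
    have hsgn : (-1:k) ^ (j + 1 + m - 1) = -((-1:k) ^ (j + m - 1)) := by
      rw [show j + 1 + m - 1 = (j + m - 1) + 1 by omega, pow_succ]; ring
    apply mul_right_cancel₀ hne
    push_cast
    rw [show ((j:k) + 1 + m) = ((j+m:ℕ):k) + 1 by push_cast; ring]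
    calc (-1:k) ^ (p - m - 1) * (((j+m:ℕ):k) + 1) * (((p-m).choose (j+1) : ℕ):k) * ((j:k)+1)
        = ((((p-m).choose (j+1) : ℕ) : k) * ((j:k)+1)) * ((-1:k) ^ (p - m - 1) * (((j+m:ℕ):k) + 1)) := by ring
      _ = ((((p-m).choose j : ℕ) : k) * (-(((m + j : ℕ)):k))) * ((-1:k) ^ (p - m - 1) * (((j+m:ℕ):k) + 1)) := by rw [e1, e2]
      _ = -((((j+m:ℕ):k) + 1) * ((-1:k) ^ (p - m - 1) * (((j+m):ℕ):k) * (((p-m).choose j : ℕ):k))) := by push_cast; ring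
      _ = -((((j+m:ℕ):k) + 1) * ((-1:k) ^ (j + m - 1) * ((p - m : ℕ) : k) * (((j+m).choose j : ℕ) : k))) := by rw [ihj]
      _ = (-((-1:k) ^ (j + m - 1))) * ((p - m : ℕ) : k) * ((((j+m:ℕ):k) + 1) * (((j+m).choose j : ℕ) : k)) := by ring
      _ = (-((-1:k) ^ (j + m - 1))) * ((p - m : ℕ) : k) * ((((j+m+1).choose (j+1) : ℕ) : k) * ((j:k)+1)) := by rw [e3]
      _ = (-1:k) ^ (j + 1 + m - 1) * ((p - m:ℕ) : k) * (((j+1+m).choose (j+1):ℕ) : k) * ((j:k)+1) := by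
          rw [hsgn, show j+1+m = j+m+1 by omega]; ring

lemma dcoef (hp : p.Prime) (m j : ℕ) (hm : 1 ≤ m) (hj : j + m ≤ p - 1) :
    ((-1:k) ^ (p - m - 1) * ((p - m : ℕ) : k)⁻¹) * (((p-m).choose j : ℕ) : k)
      = ((-1:k) ^ (j + m - 1) * ((j + m : ℕ) : k)⁻¹) * (((j+m).choose j : ℕ) : k) := by
  have h1 := hp.one_lt
  have hA : ((p - m : ℕ) : k) ≠ 0 := castk_ne_zero hp (by omega) (by omega)
  have hB : ((j + m : ℕ) : k) ≠ 0 := castk_ne_zero hp (by omega) (by omega)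
  have h := dlem' (k := k) hp m hm j hj
  rw [show ((-1:k) ^ (p - m - 1) * ((p - m : ℕ) : k)⁻¹) * (((p-m).choose j : ℕ) : k)
      = ((-1:k) ^ (p - m - 1) * (((p-m).choose j : ℕ) : k)) / ((p - m : ℕ) : k) by ring,
    show ((-1:k) ^ (j + m - 1) * ((j + m : ℕ) : k)⁻¹) * (((j+m).choose j : ℕ) : k)
      = ((-1:k) ^ (j + m - 1) * (((j+m).choose j : ℕ) : k)) / ((j + m : ℕ) : k) by ring,
    div_eq_div_iff hA hB]
  linear_combination h

lemma cval (hp : p.Prime) (i : ℕ) (h1 : 1 ≤ i) (h2 : i ≤ p - 1) :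
    ((((p-1).factorial / (i.factorial * (p - i).factorial) : ℕ)) : k)
      = (-1:k) ^ (i - 1) * ((i : ℕ) : k)⁻¹ := by
  have hlt := hp.one_lt
  have hfac : (p-1).choose (i-1) * (i-1).factorial * (p-i).factorial = (p-1).factorial := by
    have := Nat.choose_mul_factorial_mul_factorial (show i-1 ≤ p-1 by omega)
    rwa [show p-1-(i-1) = p-i by omega] at this
  have hifac : i.factorial = i * (i-1).factorial := by
    conv_lhs => rw [show i = (i-1)+1 by omega]
    rw [Nat.factorial_succ, show i - 1 + 1 = i by omega]
  have hdiv : (p-1).factorial / (i.factorial * (p - i).factorial) = (p-1).choose (i-1) / i := by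
    rw [← hfac, hifac, mul_assoc, mul_assoc,
      Nat.mul_div_mul_right _ _ (by positivity : 0 < (i-1).factorial * (p-i).factorial)]
  have hdvd : i ∣ (p-1).choose (i-1) := by
    have h := Nat.add_one_mul_choose_eq (p-1) (i-1)
    rw [show (p-1)+1 = p by omega, show (i-1)+1 = i by omega] at h
    have cop : Nat.Coprime i p := Nat.coprime_comm.mp ((hp.coprime_iff_not_dvd).2
      (Nat.not_dvd_of_pos_of_lt (by omega) (by omega)))
    exact cop.dvd_of_dvd_mul_right ⟨p.choose i, by rw [mul_comm ((p-1).choose (i-1)) p, h, mul_comm]⟩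
  have hC : ((((p-1).choose (i-1) / i : ℕ)) : k) * ((i:ℕ):k) = (-1:k) ^ (i-1) := by
    rw [← Nat.cast_mul, Nat.div_mul_cancel hdvd, choose_castk hp (i-1) (by omega)]
  have hi : ((i:ℕ):k) ≠ 0 := castk_ne_zero hp h1 h2
  rw [hdiv, eq_comm, mul_inv_eq_iff_eq_mul₀ hi, eq_comm]
  exact hC

lemma core (hp : p.Prime) {T : Type} [Ring T] [Algebra k T] (u v : T) (huv : Commute u v) :
    ∑ i ∈ Finset.Icc 1 (p-1),
      ((((p - 1).factorial / (i.factorial * (p - i).factorial) : ℕ) : k)) •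
        (((u - 1) ^ i - u ^ i) * v ^ (p - i))
    = fpol p k (u + v - 1) - fpol p k (u - 1) := by
  have hlt := hp.one_lt
  obtain ⟨a, rfl⟩ : ∃ a, u = a + 1 := ⟨u - 1, by abel⟩
  have hav : Commute a v := by
    have := huv.sub_left (Commute.one_left v); simpa using this
  simp only [add_sub_cancel_right]
  rw [show a + 1 + v - 1 = a + v by abel]
  -- Left side into double sum
  have hL : ∀ i ∈ Finset.Icc 1 (p-1),
      ((((p - 1).factorial / (i.factorial * (p - i).factorial) : ℕ) : k)) •
        ((a ^ i - (a + 1) ^ i) * v ^ (p - i))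
      = ∑ j ∈ Finset.range i,
          (-(((-1:k) ^ (i - 1) * ((i : ℕ) : k)⁻¹) * ((i.choose j : ℕ) : k))) •
            (a ^ j * v ^ (p - i)) := by
    intro i hi
    rw [Finset.mem_Icc] at hi
    rw [cval hp i hi.1 hi.2]
    have hexp : (a + 1) ^ i = (∑ j ∈ Finset.range i, a ^ j * ((i.choose j : ℕ) : T)) + a ^ i := by
      have h := (Commute.one_right a).add_pow i
      simp only [one_pow, mul_one] at h
      rw [h, Finset.sum_range_succ, Nat.choose_self, Nat.cast_one, mul_one]
    rw [hexp, show a ^ i - ((∑ j ∈ Finset.range i, a ^ j * ((i.choose j : ℕ) : T)) + a ^ i)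
        = -(∑ j ∈ Finset.range i, a ^ j * ((i.choose j : ℕ) : T)) by abel,
      neg_mul, Finset.sum_mul, smul_neg, Finset.smul_sum, ← Finset.sum_neg_distrib]
    refine Finset.sum_congr rfl fun j hj => ?_
    have hc : a ^ j * ((i.choose j : ℕ) : T) * v ^ (p - i)
        = ((i.choose j : ℕ) : k) • (a ^ j * v ^ (p - i)) := by
      rw [← (Nat.cast_commute (i.choose j) (a ^ j)).eq, mul_assoc,
        Algebra.smul_def, map_natCast]
    rw [hc, smul_smul, neg_smul]
  -- Right side into double sum
  have hR : fpol p k (a + v) - fpol p k a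
      = ∑ i ∈ Finset.Icc 1 (p-1), ∑ j ∈ Finset.range i,
          (-(((-1:k) ^ (i - 1) * ((i : ℕ) : k)⁻¹) * ((i.choose j : ℕ) : k))) •
            (a ^ j * v ^ (i - j)) := by
    rw [fpol, fpol, ← Finset.sum_sub_distrib]
    refine Finset.sum_congr rfl fun i hi => ?_
    rw [Finset.mem_Icc] at hi
    have hco : (((p - i : ℕ)) : k)⁻¹ = -((i : ℕ) : k)⁻¹ := by
      rw [Nat.cast_sub (by omega), CharP.cast_eq_zero k p, zero_sub, inv_neg]
    have hexp : (a + v) ^ i = (∑ j ∈ Finset.range i, a ^ j * v ^ (i - j) * ((i.choose j : ℕ) : T))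
        + a ^ i := by
      rw [hav.add_pow, Finset.sum_range_succ, Nat.choose_self, Nat.cast_one, mul_one,
        Nat.sub_self, pow_zero, mul_one]
    rw [hco, hexp, ← smul_sub, show (∑ j ∈ Finset.range i, a ^ j * v ^ (i - j) * ((i.choose j : ℕ) : T))
        + a ^ i - a ^ i = ∑ j ∈ Finset.range i, a ^ j * v ^ (i - j) * ((i.choose j : ℕ) : T) by abel,
      Finset.smul_sum]
    refine Finset.sum_congr rfl fun j hj => ?_
    have hc : a ^ j * v ^ (i - j) * ((i.choose j : ℕ) : T)
        = ((i.choose j : ℕ) : k) • (a ^ j * v ^ (i - j)) := by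
      rw [Algebra.smul_def, map_natCast, ← (Nat.cast_commute (i.choose j) (a ^ j * v ^ (i - j))).eq]
    rw [hc, smul_smul]
    congr 1
    ring
  rw [Finset.sum_congr rfl hL, hR, Finset.sum_sigma', Finset.sum_sigma']
  refine Finset.sum_nbij' (fun x => ⟨p - x.1 + x.2, x.2⟩) (fun x => ⟨p - x.1 + x.2, x.2⟩)
    ?_ ?_ ?_ ?_ ?_
  · rintro ⟨i, j⟩ hx
    simp only [Finset.mem_sigma, Finset.mem_Icc, Finset.mem_range] at hx ⊢
    omega
  · rintro ⟨i, j⟩ hx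
    simp only [Finset.mem_sigma, Finset.mem_Icc, Finset.mem_range] at hx ⊢
    omega
  · rintro ⟨i, j⟩ hx
    simp only [Finset.mem_sigma, Finset.mem_Icc, Finset.mem_range] at hx
    simp only [Sigma.mk.inj_iff, heq_eq_eq]
    exact ⟨by omega, trivial⟩
  · rintro ⟨i, j⟩ hx
    simp only [Finset.mem_sigma, Finset.mem_Icc, Finset.mem_range] at hx
    simp only [Sigma.mk.inj_iff, heq_eq_eq]
    exact ⟨by omega, trivial⟩
  · rintro ⟨i, j⟩ hx
    simp only [Finset.mem_sigma, Finset.mem_Icc, Finset.mem_range] at hx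
    obtain ⟨⟨hi1, hi2⟩, hj⟩ := hx
    have hm1 : 1 ≤ i - j := by omega
    have hjm : j + (i - j) ≤ p - 1 := by omega
    have hd := dcoef (k := k) hp (i - j) j hm1 hjm
    rw [show p - (i - j) = p - i + j by omega, show j + (i - j) = i by omega] at hd
    rw [show p - i + j - j = p - i by omega]
    rw [← hd]

lemma quasi_pow {R : Type} [Ring R] {y w : R} (h : y * w = (w - 1) * y) (n : ℕ) :
    y * w ^ n = (w - 1) ^ n * y := by
  induction n with
  | zero => simp
  | succ n ih =>
    rw [pow_succ, ← mul_assoc, ih, mul_assoc, h, ← mul_assoc, ← pow_succ]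

lemma quasi_fpol {R : Type} [Ring R] [Algebra k R] {y w : R} (h : y * w = (w - 1) * y) :
    y * fpol p k w = fpol p k (w - 1) * y := by
  rw [fpol, fpol, Finset.mul_sum, Finset.sum_mul]
  exact Finset.sum_congr rfl fun i _ => by
    rw [mul_smul_comm, smul_mul_assoc, quasi_pow h i]

lemma fpol_map {R S : Type} [Ring R] [Ring S] [Algebra k R] [Algebra k S]
    (φ : R →ₐ[k] S) (t : R) : φ (fpol p k t) = fpol p k (φ t) := by
  rw [fpol, fpol, map_sum]
  exact Finset.sum_congr rfl fun i _ => by rw [map_smul, map_pow]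

lemma yx_rel (p : ℕ) (k : Type) [Field k] : YK p k * XK p k = (XK p k - 1) * YK p k := by
  have h0 : RingQuot.mkAlgHom k (relK p k) (Xg k * Yg k - Yg k * Xg k - Yg k)
      = RingQuot.mkAlgHom k (relK p k) 0 :=
    RingQuot.mkAlgHom_rel k ⟨rfl, Or.inl rfl⟩
  simp only [map_sub, map_mul, map_zero] at h0
  change XK p k * YK p k - YK p k * XK p k - YK p k = 0 at h0
  rw [sub_mul, one_mul]
  rw [sub_sub, sub_eq_zero] at h0
  rw [eq_sub_iff_add_eq, ← h0]

theorem main' (hp : p.Prime) {A : Type} [Ring A] [Algebra k A] (x y : A)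
    (hyx : y * x = (x - 1) * y) :
    (y ⊗ₜ[k] (1 : A) + (1 : A) ⊗ₜ[k] y) * omg p k x -
      omg p k x * (y ⊗ₜ[k] (1 : A) + (1 : A) ⊗ₜ[k] y) =
    (y ⊗ₜ[k] (1 : A) + (1 : A) ⊗ₜ[k] y) *
        fpol p k (x ⊗ₜ[k] (1 : A) + (1 : A) ⊗ₜ[k] x) -
      (y * fpol p k x) ⊗ₜ[k] (1 : A) -
      (1 : A) ⊗ₜ[k] (y * fpol p k x) := by
  have hlt := hp.one_lt
  set φ : A →ₐ[k] TensorProduct k A A := Algebra.TensorProduct.includeLeft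
  set ψ : A →ₐ[k] TensorProduct k A A := Algebra.TensorProduct.includeRight
  have hφ : ∀ a : A, φ a = a ⊗ₜ[k] 1 := fun a => rfl
  have hψ : ∀ a : A, ψ a = 1 ⊗ₜ[k] a := fun a => rfl
  set u : TensorProduct k A A := x ⊗ₜ[k] 1 with hudef
  set v : TensorProduct k A A := 1 ⊗ₜ[k] x with hvdef
  set y1 : TensorProduct k A A := y ⊗ₜ[k] 1 with hy1def
  set y2 : TensorProduct k A A := 1 ⊗ₜ[k] y with hy2def
  have huv : Commute u v := by
    simp only [Commute, SemiconjBy, hudef, hvdef, Algebra.TensorProduct.tmul_mul_tmul,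
      one_mul, mul_one]
  have h_y1u : y1 * u = (u - 1) * y1 := by
    rw [hy1def, hudef, Algebra.TensorProduct.one_def, sub_mul,
      Algebra.TensorProduct.tmul_mul_tmul, Algebra.TensorProduct.tmul_mul_tmul,
      Algebra.TensorProduct.tmul_mul_tmul, mul_one, one_mul, ← TensorProduct.sub_tmul,
      hyx, sub_mul, one_mul]
  have h_y2v : y2 * v = (v - 1) * y2 := by
    rw [hy2def, hvdef, Algebra.TensorProduct.one_def, sub_mul,
      Algebra.TensorProduct.tmul_mul_tmul, Algebra.TensorProduct.tmul_mul_tmul,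
      Algebra.TensorProduct.tmul_mul_tmul, mul_one, one_mul, ← TensorProduct.tmul_sub,
      hyx, sub_mul, one_mul]
  have h_y1v : Commute y1 v := by
    simp only [Commute, SemiconjBy, hy1def, hvdef, Algebra.TensorProduct.tmul_mul_tmul,
      one_mul, mul_one]
  have h_y2u : Commute y2 u := by
    simp only [Commute, SemiconjBy, hy2def, hudef, Algebra.TensorProduct.tmul_mul_tmul,
      one_mul, mul_one]
  have h_y1w : y1 * (u + v) = (u + v - 1) * y1 := by
    rw [mul_add, h_y1u, h_y1v.eq]
    noncomm_ring
  have h_y2w : y2 * (u + v) = (u + v - 1) * y2 := by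
    rw [mul_add, h_y2u.eq, h_y2v]
    noncomm_ring
  -- rewrite omega
  have homg : omg p k x = ∑ i ∈ Finset.Icc 1 (p-1),
      ((((p - 1).factorial / (i.factorial * (p - i).factorial) : ℕ) : k)) •
        (u ^ i * v ^ (p - i)) := by
    rw [omg]
    refine Finset.sum_congr rfl fun i _ => ?_
    congr 1
    rw [hudef, hvdef, Algebra.TensorProduct.tmul_pow, Algebra.TensorProduct.tmul_pow,
      one_pow, one_pow, Algebra.TensorProduct.tmul_mul_tmul, mul_one, one_mul]
  -- left side
  have hLHS : (y1 + y2) * omg p k x - omg p k x * (y1 + y2)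
      = (∑ i ∈ Finset.Icc 1 (p-1),
          ((((p - 1).factorial / (i.factorial * (p - i).factorial) : ℕ) : k)) •
            (((u - 1) ^ i - u ^ i) * v ^ (p - i))) * y1
        + (∑ i ∈ Finset.Icc 1 (p-1),
          ((((p - 1).factorial / (i.factorial * (p - i).factorial) : ℕ) : k)) •
            (u ^ i * ((v - 1) ^ (p - i) - v ^ (p - i)))) * y2 := by
    rw [homg, Finset.mul_sum, Finset.sum_mul, ← Finset.sum_sub_distrib,
      Finset.sum_mul, Finset.sum_mul, ← Finset.sum_add_distrib]
    refine Finset.sum_congr rfl fun i _ => ?_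
    have e_y1 : y1 * (u ^ i * v ^ (p - i)) = ((u - 1) ^ i * v ^ (p - i)) * y1 := by
      rw [← mul_assoc, quasi_pow h_y1u i, mul_assoc, (h_y1v.pow_right (p - i)).eq, ← mul_assoc]
    have e_y2 : y2 * (u ^ i * v ^ (p - i)) = (u ^ i * (v - 1) ^ (p - i)) * y2 := by
      rw [← mul_assoc, (h_y2u.pow_right i).eq, mul_assoc, quasi_pow h_y2v (p - i),
        ← mul_assoc]
    rw [add_mul, mul_add, mul_smul_comm, mul_smul_comm, smul_mul_assoc, smul_mul_assoc,
      smul_mul_assoc, smul_mul_assoc, e_y1, e_y2]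
    rw [← smul_add, ← smul_add, ← smul_sub, ← smul_add]
    congr 1
    noncomm_ring
  -- S2 reindex
  have hS2 : (∑ i ∈ Finset.Icc 1 (p-1),
          ((((p - 1).factorial / (i.factorial * (p - i).factorial) : ℕ) : k)) •
            (u ^ i * ((v - 1) ^ (p - i) - v ^ (p - i))))
      = ∑ i ∈ Finset.Icc 1 (p-1),
          ((((p - 1).factorial / (i.factorial * (p - i).factorial) : ℕ) : k)) •
            (((v - 1) ^ i - v ^ i) * u ^ (p - i)) := by
    refine Finset.sum_nbij' (fun i => p - i) (fun i => p - i) ?_ ?_ ?_ ?_ ?_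
    · intro i hi; simp only [Finset.mem_Icc] at hi ⊢; omega
    · intro i hi; simp only [Finset.mem_Icc] at hi ⊢; omega
    · intro i hi; simp only [Finset.mem_Icc] at hi; show p - (p - i) = i; omega
    · intro i hi; simp only [Finset.mem_Icc] at hi; show p - (p - i) = i; omega
    · intro i hi
      simp only [Finset.mem_Icc] at hi
      rw [show p - (p - i) = i by omega, mul_comm ((p-i).factorial) (i.factorial)]
      congr 1
      have hcom : Commute (u ^ i) ((v - 1) ^ (p - i) - v ^ (p - i)) :=
        ((huv.sub_right (Commute.one_right u)).pow_pow i (p - i)).sub_right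
          (huv.pow_pow i (p - i))
      rw [hcom.eq]
  have hRHS1 : (y1 + y2) * fpol p k (u + v)
      = fpol p k (u + v - 1) * y1 + fpol p k (u + v - 1) * y2 := by
    rw [add_mul, quasi_fpol h_y1w, quasi_fpol h_y2w]
  have hRHS2 : (y * fpol p k x) ⊗ₜ[k] (1 : A) = fpol p k (u - 1) * y1 := by
    have : φ (y * fpol p k x) = φ (fpol p k (x - 1) * y) := congrArg φ (quasi_fpol hyx)
    rw [hφ] at this
    rw [this, map_mul, fpol_map, map_sub, map_one, hφ, hφ]
  have hRHS3 : (1 : A) ⊗ₜ[k] (y * fpol p k x) = fpol p k (v - 1) * y2 := by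
    have : ψ (y * fpol p k x) = ψ (fpol p k (x - 1) * y) := congrArg ψ (quasi_fpol hyx)
    rw [hψ] at this
    rw [this, map_mul, fpol_map, map_sub, map_one, hψ, hψ]
  rw [hLHS, hS2, hRHS1, hRHS2, hRHS3, core hp u v huv, core hp v u huv.symm,
    show v + u - 1 = u + v - 1 by abel]
  noncomm_ring

end Helper

/-- In the algebra `K ⊗_k K`:
`(y⊗1 + 1⊗y)·ω(x) − ω(x)·(y⊗1 + 1⊗y)
  = (y⊗1 + 1⊗y)·f(x⊗1 + 1⊗x) − (y·f(x))⊗1 − 1⊗(y·f(x))`. -/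
theorem y_tensor_commutator_with_omega_x (p : ℕ) (hp : p.Prime) (k : Type) [Field k]
    [IsAlgClosed k] [CharP k p] :
    (YK p k ⊗ₜ[k] (1 : AlgK p k) + (1 : AlgK p k) ⊗ₜ[k] YK p k) * omg p k (XK p k) -
      omg p k (XK p k) * (YK p k ⊗ₜ[k] (1 : AlgK p k) + (1 : AlgK p k) ⊗ₜ[k] YK p k) =
    (YK p k ⊗ₜ[k] (1 : AlgK p k) + (1 : AlgK p k) ⊗ₜ[k] YK p k) *
        fpol p k (XK p k ⊗ₜ[k] (1 : AlgK p k) + (1 : AlgK p k) ⊗ₜ[k] XK p k) -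
      (YK p k * fpol p k (XK p k)) ⊗ₜ[k] (1 : AlgK p k) -
      (1 : AlgK p k) ⊗ₜ[k] (YK p k * fpol p k (XK p k)) := by
  exact main' hp (XK p k) (YK p k) (yx_rel p k)
end
end

section
/- Suppose p > 2. For every β ∈ k and every γ ∈ k with γ^{p²+p−1} = 1, the map x ↦ γx, y ↦ γ^p y, z ↦ γ^{p²} z induces an isomorphism of k-algebras from A(γ^{2p−2}β) onto A(β). Moreover, if p = 2 then A(β) and A(β′) are isomorphic as k-algebras for all β, β′ ∈ k. -/
noncomputable section

/-- The relations of the algebra `A(β)`: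
`x^p, y^p, [x,y], [x,z], [y,z]−x, z^p + x^{p−1}y − βx`. -/
def relAb (p : ℕ) (k : Type) [Field k] (β : k) :
    FreeAlgebra k (Fin 3) → FreeAlgebra k (Fin 3) → Prop := fun a b =>
  b = 0 ∧
    (a = Xf k ^ p ∨
     a = Yf k ^ p ∨
     a = Xf k * Yf k - Yf k * Xf k ∨
     a = Xf k * Zf k - Zf k * Xf k ∨
     a = Yf k * Zf k - Zf k * Yf k - Xf k ∨
     a = Zf k ^ p + Xf k ^ (p - 1) * Yf k - β • Xf k)

/-- The algebra `A(β) = k⟨x,y,z⟩/(x^p, y^p, [x,y], [x,z], [y,z]−x, z^p + x^{p−1}y − βx)`. -/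
abbrev AlgAb (p : ℕ) (k : Type) [Field k] (β : k) := RingQuot (relAb p k β)

/-- The image of `x` in `A(β)`. -/
def XAb (p : ℕ) (k : Type) [Field k] (β : k) : AlgAb p k β :=
  RingQuot.mkAlgHom k (relAb p k β) (Xf k)
/-- The image of `y` in `A(β)`. -/
def YAb (p : ℕ) (k : Type) [Field k] (β : k) : AlgAb p k β :=
  RingQuot.mkAlgHom k (relAb p k β) (Yf k)
/-- The image of `z` in `A(β)`. -/
def ZAb (p : ℕ) (k : Type) [Field k] (β : k) : AlgAb p k β :=
  RingQuot.mkAlgHom k (relAb p k β) (Zf k)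

set_option linter.unusedSectionVars false

section Aux

variable (p : ℕ) (k : Type) [Field k] (β : k)

lemma XAb_pow : XAb p k β ^ p = 0 := by
  have h := RingQuot.mkAlgHom_rel k
    (show relAb p k β (Xf k ^ p) 0 from ⟨rfl, Or.inl rfl⟩)
  simpa [XAb, map_pow] using h

lemma YAb_pow : YAb p k β ^ p = 0 := by
  have h := RingQuot.mkAlgHom_rel k
    (show relAb p k β (Yf k ^ p) 0 from ⟨rfl, Or.inr (Or.inl rfl)⟩)
  simpa [YAb, map_pow] using h

lemma comm_XY : XAb p k β * YAb p k β = YAb p k β * XAb p k β := by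
  have h := RingQuot.mkAlgHom_rel k
    (show relAb p k β (Xf k * Yf k - Yf k * Xf k) 0 from ⟨rfl, Or.inr (Or.inr (Or.inl rfl))⟩)
  have := sub_eq_zero.mp (by simpa [XAb, YAb, map_sub, map_mul] using h)
  exact this

lemma comm_XZ : XAb p k β * ZAb p k β = ZAb p k β * XAb p k β := by
  have h := RingQuot.mkAlgHom_rel k
    (show relAb p k β (Xf k * Zf k - Zf k * Xf k) 0 from
      ⟨rfl, Or.inr (Or.inr (Or.inr (Or.inl rfl)))⟩)
  exact sub_eq_zero.mp (by simpa [XAb, ZAb, map_sub, map_mul] using h)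

lemma YZ_comm : YAb p k β * ZAb p k β - ZAb p k β * YAb p k β = XAb p k β := by
  have h := RingQuot.mkAlgHom_rel k
    (show relAb p k β (Yf k * Zf k - Zf k * Yf k - Xf k) 0 from
      ⟨rfl, Or.inr (Or.inr (Or.inr (Or.inr (Or.inl rfl))))⟩)
  have := sub_eq_zero.mp (by simpa [XAb, YAb, ZAb, map_sub, map_mul] using h)
  exact this

lemma Z_rel : ZAb p k β ^ p + XAb p k β ^ (p - 1) * YAb p k β - β • XAb p k β = 0 := by
  have h := RingQuot.mkAlgHom_rel k
    (show relAb p k β (Zf k ^ p + Xf k ^ (p - 1) * Yf k - β • Xf k) 0 from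
      ⟨rfl, Or.inr (Or.inr (Or.inr (Or.inr (Or.inr rfl))))⟩)
  simpa [XAb, YAb, ZAb, map_sub, map_add, map_mul, map_pow, map_smul] using h

/-- The free-algebra lift sending `x ↦ a•X, y ↦ b•Y, z ↦ c•Z + d•Y`. -/
def Ff (a b c d : k) : FreeAlgebra k (Fin 3) →ₐ[k] AlgAb p k β :=
  FreeAlgebra.lift k
    ![a • XAb p k β, b • YAb p k β, c • ZAb p k β + d • YAb p k β]

lemma Ff_X (a b c d : k) : Ff p k β a b c d (Xf k) = a • XAb p k β := by
  simp [Ff, Xf]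
lemma Ff_Y (a b c d : k) : Ff p k β a b c d (Yf k) = b • YAb p k β := by
  simp [Ff, Yf]
lemma Ff_Z (a b c d : k) : Ff p k β a b c d (Zf k) = c • ZAb p k β + d • YAb p k β := by
  simp [Ff, Zf]

lemma rel_pres (β' a b c d : k)
    (h5 : Ff p k β a b c d (Yf k * Zf k - Zf k * Yf k - Xf k) = 0)
    (h6 : Ff p k β a b c d (Zf k ^ p + Xf k ^ (p - 1) * Yf k - β' • Xf k) = 0) :
    ∀ ⦃x y : FreeAlgebra k (Fin 3)⦄, relAb p k β' x y →
      Ff p k β a b c d x = Ff p k β a b c d y := by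
  rintro x y ⟨rfl, h⟩
  rw [map_zero]
  rcases h with h | h | h | h | h | h <;> subst h
  · rw [map_pow, Ff_X, smul_pow, XAb_pow, smul_zero]
  · rw [map_pow, Ff_Y, smul_pow, YAb_pow, smul_zero]
  · rw [map_sub, map_mul, map_mul, Ff_X, Ff_Y]
    rw [smul_mul_smul_comm, smul_mul_smul_comm, comm_XY, mul_comm b a, sub_self]
  · rw [map_sub, map_mul, map_mul, Ff_X, Ff_Z]
    rw [mul_add, add_mul, smul_mul_smul_comm, smul_mul_smul_comm, smul_mul_smul_comm,
      smul_mul_smul_comm, comm_XZ, comm_XY, mul_comm c a, mul_comm d a]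
    abel
  · exact h5
  · exact h6

end Aux

section Aux2

variable (p : ℕ) (k : Type) [Field k] (β : k)

/-- The induced hom on the quotient. -/
def Fq (β' a b c d : k)
    (h5 : Ff p k β a b c d (Yf k * Zf k - Zf k * Yf k - Xf k) = 0)
    (h6 : Ff p k β a b c d (Zf k ^ p + Xf k ^ (p - 1) * Yf k - β' • Xf k) = 0) :
    AlgAb p k β' →ₐ[k] AlgAb p k β :=
  RingQuot.liftAlgHom k ⟨Ff p k β a b c d, rel_pres p k β β' a b c d h5 h6⟩

lemma Fq_X (β' a b c d : k) (h5) (h6) :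
    Fq p k β β' a b c d h5 h6 (XAb p k β') = a • XAb p k β := by
  rw [Fq, XAb, RingQuot.liftAlgHom_mkAlgHom_apply, Ff_X]

lemma Fq_Y (β' a b c d : k) (h5) (h6) :
    Fq p k β β' a b c d h5 h6 (YAb p k β') = b • YAb p k β := by
  rw [Fq, YAb, RingQuot.liftAlgHom_mkAlgHom_apply, Ff_Y]

lemma Fq_Z (β' a b c d : k) (h5) (h6) :
    Fq p k β β' a b c d h5 h6 (ZAb p k β') = c • ZAb p k β + d • YAb p k β := by
  rw [Fq, ZAb, RingQuot.liftAlgHom_mkAlgHom_apply, Ff_Z]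

lemma eq_id (f : AlgAb p k β →ₐ[k] AlgAb p k β)
    (hx : f (XAb p k β) = XAb p k β) (hy : f (YAb p k β) = YAb p k β)
    (hz : f (ZAb p k β) = ZAb p k β) : f = AlgHom.id k (AlgAb p k β) := by
  apply RingQuot.ringQuot_ext'
  apply FreeAlgebra.hom_ext
  funext i
  fin_cases i
  · simpa [Xf, XAb] using hx
  · simpa [Yf, YAb] using hy
  · simpa [Zf, ZAb] using hz

end Aux2

section Scale

variable (p : ℕ) (k : Type) [Field k] (β : k)

lemma scale_h5 (hp2 : 2 ≤ p) (γ : k) (hγ : γ ^ (p^2+p-1) = 1) :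
    Ff p k β γ (γ^p) (γ^(p^2)) 0 (Yf k * Zf k - Zf k * Yf k - Xf k) = 0 := by
  have e : γ ^ p * γ ^ (p^2) = γ := by
    rw [← pow_add]
    have h0 : 1 ≤ p ^ 2 := Nat.one_le_pow _ _ (by omega)
    have h1 : p + p^2 = (p^2+p-1) + 1 := by omega
    rw [h1, pow_succ, hγ, one_mul]
  rw [map_sub, map_sub, map_mul, map_mul, Ff_X, Ff_Y, Ff_Z, zero_smul, add_zero,
    smul_mul_smul_comm, smul_mul_smul_comm, mul_comm (γ^(p^2)) (γ^p), e]
  have h0 : γ • (YAb p k β * ZAb p k β) - γ • (ZAb p k β * YAb p k β) - γ • XAb p k β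
      = γ • (YAb p k β * ZAb p k β - ZAb p k β * YAb p k β - XAb p k β) := by
    rw [smul_sub, smul_sub]
  rw [h0, sub_eq_zero.mpr (YZ_comm p k β), smul_zero]

lemma scale_h6 (hp2 : 2 ≤ p) (γ : k) (hγ : γ ^ (p^2+p-1) = 1) (β' : k)
    (hβ' : β' = γ^(2*p-2)*β) :
    Ff p k β γ (γ^p) (γ^(p^2)) 0
      (Zf k ^ p + Xf k ^ (p - 1) * Yf k - β' • Xf k) = 0 := by
  obtain ⟨q, rfl⟩ : ∃ q, p = q + 2 := ⟨p - 2, by omega⟩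
  set p := q + 2 with hpdef
  have c1 : (γ^(p^2))^p = γ^(2*p-1) := by
    rw [← pow_mul]
    have hB : p^2*p = (p^2+p-1)*(p-1) + (2*p-1) := by
      have e1 : 2*(q+2)-1 = 2*q+3 := by omega
      have e2 : (q+2)-1 = q+1 := by omega
      have e3 : (q+2)^2+(q+2)-1 = q^2+5*q+5 := by
        have h : (q+2)^2 = q^2+4*q+4 := by ring
        omega
      rw [hpdef, e1, e2, e3]; ring
    rw [hB, pow_add, pow_mul, hγ, one_pow, one_mul]
  have c2 : γ^(p-1)*γ^p = γ^(2*p-1) := by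
    rw [← pow_add]
    have h : (p-1)+p = 2*p-1 := by omega
    rw [h]
  have c3 : β' * γ = γ^(2*p-1) * β := by
    have h : γ^(2*p-2)*γ = γ^(2*p-1) := by
      rw [← pow_succ]
      have h2 : 2*p-2+1 = 2*p-1 := by omega
      rw [h2]
    rw [hβ', mul_right_comm, h]
  rw [map_sub, map_add, map_pow, map_mul, map_pow, map_smul, Ff_X, Ff_Y, Ff_Z,
    zero_smul, add_zero, smul_pow, smul_pow, smul_mul_smul_comm, smul_smul,
    c1, c2, c3, mul_smul, ← smul_add, ← smul_sub, Z_rel, smul_zero]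

end Scale

section Two

variable (k : Type) [Field k] [CharP k 2] (β β' : k)

lemma two_h5 : Ff 2 k β 1 1 1 (β'-β) (Yf k * Zf k - Zf k * Yf k - Xf k) = 0 := by
  have hY2 : YAb 2 k β * YAb 2 k β = 0 := by
    have h := YAb_pow 2 k β; rwa [sq] at h
  rw [map_sub, map_sub, map_mul, map_mul, Ff_X, Ff_Y, Ff_Z, one_smul, one_smul, one_smul,
    mul_add, add_mul, mul_smul_comm, smul_mul_assoc, hY2, smul_zero, add_zero, add_zero,
    YZ_comm, sub_self]

lemma two_h6 : Ff 2 k β 1 1 1 (β'-β) (Zf k ^ 2 + Xf k ^ (2-1) * Yf k - β' • Xf k) = 0 := by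
  set d := β' - β with hd
  set X := XAb 2 k β
  set Y := YAb 2 k β
  set Z := ZAb 2 k β
  have hYZ : Y * Z = X + Z * Y := sub_eq_iff_eq_add.mp (YZ_comm 2 k β)
  have hY2 : Y * Y = 0 := by have h := YAb_pow 2 k β; rwa [sq] at h
  have hZrel : Z * Z = β • X - X * Y := by
    have h := Z_rel 2 k β
    rw [show (2-1 : ℕ) = 1 from rfl, pow_one, sub_eq_zero, pow_two] at h
    exact eq_sub_of_add_eq h
  have h2 : (2:k) = 0 := by exact_mod_cast CharP.cast_eq_zero k 2
  have hpow : X ^ (2-1) = X := pow_one X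
  rw [map_sub, map_add, map_pow, map_mul, map_pow, map_smul, Ff_X, Ff_Y, Ff_Z,
    one_smul, one_smul, one_smul, hpow]
  have expand : (Z + d • Y)^2 = Z*Z + (2*d) • (Z*Y) + d • X := by
    rw [sq, mul_add, add_mul, add_mul, mul_smul_comm, smul_mul_assoc, smul_mul_assoc,
      mul_smul_comm, smul_smul, hY2, smul_zero, add_zero, hYZ]
    rw [smul_add]
    module
  rw [expand, hZrel]
  rw [h2, zero_mul, zero_smul, add_zero]
  rw [hd]
  module

end Two



/-- Suppose `p > 2`. For every `β ∈ k` and every `γ ∈ k` with `γ^{p²+p−1} = 1`, the map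
`x ↦ γx, y ↦ γ^p y, z ↦ γ^{p²} z` induces a `k`-algebra isomorphism from `A(γ^{2p−2}β)`
onto `A(β)`. Moreover, if `p = 2` then `A(β) ≅ A(β′)` as `k`-algebras for all `β, β′`. -/
theorem A_beta_iso (p : ℕ) (hp : p.Prime) (k : Type) [Field k] [IsAlgClosed k] [CharP k p] :
    (2 < p → ∀ β γ : k, γ ^ (p ^ 2 + p - 1) = 1 →
      ∃ e : AlgAb p k (γ ^ (2 * p - 2) * β) ≃ₐ[k] AlgAb p k β,
        e (XAb p k (γ ^ (2 * p - 2) * β)) = γ • XAb p k β ∧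
        e (YAb p k (γ ^ (2 * p - 2) * β)) = γ ^ p • YAb p k β ∧
        e (ZAb p k (γ ^ (2 * p - 2) * β)) = γ ^ (p ^ 2) • ZAb p k β) ∧
    (p = 2 → ∀ β β' : k, Nonempty (AlgAb p k β ≃ₐ[k] AlgAb p k β')) := by
  constructor
  · intro hp2 β γ hγ
    have hp2' : 2 ≤ p := le_of_lt hp2
    have hγ0 : γ ≠ 0 := by
      intro h
      have hne : p ^ 2 + p - 1 ≠ 0 := by
        have : 1 ≤ p ^ 2 := Nat.one_le_pow _ _ (by omega)
        omega
      rw [h, zero_pow hne] at hγ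
      exact zero_ne_one hγ
    have hδ : (γ⁻¹) ^ (p^2+p-1) = 1 := by rw [inv_pow, hγ, inv_one]
    have hβ : β = (γ⁻¹)^(2*p-2) * (γ^(2*p-2)*β) := by
      rw [← mul_assoc, ← mul_pow, inv_mul_cancel₀ hγ0, one_pow, one_mul]
    have h5 := scale_h5 p k β hp2' γ hγ
    have h6 := scale_h6 p k β hp2' γ hγ (γ^(2*p-2)*β) rfl
    have h5' := scale_h5 p k (γ^(2*p-2)*β) hp2' γ⁻¹ hδ
    have h6' := scale_h6 p k (γ^(2*p-2)*β) hp2' γ⁻¹ hδ β hβ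
    set fwd := Fq p k β (γ^(2*p-2)*β) γ (γ^p) (γ^(p^2)) 0 h5 h6 with hfwd
    set bwd := Fq p k (γ^(2*p-2)*β) β γ⁻¹ (γ⁻¹^p) (γ⁻¹^(p^2)) 0 h5' h6' with hbwd
    have h1 : fwd.comp bwd = AlgHom.id k (AlgAb p k β) := by
      apply eq_id
      · rw [AlgHom.comp_apply, hbwd, Fq_X, map_smul, hfwd, Fq_X, smul_smul,
          inv_mul_cancel₀ hγ0, one_smul]
      · rw [AlgHom.comp_apply, hbwd, Fq_Y, map_smul, hfwd, Fq_Y, smul_smul,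
          ← mul_pow, inv_mul_cancel₀ hγ0, one_pow, one_smul]
      · rw [AlgHom.comp_apply, hbwd, Fq_Z, zero_smul, add_zero, map_smul, hfwd, Fq_Z,
          zero_smul, add_zero, smul_smul, ← mul_pow, inv_mul_cancel₀ hγ0, one_pow, one_smul]
    have h2 : bwd.comp fwd = AlgHom.id k (AlgAb p k (γ^(2*p-2)*β)) := by
      apply eq_id
      · rw [AlgHom.comp_apply, hfwd, Fq_X, map_smul, hbwd, Fq_X, smul_smul,
          mul_inv_cancel₀ hγ0, one_smul]
      · rw [AlgHom.comp_apply, hfwd, Fq_Y, map_smul, hbwd, Fq_Y, smul_smul,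
          ← mul_pow, mul_inv_cancel₀ hγ0, one_pow, one_smul]
      · rw [AlgHom.comp_apply, hfwd, Fq_Z, zero_smul, add_zero, map_smul, hbwd, Fq_Z,
          zero_smul, add_zero, smul_smul, ← mul_pow, mul_inv_cancel₀ hγ0, one_pow, one_smul]
    refine ⟨AlgEquiv.ofAlgHom fwd bwd h1 h2, ?_, ?_, ?_⟩
    · show fwd _ = _
      rw [hfwd, Fq_X]
    · show fwd _ = _
      rw [hfwd, Fq_Y]
    · show fwd _ = _
      rw [hfwd, Fq_Z, zero_smul, add_zero]
  · rintro rfl β β'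
    have h5 := two_h5 k β β'
    have h6 := two_h6 k β β'
    have h5' := two_h5 k β' β
    have h6' := two_h6 k β' β
    set fwd := Fq 2 k β β' 1 1 1 (β'-β) h5 h6 with hfwd
    set bwd := Fq 2 k β' β 1 1 1 (β-β') h5' h6' with hbwd
    have h1 : fwd.comp bwd = AlgHom.id k (AlgAb 2 k β) := by
      apply eq_id
      · rw [AlgHom.comp_apply, hbwd, Fq_X, one_smul, hfwd, Fq_X, one_smul]
      · rw [AlgHom.comp_apply, hbwd, Fq_Y, one_smul, hfwd, Fq_Y, one_smul]
      · rw [AlgHom.comp_apply, hbwd, Fq_Z, one_smul, map_add, map_smul, hfwd, Fq_Z,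
          Fq_Y, one_smul, one_smul, add_assoc, ← add_smul,
          show (β'-β)+(β-β') = 0 from by ring, zero_smul, add_zero]
    have h2 : bwd.comp fwd = AlgHom.id k (AlgAb 2 k β') := by
      apply eq_id
      · rw [AlgHom.comp_apply, hfwd, Fq_X, one_smul, hbwd, Fq_X, one_smul]
      · rw [AlgHom.comp_apply, hfwd, Fq_Y, one_smul, hbwd, Fq_Y, one_smul]
      · rw [AlgHom.comp_apply, hfwd, Fq_Z, one_smul, map_add, map_smul, hbwd, Fq_Z,
          Fq_Y, one_smul, one_smul, add_assoc, ← add_smul,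
          show (β-β')+(β'-β) = 0 from by ring, zero_smul, add_zero]
    exact ⟨AlgEquiv.ofAlgHom bwd fwd h2 h1⟩
end
end

section
/- Suppose p > 2. In the algebra A(β), for any γ ∈ k with γ ≠ 0 and any a, b ∈ k, setting M = Σ_{i=1}^{p−1} c_i·(γ^p y)^i·(a x)^{p−i}, where c_i is the image in k of the integer (p−1)!/(i!(p−i)!), one has (γ^{p²} z + M + a^p y + b x)^p = γ^{p³} z^p. -/
noncomputable section

/-! ### Auxiliary combinatorics: the numbers `d j n = C(j, 2n) * (2n-1)!!` -/

/-- odd double factorial `(2n-1)!!` -/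
private def oddDF : ℕ → ℕ
  | 0 => 1
  | (n+1) => (2*n+1) * oddDF n

/-- `d j n = C(j,2n) * (2n-1)!!`, the coefficients in the Heisenberg p-th power formula. -/
private def dnum (j n : ℕ) : ℕ := j.choose (2*n) * oddDF n

private lemma dnum_zero (j : ℕ) : dnum j 0 = 1 := by simp [dnum, oddDF]

private lemma dnum_top (j n : ℕ) (h : j < 2*n) : dnum j n = 0 := by
  simp [dnum, Nat.choose_eq_zero_of_lt h]

private lemma dnum_rec (j n : ℕ) :
    dnum (j+1) (n+1) = (j - 2*n) * dnum j n + dnum j (n+1) := by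
  have h2 : 2*(n+1) = (2*n+1)+1 := by ring
  have hch : (j+1).choose ((2*n+1)+1) = j.choose (2*n+1) + j.choose ((2*n+1)+1) :=
    Nat.choose_succ_succ j (2*n+1)
  have hsr : j.choose (2*n+1) * (2*n+1) = j.choose (2*n) * (j - 2*n) :=
    Nat.choose_succ_right_eq j (2*n)
  have hodf : oddDF (n+1) = (2*n+1) * oddDF n := rfl
  calc dnum (j+1) (n+1) = (j+1).choose ((2*n+1)+1) * ((2*n+1) * oddDF n) := by
        rw [dnum, h2, hodf]
    _ = (j.choose (2*n+1) * (2*n+1)) * oddDF n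
        + j.choose ((2*n+1)+1) * ((2*n+1) * oddDF n) := by rw [hch]; ring
    _ = (j - 2*n) * (j.choose (2*n) * oddDF n)
        + j.choose ((2*n+1)+1) * ((2*n+1) * oddDF n) := by rw [hsr]; ring
    _ = (j - 2*n) * dnum j n + dnum j (n+1) := by
        rw [dnum, dnum, h2, hodf]

/-! ### The key Frobenius lemma -/

/-- If `s 0 = 1` and `s (j+1) = (u+w) * s j - s j * u`, then `(u+w)^p = u^p + s p`,
in characteristic `p`. -/
private lemma key_pow {p : ℕ} [Fact p.Prime] {k : Type} [Field k] [CharP k p]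
    {A : Type} [Ring A] [Algebra k A] [Nontrivial A]
    (u w : A) (s : ℕ → A) (h0 : s 0 = 1)
    (hs : ∀ j, s (j+1) = (u + w) * s j - s j * u) :
    (u + w) ^ p = u ^ p + s p := by
  haveI : Nontrivial (Module.End k A) :=
    ⟨1, 0, fun h => one_ne_zero (α := A) (by simpa using LinearMap.congr_fun h 1)⟩
  haveI : CharP (Module.End k A) p :=
    charP_of_injective_algebraMap (algebraMap k (Module.End k A)).injective p
  set L := LinearMap.mulLeft k (u + w) with hL
  set R := LinearMap.mulRight k u with hR
  have hc : Commute L R := LinearMap.commute_mulLeft_right (u + w) u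
  have hiter : ∀ j, ((L - R)^j) (1:A) = s j := by
    intro j
    induction j with
    | zero => simpa using h0.symm
    | succ n ih =>
      rw [pow_succ']
      have hcomp : ((L - R) * (L - R) ^ n) (1:A) = (L - R) (((L - R)^n) (1:A)) := rfl
      rw [hcomp, ih]
      simp only [LinearMap.sub_apply, hL, hR, LinearMap.mulLeft_apply,
        LinearMap.mulRight_apply]
      exact (hs n).symm
  have hfrob : (L - R)^p = L^p - R^p := sub_pow_char_of_commute p hc
  have happ := congrArg (fun f : Module.End k A => f (1:A)) hfrob
  rw [hiter p, hL, hR, LinearMap.pow_mulLeft, LinearMap.pow_mulRight] at happ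
  simp only [LinearMap.sub_apply, LinearMap.mulLeft_apply, LinearMap.mulRight_apply,
    mul_one, one_mul] at happ
  rw [happ]; abel

section Apps

variable {p : ℕ} [Fact p.Prime] {k : Type} [Field k] [CharP k p]
  {A : Type} [Ring A] [Algebra k A] {X Y Z : A}

/-- commutator of `Z` with monomials in `X, Y`. -/
private lemma comZ (hXZ : X * Z = Z * X) (hYZ : Y * Z = Z * Y + X) (hXY : X * Y = Y * X) :
    ∀ α m : ℕ, Z * (X^α * Y^m) = (X^α * Y^m) * Z - (m:k) • (X^(α+1) * Y^(m-1)) := by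
  have cXY : Commute X Y := hXY
  have cXZ : Commute X Z := hXZ
  have hZY1 : Z * Y = Y * Z - X := by rw [hYZ]; abel
  have hZYm : ∀ m : ℕ, Z * Y^m = Y^m * Z - (m:k) • (X * Y^(m-1)) := by
    intro m
    induction m with
    | zero => simp
    | succ n ih =>
      rcases Nat.eq_zero_or_pos n with hn | hn
      · subst hn; simpa using hZY1
      · calc Z * Y^(n+1) = (Z * Y^n) * Y := by rw [pow_succ, ← mul_assoc]
          _ = (Y^n * Z - (n:k) • (X * Y^(n-1))) * Y := by rw [ih]
          _ = Y^n * (Z * Y) - (n:k) • ((X * Y^(n-1)) * Y) := by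
              rw [sub_mul, smul_mul_assoc, mul_assoc]
          _ = Y^n * (Y * Z - X) - (n:k) • (X * Y^n) := by
              rw [hZY1, mul_assoc, ← pow_succ]
              congr 4
              omega
          _ = Y^(n+1) * Z - X * Y^n - (n:k) • (X * Y^n) := by
              rw [mul_sub, ← mul_assoc, ← pow_succ, (cXY.pow_right n).symm.eq]
          _ = Y^(n+1) * Z - ((n+1:ℕ):k) • (X * Y^((n+1)-1)) := by
              push_cast [Nat.add_sub_cancel]
              rw [add_smul, one_smul]
              abel
  intro α m
  have hZX : Z * X^α = X^α * Z := ((cXZ.pow_left α)).symm.eq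
  calc Z * (X^α * Y^m) = (Z * X^α) * Y^m := by rw [mul_assoc]
    _ = X^α * (Z * Y^m) := by rw [hZX, mul_assoc]
    _ = X^α * (Y^m * Z - (m:k) • (X * Y^(m-1))) := by rw [hZYm m]
    _ = (X^α * Y^m) * Z - (m:k) • (X^(α+1) * Y^(m-1)) := by
        rw [mul_sub, ← mul_assoc, mul_smul_comm, ← mul_assoc, ← pow_succ]

/-- Perturbation by terms divisible by `X` does not change the `p`-th power. -/
private lemma app1 [Nontrivial A]
    (hXZ : X * Z = Z * X) (hYZ : Y * Z = Z * Y + X) (hXY : X * Y = Y * X)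
    (hXp : X^p = 0) (c e : k) (w : A)
    (hw : w ∈ Submodule.span k {t : A | ∃ α m : ℕ, 1 ≤ α ∧ t = X^α * Y^m}) :
    (c • Z + e • Y + w)^p = (c • Z + e • Y)^p := by
  have cXY : Commute X Y := hXY
  set u := c • Z + e • Y with hu
  set s : ℕ → A := fun n => Nat.rec (1:A) (fun _ r => (u + w) * r - r * u) n with hsdef
  have h0 : s 0 = 1 := rfl
  have hs : ∀ j, s (j+1) = (u + w) * s j - s j * u := fun j => rfl
  have hkey := key_pow (p := p) (k := k) u w s h0 hs
  set P : ℕ → Submodule k A :=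
    fun j => Submodule.span k {t : A | ∃ α m : ℕ, j ≤ α ∧ t = X^α * Y^m} with hP
  set T : A →ₗ[k] A := LinearMap.mulLeft k (u + w) - LinearMap.mulRight k u with hT
  have hwmul : ∀ (αt mt j : ℕ), j ≤ αt → w * (X^αt * Y^mt) ∈ P (j+1) := by
    intro αt mt j hj
    have hwP : w ∈ P 1 := hw
    have hmap : Submodule.map (LinearMap.mulRight k (X^αt * Y^mt)) (P 1) ≤ P (j+1) := by
      rw [hP, Submodule.map_span, Submodule.span_le]
      rintro _ ⟨t, ⟨α, m, hα, rfl⟩, rfl⟩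
      simp only [LinearMap.mulRight_apply]
      have hre : (X^α * Y^m) * (X^αt * Y^mt) = X^(α+αt) * Y^(m+mt) := by
        have h1 : Y^m * X^αt = X^αt * Y^m := ((cXY.pow_right m).pow_left αt).symm.eq
        calc (X^α * Y^m) * (X^αt * Y^mt) = X^α * ((Y^m * X^αt) * Y^mt) := by
              simp only [mul_assoc]
          _ = X^α * (X^αt * (Y^m * Y^mt)) := by rw [h1, mul_assoc]
          _ = X^(α+αt) * Y^(m+mt) := by rw [← mul_assoc, ← pow_add, ← pow_add]
      rw [hre]
      exact Submodule.subset_span ⟨α+αt, m+mt, by omega, rfl⟩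
    exact hmap ⟨w, hwP, rfl⟩
  have hstep : ∀ j : ℕ, Submodule.map T (P j) ≤ P (j+1) := by
    intro j
    conv_lhs => rw [hP]
    rw [Submodule.map_span, Submodule.span_le]
    rintro _ ⟨t, ⟨α, m, hα, rfl⟩, rfl⟩
    have hTt : T (X^α * Y^m) = (u + w) * (X^α * Y^m) - (X^α * Y^m) * u := by
      simp [hT]
    have hYcomm : Y * (X^α * Y^m) = (X^α * Y^m) * Y := by
      have h1 : Y * X^α = X^α * Y := (cXY.pow_left α).symm.eq
      calc Y * (X^α * Y^m) = (Y * X^α) * Y^m := by rw [mul_assoc]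
        _ = X^α * (Y * Y^m) := by rw [h1, mul_assoc]
        _ = X^α * (Y^m * Y) := by rw [← pow_succ', pow_succ]
        _ = (X^α * Y^m) * Y := by rw [mul_assoc]
    have hexp : (u + w) * (X^α * Y^m) - (X^α * Y^m) * u
        = c • (Z * (X^α * Y^m) - (X^α * Y^m) * Z) + w * (X^α * Y^m) := by
      rw [hu]
      simp only [add_mul, mul_add, smul_mul_assoc, mul_smul_comm, hYcomm, smul_sub]
      abel
    have hbr : c • (Z * (X^α * Y^m) - (X^α * Y^m) * Z) ∈ P (j+1) := by
      rw [comZ (k := k) hXZ hYZ hXY α m]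
      have hsim : (X^α * Y^m) * Z - (m:k) • (X^(α+1) * Y^(m-1)) - (X^α * Y^m) * Z
          = -((m:k) • (X^(α+1) * Y^(m-1))) := by abel
      rw [hsim, smul_neg]
      refine Submodule.neg_mem _ (Submodule.smul_mem _ _ (Submodule.smul_mem _ _ ?_))
      exact Submodule.subset_span ⟨α+1, m-1, by omega, rfl⟩
    rw [SetLike.mem_coe, hTt, hexp]
    exact Submodule.add_mem _ hbr (hwmul α m j hα)
  have hmem : ∀ j : ℕ, 1 ≤ j → s j ∈ P j := by
    intro j hj
    induction j with
    | zero => omega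
    | succ n ih =>
      rcases Nat.eq_zero_or_pos n with hn | hn
      · subst hn
        have hs1 : s (0+1) = w := by
          rw [hs 0, h0]
          simp
        rw [hs1]; exact hw
      · have hTs : T (s n) = s (n+1) := by
          simp [hT, hs n]
        rw [← hTs]
        exact hstep n ⟨s n, ih hn, rfl⟩
  have hsp : s p = 0 := by
    have hple : 1 ≤ p := (Fact.out : p.Prime).one_lt.le
    have hmem' := hmem p hple
    have hbot : P p ≤ ⊥ := by
      conv_lhs => rw [hP]
      rw [Submodule.span_le]
      rintro _ ⟨α, m, hα, rfl⟩
      have hXa : X^α = 0 := by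
        have hsplit : X^α = X^p * X^(α-p) := by rw [← pow_add]; congr 1; omega
        rw [hsplit, hXp, zero_mul]
      simp [hXa]
    simpa using hbot hmem'
  rw [hkey, hsp, add_zero]

/-- The Heisenberg `p`-th power identity: `(c•Z + e•Y)^p = (c•Z)^p`. -/
private lemma app2 [Nontrivial A]
    (hXZ : X * Z = Z * X) (hYZ : Y * Z = Z * Y + X) (hXY : X * Y = Y * X)
    (hYp : Y^p = 0) (hodd : p ≠ 2) (c e : k) :
    (c • Z + e • Y)^p = (c • Z)^p := by
  have cXY : Commute X Y := hXY
  have cXZ : Commute X Z := hXZ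
  set u : A := c • Z with hu
  set w : A := e • Y with hw
  set ξ : A := (-(c*e)) • X with hξ
  set s : ℕ → A := fun n => Nat.rec (1:A) (fun _ r => (u + w) * r - r * u) n with hsdef
  have h0 : s 0 = 1 := rfl
  have hs : ∀ j, s (j+1) = (u + w) * s j - s j * u := fun j => rfl
  have hkey := key_pow (p := p) (k := k) u w s h0 hs
  have hmon : ∀ n m : ℕ, ξ^n * w^m = ((-(c*e))^n * e^m) • (X^n * Y^m) := by
    intro n m
    rw [hξ, hw, smul_pow, smul_pow, smul_mul_smul_comm]
  have hbr : ∀ n m : ℕ, u * (ξ^n * w^m) - (ξ^n * w^m) * u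
      = (m:k) • (ξ^(n+1) * w^(m-1)) := by
    intro n m
    cases m with
    | zero =>
      have hcZX : Commute u (ξ^n * w^0) := by
        rw [pow_zero, mul_one, hu, hξ]
        exact ((cXZ.symm.smul_left c).smul_right (-(c*e))).pow_right n
      rw [pow_zero, mul_one] at hcZX ⊢
      rw [hcZX.eq]
      simp
    | succ m' =>
      rw [hmon n (m'+1), hmon (n+1) ((m'+1) - 1)]
      simp only [Nat.add_sub_cancel]
      rw [hu]
      have h1 : (c • Z) * (((-(c*e))^n * e^(m'+1)) • (X^n * Y^(m'+1)))
          - (((-(c*e))^n * e^(m'+1)) • (X^n * Y^(m'+1))) * (c • Z)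
          = (c * ((-(c*e))^n * e^(m'+1))) •
            (Z * (X^n * Y^(m'+1)) - (X^n * Y^(m'+1)) * Z) := by
        rw [smul_mul_smul_comm, smul_mul_smul_comm, mul_comm ((-(c*e))^n * e^(m'+1)) c,
          smul_sub]
      rw [h1, comZ (k := k) hXZ hYZ hXY n (m'+1)]
      simp only [Nat.add_sub_cancel]
      have h2 : (X^n * Y^(m'+1)) * Z - ((m'+1 : ℕ):k) • (X^(n+1) * Y^m')
          - (X^n * Y^(m'+1)) * Z = -(((m'+1 : ℕ):k) • (X^(n+1) * Y^m')) := by abel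
      rw [h2, smul_neg, smul_smul, smul_smul]
      rw [← neg_smul]
      congr 1
      push_cast
      ring
  have hmulw : ∀ n m : ℕ, w * (ξ^n * w^m) = ξ^n * w^(m+1) := by
    intro n m
    have hcomm : Commute w (ξ^n) := by
      rw [hw, hξ]
      exact ((cXY.symm.smul_left e).smul_right (-(c*e))).pow_right n
    rw [← mul_assoc, hcomm.eq, mul_assoc, ← pow_succ']
  have hform : ∀ j, s j = ∑ n ∈ Finset.range (j+1),
      ((dnum j n : k)) • (ξ^n * w^(j - 2*n)) := by
    intro j
    induction j with
    | zero => simp [h0, dnum_zero]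
    | succ j ih =>
      have expand : s (j+1)
          = (∑ n ∈ Finset.range (j+1), (dnum j n : k) •
              (((j - 2*n : ℕ):k) • (ξ^(n+1) * w^(j - 2*n - 1))))
          + (∑ n ∈ Finset.range (j+1), (dnum j n : k) • (ξ^n * w^((j - 2*n) + 1))) := by
        rw [hs j, ih]
        have hsplit : ∀ S : A, (u + w) * S - S * u = (u * S - S * u) + w * S := by
          intro S; rw [add_mul]; abel
        rw [hsplit]
        congr 1
        · rw [Finset.mul_sum, Finset.sum_mul, ← Finset.sum_sub_distrib]
          refine Finset.sum_congr rfl fun n _ => ?_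
          rw [mul_smul_comm ((dnum j n : k)) u (ξ^n * w^(j - 2*n)),
            smul_mul_assoc ((dnum j n : k)) (ξ^n * w^(j - 2*n)) u,
            ← smul_sub, hbr n (j - 2*n)]
        · rw [Finset.mul_sum]
          refine Finset.sum_congr rfl fun n _ => ?_
          rw [mul_smul_comm ((dnum j n : k)) w (ξ^n * w^(j - 2*n)), hmulw n (j - 2*n)]
      rw [expand,
        Finset.sum_range_succ' (fun n => (dnum (j+1) n : k) • (ξ^n * w^(j+1 - 2*n))) (j+1)]
      have hre1 : ∀ n, n ∈ Finset.range (j+1) →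
          (dnum (j+1) (n+1) : k) • (ξ^(n+1) * w^(j+1 - 2*(n+1)))
          = (dnum j n : k) • (((j - 2*n : ℕ):k) • (ξ^(n+1) * w^(j - 2*n - 1)))
            + (dnum j (n+1) : k) • (ξ^(n+1) * w^(j+1 - 2*(n+1))) := by
        intro n _
        rw [dnum_rec]
        push_cast
        rw [add_smul, show j+1 - 2*(n+1) = j - 2*n - 1 from by omega, mul_smul]
        rw [smul_comm ((j - 2*n : ℕ):k) ((dnum j n : ℕ):k)]
      rw [Finset.sum_congr rfl hre1, Finset.sum_add_distrib, add_assoc]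
      congr 1
      -- second parts
      rw [Finset.sum_range_succ' (fun n => (dnum j n : k) • (ξ^n * w^((j - 2*n) + 1))) j]
      have hz : (dnum (j+1) 0 : k) • (ξ^0 * w^(j+1 - 2*0))
          = (dnum j 0 : k) • (ξ^0 * w^((j - 2*0) + 1)) := by
        have hee : j+1 - 2*0 = (j - 2*0) + 1 := by omega
        rw [dnum_zero, dnum_zero, hee]
      rw [← hz]
      congr 1
      rw [Finset.sum_range_succ]
      have hlast : (dnum j (j+1) : k) • (ξ^(j+1) * w^(j+1 - 2*(j+1))) = 0 := by
        rw [dnum_top j (j+1) (by omega)]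
        simp
      rw [hlast, add_zero]
      refine Finset.sum_congr rfl fun n hn => ?_
      rw [Finset.mem_range] at hn
      by_cases h2n : 2*(n+1) ≤ j
      · have hee2 : (j - 2*(n+1)) + 1 = j + 1 - 2*(n+1) := by omega
        rw [hee2]
      · rw [dnum_top j (n+1) (by omega)]
        simp
  have hsp : s p = 0 := by
    rw [hform p]
    refine Finset.sum_eq_zero fun n hn => ?_
    rcases Nat.eq_zero_or_pos n with h0' | h1'
    · subst h0'
      rw [dnum_zero]
      have hwp : w^(p - 2*0) = 0 := by
        have : p - 2*0 = p := by omega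
        rw [this, hw, smul_pow, hYp, smul_zero]
      rw [hwp]
      simp
    · rcases lt_trichotomy (2*n) p with hlt | heq | hgt
      · have hdvd : p ∣ dnum p n :=
          Dvd.dvd.mul_right ((Fact.out : p.Prime).dvd_choose_self (by omega) hlt) _
        rw [(CharP.cast_eq_zero_iff k p _).mpr hdvd, zero_smul]
      · exfalso
        obtain ⟨m, hm⟩ := (Fact.out : p.Prime).odd_of_ne_two hodd
        omega
      · rw [dnum_top p n hgt]
        simp
  rw [hkey, hsp, add_zero]

end Apps

/-- Suppose `p > 2`. In `A(β)`, for `γ ≠ 0` and `a, b ∈ k`, with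
`M = Σ_{i=1}^{p−1} c_i (γ^p y)^i (ax)^{p−i}` where `c_i` is the image in `k` of the
integer `(p−1)!/(i!(p−i)!)`, one has `(γ^{p²}z + M + a^p y + bx)^p = γ^{p³} z^p`. -/
theorem phi_z_pow_p (p : ℕ) (hp : p.Prime) (hp2 : 2 < p) (k : Type) [Field k] [IsAlgClosed k]
    [CharP k p] (β : k) (γ : k) (hγ : γ ≠ 0) (a b : k) :
    (γ ^ (p ^ 2) • ZAb p k β +
        (∑ i ∈ Finset.Icc 1 (p - 1),
          (((p - 1).factorial / (i.factorial * (p - i).factorial) : ℕ) : k) •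
            ((γ ^ p • YAb p k β) ^ i * (a • XAb p k β) ^ (p - i))) +
        a ^ p • YAb p k β + b • XAb p k β) ^ p =
      γ ^ (p ^ 3) • ZAb p k β ^ p := by
  haveI : Fact p.Prime := ⟨hp⟩
  set X := XAb p k β with hXdef
  set Y := YAb p k β with hYdef
  set Z := ZAb p k β with hZdef
  have hrel : ∀ t : FreeAlgebra k (Fin 3), relAb p k β t 0 →
      RingQuot.mkAlgHom k (relAb p k β) t = 0 := fun t ht => by
    rw [RingQuot.mkAlgHom_rel k ht, map_zero]
  have hX : X^p = 0 := by
    have h := hrel (Xf k ^ p) ⟨rfl, Or.inl rfl⟩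
    rwa [map_pow] at h
  have hY : Y^p = 0 := by
    have h := hrel (Yf k ^ p) ⟨rfl, Or.inr (Or.inl rfl)⟩
    rwa [map_pow] at h
  have hXY : X * Y = Y * X := by
    have h := hrel _ ⟨rfl, Or.inr (Or.inr (Or.inl rfl))⟩
    rw [map_sub, map_mul, map_mul] at h
    exact sub_eq_zero.mp h
  have hXZ : X * Z = Z * X := by
    have h := hrel _ ⟨rfl, Or.inr (Or.inr (Or.inr (Or.inl rfl)))⟩
    rw [map_sub, map_mul, map_mul] at h
    exact sub_eq_zero.mp h
  have hYZ : Y * Z = Z * Y + X := by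
    have h := hrel _ ⟨rfl, Or.inr (Or.inr (Or.inr (Or.inr (Or.inl rfl))))⟩
    rw [map_sub, map_sub, map_mul, map_mul, sub_sub] at h
    exact sub_eq_zero.mp h
  by_cases htriv : (0 : AlgAb p k β) = 1
  · haveI := subsingleton_of_zero_eq_one htriv
    exact Subsingleton.elim _ _
  haveI : Nontrivial (AlgAb p k β) := ⟨0, 1, htriv⟩
  set M : AlgAb p k β := ∑ i ∈ Finset.Icc 1 (p - 1),
      (((p - 1).factorial / (i.factorial * (p - i).factorial) : ℕ) : k) •
        ((γ ^ p • Y) ^ i * (a • X) ^ (p - i)) with hM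
  have hbase : γ ^ (p ^ 2) • Z + M + a ^ p • Y + b • X
      = (γ ^ (p ^ 2)) • Z + (a ^ p) • Y + (M + b • X) := by abel
  rw [hbase]
  have hw : M + b • X ∈
      Submodule.span k {t : AlgAb p k β | ∃ α m : ℕ, 1 ≤ α ∧ t = X^α * Y^m} := by
    refine Submodule.add_mem _ ?_ ?_
    · rw [hM]
      refine Submodule.sum_mem _ fun i hi => Submodule.smul_mem _ _ ?_
      rw [Finset.mem_Icc] at hi
      have hre : (γ^p • Y)^i * (a • X)^(p-i) = ((γ^p)^i * a^(p-i)) • (X^(p-i) * Y^i) := by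
        rw [smul_pow, smul_pow, smul_mul_smul_comm]
        congr 1
        exact (((show Commute X Y from hXY).pow_right i).pow_left (p-i)).symm.eq
      rw [hre]
      exact Submodule.smul_mem _ _ (Submodule.subset_span ⟨p-i, i, by omega, rfl⟩)
    · refine Submodule.smul_mem _ _ (Submodule.subset_span ⟨1, 0, le_refl 1, by simp⟩)
  rw [app1 hXZ hYZ hXY hX (γ ^ (p^2)) (a^p) _ hw]
  rw [app2 hXZ hYZ hXY hY (by omega) (γ ^ (p^2)) (a^p)]
  have hexp : p^2 * p = p^3 := by ring
  rw [smul_pow, ← pow_mul, hexp]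
end
end

section
/- Let k be a field of characteristic 2 and let L be a Lie algebra over k with basis x, y, z satisfying ⁅x,y⁆ = z, ⁅x,z⁆ = x, and ⁅y,z⁆ = y. Then there is no element w ∈ L such that ⁅v, w⁆ = ⁅⁅v, x⁆, x⁆ for all v ∈ L. (Consequently, L admits no restricted Lie algebra structure, since a p-map would require an element x^{[2]} with ad(x^{[2]}) = (ad x)^2.) -/
/-- Let `k` be a field of characteristic `2` and `L` a Lie algebra over `k` with basis
`x, y, z` satisfying `⁅x,y⁆ = z`, `⁅x,z⁆ = x`, `⁅y,z⁆ = y`. Then there is no `w ∈ L` with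
`⁅v, w⁆ = ⁅⁅v, x⁆, x⁆` for all `v ∈ L`; consequently `L` admits no restricted Lie algebra
structure, since a `2`-map would require an element `x^{[2]}` with `ad(x^{[2]}) = (ad x)²`. -/
theorem no_square_of_x_in_char_two_simple_lie_algebra
    (k : Type) [Field k] [CharP k 2] (L : Type) [LieRing L] [LieAlgebra k L]
    (b : Module.Basis (Fin 3) k L)
    (hxy : ⁅b 0, b 1⁆ = b 2) (hxz : ⁅b 0, b 2⁆ = b 0) (hyz : ⁅b 1, b 2⁆ = b 1) :
    ¬∃ w : L, ∀ v : L, ⁅v, w⁆ = ⁅⁅v, b 0⁆, b 0⁆ := by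
  rintro ⟨w, h⟩
  have hyx : ⁅b 1, b 0⁆ = -b 2 := by rw [← lie_skew, hxy]
  have hzx : ⁅b 2, b 0⁆ = -b 0 := by rw [← lie_skew, hxz]
  have hw : (b.repr w 0) • b 0 + (b.repr w 1) • b 1 + (b.repr w 2) • b 2 = w := by
    have := b.sum_repr w
    rwa [Fin.sum_univ_three] at this
  have h0 := h (b 0)
  have h1 := h (b 1)
  rw [← hw] at h0 h1
  simp only [lie_add, lie_smul, lie_self, hxy, hxz, hyz, hyx, hzx, smul_zero, zero_add,
    lie_zero, zero_lie, lie_neg, smul_neg, neg_lie] at h0 h1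
  -- h0 : r1 • b 2 + r2 • b 0 = 0
  have e0 := congrArg (fun u => b.repr u 0) h0
  have e2 := congrArg (fun u => b.repr u 2) h0
  simp [Module.Basis.repr_self] at e0 e2
  -- h1 : -(r0 • b 2) + 0 + 0 • b 1 = - -b 0 ; evaluate at coordinate 0
  have e := congrArg (fun u => b.repr u 0) h1
  simp [Module.Basis.repr_self, Finsupp.single_apply] at e
end
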